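/- arXiv:1807.08700 — 8 statements merged into one kernel-verified Lean document; each statement's English description precedes it below -/
import Mathlib

section
/- For every n ≥ 0, the polynomial J_{2n+1}(x) has degree n and is symmetric: writing J_{2n+1}(x) = Σ_{i=0}^{n} c_i x^i, one has c_i = c_{n−i} for all 0 ≤ i ≤ n. -/
open Finset Polynomial

/-- Number of odd cycle peaks of a permutation of `[n]` (the element `i : Fin n`
represents the value `i+1 ∈ {1,…,n}`): values `v` with `π⁻¹(v) < v` and `π(v) < v`
whose label is odd. -/
def cpko (n : ℕ) (π : Equiv.Perm (Fin n)) : ℕ :=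
  (Finset.univ.filter fun i : Fin n => π.symm i < i ∧ π i < i ∧ Odd ((i : ℕ) + 1)).card

/-- Number of even cycle peaks of a permutation of `[n]`. -/
def cpke (n : ℕ) (π : Equiv.Perm (Fin n)) : ℕ :=
  (Finset.univ.filter fun i : Fin n => π.symm i < i ∧ π i < i ∧ Even ((i : ℕ) + 1)).card

/-- `Jodd n = J_{2n+1}(x) = Σ_{π ∈ S_{2n+1}, cpk^o(π)=0} x^{cpk^e(π)}`. -/
noncomputable def Jodd (n : ℕ) : Polynomial ℤ :=
  ∑ π ∈ Finset.univ.filter (fun π : Equiv.Perm (Fin (2 * n + 1)) => cpko (2 * n + 1) π = 0),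
    X ^ cpke (2 * n + 1) π

/-!
Let `P N j` (`evenPeakPoly N j` below) be the sum of `x ^ cpke π` over the permutations `π` of
`[N]` with `j` odd cycle peaks, so that `J_{2n+1} = P (2n+1) 0`. Every permutation of `[N+1]`
arises exactly once by inserting `N+1` into a permutation `π` of `[N]`, either as a fixed point or
just before some `b` in its cycle. In the second case `N+1` becomes a cycle peak and the only peak
destroyed is `b` or `π⁻¹ b`; each peak of `π` is hit by exactly two of the `N` positions `b`.
This turns into the recurrences

* `P (N+1) j = (1 + 2xD + (N-2j)x - 2x²D) P N j + (2j+2) x P N (j+1)` for `N+1` even,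
* `P (N+1) (j+1) = (2j+3) P N (j+1) + (N - 2j + 2D - 2xD) P N j` for `N+1` odd,

with `D = d/dx`. The two operators turn a polynomial whose coefficients are palindromic about
`c` into one palindromic about `c + 1`, resp. `c - 1`, so by induction `P N j` is palindromic
about `⌊N/2⌋ - j`. Since `P N 0` has constant term `1`, `J_{2n+1}` has degree exactly `n`.
-/

namespace Jodd

open Equiv Fin

lemma sum_sdiff_pair_symm {α M : Type*} [Fintype α] [DecidableEq α] [AddCommGroup M]
    (π : Perm α) (S : Finset α) (hS : ∀ r ∈ S, π r ∉ S) (H : Finset α → M) :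
    ∑ b, H (S \ {b, π.symm b}) =
      2 • ∑ r ∈ S, H (S.erase r) + ((Fintype.card α : ℤ) - 2 * #S) • H S := by
  have hS' (b : α) (hb : b ∈ S) : π.symm b ∉ S := fun h => hS _ h (by simpa using hb)
  have hdisj : Disjoint S (S.map π.toEmbedding) := by
    simpa [Finset.disjoint_left] using hS'
  have hpeak (b : α) (hb : b ∈ S) : H (S \ {b, π.symm b}) = H (S.erase b) := by
    rw [sdiff_insert, sdiff_singleton_eq_erase, erase_eq_of_notMem (hS' b hb)]
  have himage (r : α) (hr : r ∈ S) :
      H (S \ {π.toEmbedding r, π.symm (π.toEmbedding r)}) = H (S.erase r) := by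
    rw [coe_toEmbedding, symm_apply_apply, pair_comm, sdiff_insert, sdiff_singleton_eq_erase,
      erase_eq_of_notMem (hS r hr)]
  have hrest (b : α) (hb : b ∈ (S.disjUnion _ hdisj)ᶜ) : H (S \ {b, π.symm b}) = H S := by
    simp only [mem_compl, mem_disjUnion, mem_map_equiv, not_or] at hb
    rw [sdiff_insert, sdiff_singleton_eq_erase, erase_eq_of_notMem hb.2, erase_eq_of_notMem hb.1]
  have hcard : #S + #S ≤ Fintype.card α := by
    simpa only [card_disjUnion, card_map] using (S.disjUnion _ hdisj).card_le_univ
  rw [← sum_add_sum_compl (S.disjUnion _ hdisj), sum_disjUnion, sum_map, sum_congr rfl hpeak,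
    sum_congr rfl himage, sum_congr rfl hrest, Finset.sum_const, card_compl, card_disjUnion,
    card_map, ← natCast_zsmul, Nat.cast_sub hcard]
  push_cast
  module

variable {N : ℕ}

def cyclePeaks (π : Perm (Fin N)) : Finset (Fin N) :=
  univ.filter fun i => π.symm i < i ∧ π i < i

lemma mem_cyclePeaks {π : Perm (Fin N)} {i : Fin N} :
    i ∈ cyclePeaks π ↔ π.symm i < i ∧ π i < i := by
  simp [cyclePeaks]

lemma apply_notMem_cyclePeaks {π : Perm (Fin N)} {i : Fin N} (hi : i ∈ cyclePeaks π) :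
    π i ∉ cyclePeaks π := by
  rw [mem_cyclePeaks] at hi ⊢
  rw [symm_apply_apply]
  exact fun h => lt_asymm h.1 hi.2

def labelCount (p : ℕ → Prop) [DecidablePred p] (S : Finset (Fin N)) : ℕ :=
  #(S.filter fun i : Fin N => p ((i : ℕ) + 1))

lemma cpke_eq_labelCount (π : Perm (Fin N)) : cpke N π = labelCount Even (cyclePeaks π) := by
  simp only [cpke, labelCount, cyclePeaks, filter_filter, and_assoc]

lemma cpko_eq_labelCount (π : Perm (Fin N)) : cpko N π = labelCount Odd (cyclePeaks π) := by
  simp only [cpko, labelCount, cyclePeaks, filter_filter, and_assoc]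

section labelCount

variable (p : ℕ → Prop) [DecidablePred p]

lemma labelCount_map_castSucc (S : Finset (Fin N)) :
    labelCount p (S.map castSuccEmb) = labelCount p S := by
  rw [labelCount, filter_map, card_map]
  rfl

lemma labelCount_insert_last_map_castSucc (S : Finset (Fin N)) :
    labelCount p (insert (last N) (S.map castSuccEmb)) =
      labelCount p S + if p (N + 1) then 1 else 0 := by
  have hlast : last N ∉ S.map castSuccEmb := by
    simpa [Fin.ext_iff] using fun x _ => x.is_lt.ne
  rw [← labelCount_map_castSucc p S, labelCount, labelCount, filter_insert, val_last]
  split_ifs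
  · exact card_insert_of_notMem fun h => hlast (mem_filter.1 h).1
  · rfl

lemma labelCount_erase {S : Finset (Fin N)} {r : Fin N} (hr : r ∈ S) :
    labelCount p (S.erase r) = labelCount p S - if p (r + 1) then 1 else 0 := by
  rw [labelCount, filter_erase]
  split_ifs with h
  · rw [card_erase_of_mem (mem_filter.2 ⟨hr, h⟩)]; rfl
  · rw [erase_eq_of_notMem (by simp [h])]; rfl

lemma labelCount_even_add_odd (S : Finset (Fin N)) :
    labelCount Even S + labelCount Odd S = #S := by
  simp only [labelCount, ← Nat.not_even_iff_odd]
  exact card_filter_add_card_filter_not fun i : Fin N => Even ((i : ℕ) + 1)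

end labelCount

lemma sum_erase_labelCount {M : Type*} [AddCommMonoid M] (G : ℕ → ℕ → M)
    (S : Finset (Fin N)) :
    ∑ r ∈ S, G (labelCount Even (S.erase r)) (labelCount Odd (S.erase r)) =
      labelCount Even S • G (labelCount Even S - 1) (labelCount Odd S) +
        labelCount Odd S • G (labelCount Even S) (labelCount Odd S - 1) := by
  have hterm (r : Fin N) (hr : r ∈ S) :
      G (labelCount Even (S.erase r)) (labelCount Odd (S.erase r)) =
        if Even ((r : ℕ) + 1) then G (labelCount Even S - 1) (labelCount Odd S)
        else G (labelCount Even S) (labelCount Odd S - 1) := by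
    rw [labelCount_erase _ hr, labelCount_erase _ hr]
    by_cases h : Even ((r : ℕ) + 1)
    · simp [h, Nat.not_odd_iff_even.2 h]
    · simp [h, Nat.not_even_iff_odd.1 h]
  rw [sum_congr rfl hterm, sum_ite, Finset.sum_const, Finset.sum_const]
  simp only [labelCount, Nat.not_even_iff_odd]

/-- `insertMax N (some b, π)` inserts `N + 1` into the cycle of `π` just before `b`;
`insertMax N (none, π)` adds it as a fixed point. -/
def insertMax (N : ℕ) : Option (Fin N) × Perm (Fin N) ≃ Perm (Fin (N + 1)) :=
  Perm.decomposeOption.symm.trans finSuccEquivLast.symm.permCongr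

section insertMax

variable (π : Perm (Fin N)) (b : Fin N)

lemma insertMax_apply (ob : Option (Fin N)) (x : Fin (N + 1)) :
    insertMax N (ob, π) x =
      finSuccEquivLast.symm (swap none ob ((finSuccEquivLast x).map π)) := rfl

@[simp] lemma insertMax_none_castSucc (x : Fin N) :
    insertMax N (none, π) (castSucc x) = castSucc (π x) := by
  simp [insertMax_apply]

@[simp] lemma insertMax_none_last : insertMax N (none, π) (last N) = last N := by
  simp [insertMax_apply]

@[simp] lemma insertMax_some_last : insertMax N (some b, π) (last N) = castSucc b := by
  simp [insertMax_apply]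

lemma insertMax_some_castSucc (x : Fin N) :
    insertMax N (some b, π) (castSucc x) = if π x = b then last N else castSucc (π x) := by
  split_ifs with h <;> simp [insertMax_apply, h, swap_apply_of_ne_of_ne]

@[simp] lemma insertMax_none_symm_castSucc (x : Fin N) :
    (insertMax N (none, π)).symm (castSucc x) = castSucc (π.symm x) := by
  simp [symm_apply_eq]

@[simp] lemma insertMax_some_symm_last :
    (insertMax N (some b, π)).symm (last N) = castSucc (π.symm b) := by
  simp [symm_apply_eq, insertMax_some_castSucc]

lemma insertMax_some_symm_castSucc (x : Fin N) :
    (insertMax N (some b, π)).symm (castSucc x) =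
      if x = b then last N else castSucc (π.symm x) := by
  split_ifs with h
  · simp [symm_apply_eq, h]
  · simp [symm_apply_eq, insertMax_some_castSucc, h]

lemma cyclePeaks_insertMax_none :
    cyclePeaks (insertMax N (none, π)) = (cyclePeaks π).map castSuccEmb := by
  ext y
  induction y using Fin.lastCases with
  | last => simp [mem_cyclePeaks]
  | cast x => simp [mem_cyclePeaks]

lemma cyclePeaks_insertMax_some :
    cyclePeaks (insertMax N (some b, π)) =
      insert (last N) ((cyclePeaks π \ {b, π.symm b}).map castSuccEmb) := by
  ext y
  induction y using Fin.lastCases with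
  | last => simp [mem_cyclePeaks, castSucc_lt_last]
  | cast x =>
    have hlast (y : Fin N) : ¬last N < castSucc y := not_lt.2 (le_last _)
    simp only [mem_cyclePeaks, insertMax_some_castSucc, insertMax_some_symm_castSucc, mem_insert,
      castSucc_ne_last, mem_map, mem_sdiff, mem_singleton, eq_symm_apply, not_or,
      coe_castSuccEmb, castSucc_inj, exists_eq_right, false_or]
    split_ifs <;> simp [*]

end insertMax

lemma sum_perm_succ {M : Type*} [AddCommMonoid M] (F : Perm (Fin (N + 1)) → M) :
    ∑ σ, F σ = ∑ π, ∑ ob, F (insertMax N (ob, π)) := by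
  rw [← (insertMax N).sum_comp, Fintype.sum_prod_type, sum_comm]

section sumInsertMax

variable {M : Type*} [AddCommGroup M] (π : Perm (Fin N))

lemma sum_insertMax_cyclePeaks (W : Finset (Fin (N + 1)) → M) :
    ∑ ob, W (cyclePeaks (insertMax N (ob, π))) =
      let S := cyclePeaks π
      let W' T := W (insert (last N) (T.map castSuccEmb))
      W (S.map castSuccEmb) + 2 • ∑ r ∈ S, W' (S.erase r) +
        ((N : ℤ) - 2 * #S) • W' S := by
  rw [Fintype.sum_option, cyclePeaks_insertMax_none, add_assoc]
  simp only [cyclePeaks_insertMax_some]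
  rw [sum_sdiff_pair_symm π _ (fun r => apply_notMem_cyclePeaks)
    (fun T => W (insert (last N) (T.map castSuccEmb))), Fintype.card_fin]

lemma sum_insertMax (G : ℕ → ℕ → M) :
    ∑ ob, G (cpke (N + 1) (insertMax N (ob, π))) (cpko (N + 1) (insertMax N (ob, π))) =
      let e := cpke N π
      let o := cpko N π
      let G' a b := G (a + if Even (N + 1) then 1 else 0) (b + if Odd (N + 1) then 1 else 0)
      G e o + 2 • (e • G' (e - 1) o + o • G' e (o - 1)) +
        ((N : ℤ) - 2 * (e + o)) • G' e o := by
  simp only [cpke_eq_labelCount, cpko_eq_labelCount]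
  rw [sum_insertMax_cyclePeaks π (fun T => G (labelCount Even T) (labelCount Odd T))]
  simp only [labelCount_map_castSucc, labelCount_insert_last_map_castSucc]
  rw [sum_erase_labelCount fun a b =>
      G (a + if Even (N + 1) then 1 else 0) (b + if Odd (N + 1) then 1 else 0),
    ← Nat.cast_add, labelCount_even_add_odd]

end sumInsertMax

section Palindromic

variable {R : Type*} [CommRing R]

/-- Coefficients indexed by `ℤ`, extended by zero to negative indices: thus `IsPalindromic c f`
below also forces `natDegree f ≤ c`, and `f = 0` when `c < 0`. -/
noncomputable def icoeff (f : R[X]) (k : ℤ) : R := if k < 0 then 0 else f.coeff k.toNat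

@[simp] lemma icoeff_natCast (f : R[X]) (n : ℕ) : icoeff f n = f.coeff n := by
  simp [icoeff]

lemma icoeff_of_neg (f : R[X]) {k : ℤ} (hk : k < 0) : icoeff f k = 0 := if_pos hk

@[simp] lemma icoeff_add (f g : R[X]) (k : ℤ) : icoeff (f + g) k = icoeff f k + icoeff g k := by
  unfold icoeff; split_ifs <;> simp

@[simp] lemma icoeff_sub (f g : R[X]) (k : ℤ) : icoeff (f - g) k = icoeff f k - icoeff g k := by
  unfold icoeff; split_ifs <;> simp

@[simp] lemma icoeff_smul (a : R) (f : R[X]) (k : ℤ) : icoeff (a • f) k = a * icoeff f k := by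
  unfold icoeff; split_ifs <;> simp

lemma icoeff_X_mul (f : R[X]) (k : ℤ) : icoeff (X * f) k = icoeff f (k - 1) := by
  unfold icoeff
  split_ifs with h₁ h₂
  · rfl
  · omega
  · simp [show k = 0 by omega]
  · rw [show k.toNat = (k - 1).toNat + 1 by omega, coeff_X_mul]

lemma icoeff_derivative (f : R[X]) (k : ℤ) :
    icoeff (derivative f) k = (k + 1) * icoeff f (k + 1) := by
  unfold icoeff
  split_ifs with h₁ h₂
  · simp
  · simp [show k = -1 by omega]
  · omega
  · lift k to ℕ using not_lt.1 h₁
    rw [coeff_derivative, show ((k : ℤ) + 1).toNat = k + 1 by omega, Int.toNat_natCast]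
    push_cast
    ring

lemma icoeff_X_mul_derivative (f : R[X]) (k : ℤ) :
    icoeff (X * derivative f) k = k * icoeff f k := by
  rw [icoeff_X_mul, icoeff_derivative, sub_add_cancel]
  push_cast
  ring

noncomputable def evenStep (a : R) : R[X] →ₗ[R] R[X] :=
  LinearMap.id + (2 : R) • LinearMap.mulLeft R X ∘ₗ derivative + a • LinearMap.mulLeft R X
    - (2 : R) • LinearMap.mulLeft R (X * X) ∘ₗ derivative

noncomputable def oddStep (a : R) : R[X] →ₗ[R] R[X] :=
  a • LinearMap.id + (2 : R) • derivative - (2 : R) • LinearMap.mulLeft R X ∘ₗ derivative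

lemma evenStep_apply (a : R) (f : R[X]) :
    evenStep a f =
      f + (2 : R) • (X * derivative f) + a • (X * f) -
        (2 : R) • (X * (X * derivative f)) := by
  simp [evenStep]

lemma oddStep_apply (a : R) (f : R[X]) :
    oddStep a f = a • f + (2 : R) • derivative f - (2 : R) • (X * derivative f) := by
  simp [oddStep]

lemma icoeff_evenStep (a : R) (f : R[X]) (k : ℤ) :
    icoeff (evenStep a f) k = (2 * k + 1) * icoeff f k + (a + 2 - 2 * k) * icoeff f (k - 1) := by
  simp only [evenStep_apply, icoeff_add, icoeff_sub, icoeff_smul]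
  rw [icoeff_X_mul (X * _), icoeff_X_mul_derivative, icoeff_X_mul_derivative, icoeff_X_mul]
  push_cast
  ring

lemma icoeff_oddStep (a : R) (f : R[X]) (k : ℤ) :
    icoeff (oddStep a f) k = (a - 2 * k) * icoeff f k + (2 * k + 2) * icoeff f (k + 1) := by
  simp only [oddStep_apply, icoeff_add, icoeff_sub, icoeff_smul, icoeff_derivative,
    icoeff_X_mul_derivative]
  ring

lemma X_mul_derivative_X_pow (n : ℕ) : X * derivative (X ^ n : R[X]) = n • X ^ n := by
  rcases n with _ | n
  · simp
  · rw [derivative_X_pow, Nat.add_sub_cancel, nsmul_eq_mul, ← C_eq_natCast]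
    ring

lemma evenStep_X_pow (a : R) (e : ℕ) :
    evenStep a (X ^ e) = (2 * e + 1 : R) • X ^ e + (a - 2 * e) • X ^ (e + 1) := by
  rw [evenStep_apply, X_mul_derivative_X_pow, mul_smul_comm, ← pow_succ']
  module

lemma oddStep_X_pow (a : R) (e : ℕ) :
    oddStep a (X ^ e) = (a - 2 * e) • X ^ e + (2 * e : R) • X ^ (e - 1) := by
  rw [oddStep_apply, X_mul_derivative_X_pow, derivative_X_pow, C_mul']
  module

def IsPalindromic (c : ℤ) (f : R[X]) : Prop := ∀ k, icoeff f k = icoeff f (c - k)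

namespace IsPalindromic

variable {c : ℤ} {f g : R[X]}

lemma zero (c : ℤ) : IsPalindromic c (0 : R[X]) := fun k => by simp [icoeff]

lemma one : IsPalindromic 0 (1 : R[X]) := fun k => by
  unfold icoeff
  split_ifs <;> simp only [coeff_one] <;> split_ifs <;> first | rfl | omega

lemma add (hf : IsPalindromic c f) (hg : IsPalindromic c g) : IsPalindromic c (f + g) :=
  fun k => by rw [icoeff_add, icoeff_add, hf k, hg k]

lemma smul (a : R) (hf : IsPalindromic c f) : IsPalindromic c (a • f) :=
  fun k => by rw [icoeff_smul, icoeff_smul, hf k]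

lemma icoeff_eq (hf : IsPalindromic c f) {k l : ℤ} (h : k + l = c) : icoeff f k = icoeff f l := by
  rw [hf k, show c - k = l by omega]

lemma X_mul (hf : IsPalindromic c f) : IsPalindromic (c + 2) (X * f) := fun k => by
  rw [icoeff_X_mul, icoeff_X_mul, hf.icoeff_eq (k := c + 2 - k - 1) (l := k - 1) (by ring)]

lemma evenStep (hf : IsPalindromic c f) : IsPalindromic (c + 1) (evenStep (2 * c + 1 : R) f) :=
  fun k => by
    rw [icoeff_evenStep, icoeff_evenStep, hf.icoeff_eq (k := c + 1 - k) (l := k - 1) (by ring),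
      hf.icoeff_eq (k := c + 1 - k - 1) (l := k) (by ring)]
    push_cast
    ring

lemma oddStep (hf : IsPalindromic c f) : IsPalindromic (c - 1) (oddStep (2 * c : R) f) :=
  fun k => by
    rw [icoeff_oddStep, icoeff_oddStep, hf.icoeff_eq (k := c - 1 - k) (l := k + 1) (by ring),
      hf.icoeff_eq (k := c - 1 - k + 1) (l := k) (by ring)]
    push_cast
    ring

lemma coeff_eq_zero {c : ℕ} (hf : IsPalindromic c f) {i : ℕ} (hi : c < i) : f.coeff i = 0 := by
  rw [← icoeff_natCast, hf, icoeff_of_neg _ (by omega)]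

lemma coeff_eq_coeff_sub {c : ℕ} (hf : IsPalindromic c f) {i : ℕ} (hi : i ≤ c) :
    f.coeff i = f.coeff (c - i) := by
  rw [← icoeff_natCast, hf, ← icoeff_natCast, Nat.cast_sub hi]

end IsPalindromic

end Palindromic

lemma nsmul_ite_sub_one {M : Type*} [AddCommMonoid M] (o j : ℕ) (y : M) :
    (o • if o - 1 = j then y else 0) = if o = j + 1 then o • y else 0 := by
  rcases o with _ | o <;> simp

noncomputable def evenPeakPoly (N j : ℕ) : ℤ[X] :=
  ∑ π ∈ univ.filter (fun π : Perm (Fin N) => cpko N π = j), X ^ cpke N π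

lemma Jodd_eq_evenPeakPoly (n : ℕ) : Jodd n = evenPeakPoly (2 * n + 1) 0 := rfl

lemma evenPeakPoly_eq_sum (N j : ℕ) :
    evenPeakPoly N j = ∑ π : Perm (Fin N), if cpko N π = j then X ^ cpke N π else 0 :=
  sum_filter _ _

lemma evenPeakPoly_succ_of_even (hN : Even (N + 1)) (j : ℕ) :
    evenPeakPoly (N + 1) j =
      evenStep ((N : ℤ) - 2 * j) (evenPeakPoly N j) +
        (2 * j + 2 : ℤ) • (X * evenPeakPoly N (j + 1)) := by
  simp only [evenPeakPoly_eq_sum, sum_perm_succ, map_sum, mul_sum, smul_sum, ← sum_add_distrib]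
  refine sum_congr rfl fun π _ => ?_
  rw [sum_insertMax π (fun e o => if o = j then X ^ e else 0)]
  simp only [hN, if_true, (Nat.not_odd_iff_even.2 hN), if_false, add_zero]
  generalize cpke N π = e, cpko N π = o
  -- `e - 1 + 1 ≠ e` only for `e = 0`, where the factor `e` kills the term
  have he : (e • if o = j then X ^ (e - 1 + 1) else 0) =
      e • if o = j then (X ^ e : ℤ[X]) else 0 := by
    rcases e with _ | e <;> simp
  rw [nsmul_ite_sub_one, he]
  by_cases ho : o = j
  · subst ho
    simp only [↓reduceIte, if_neg (show o ≠ o + 1 by omega), evenStep_X_pow, smul_zero,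
      mul_zero, add_zero]
    module
  by_cases ho' : o = j + 1
  · subst ho'
    simp only [↓reduceIte, if_neg (show j + 1 ≠ j by omega), map_zero, smul_zero, zero_add,
      add_zero, ← pow_succ']
    module
  · simp [ho, ho']

lemma evenPeakPoly_succ_zero_of_odd (hN : Odd (N + 1)) :
    evenPeakPoly (N + 1) 0 = evenPeakPoly N 0 := by
  simp only [evenPeakPoly_eq_sum, sum_perm_succ]
  refine sum_congr rfl fun π _ => ?_
  rw [sum_insertMax π (fun e o => if o = 0 then X ^ e else 0)]
  simp only [hN, if_true, (Nat.not_even_iff_odd.2 hN), if_false, add_zero]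
  generalize cpke N π = e, cpko N π = o
  rcases o with _ | o <;> simp

lemma evenPeakPoly_succ_succ_of_odd (hN : Odd (N + 1)) (j : ℕ) :
    evenPeakPoly (N + 1) (j + 1) =
      (2 * j + 3 : ℤ) • evenPeakPoly N (j + 1) +
        oddStep ((N : ℤ) - 2 * j) (evenPeakPoly N j) := by
  simp only [evenPeakPoly_eq_sum, sum_perm_succ, map_sum, smul_sum, ← sum_add_distrib]
  refine sum_congr rfl fun π _ => ?_
  rw [sum_insertMax π (fun e o => if o = j + 1 then X ^ e else 0)]
  simp only [hN, if_true, (Nat.not_even_iff_odd.2 hN), if_false, add_zero]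
  generalize cpke N π = e, cpko N π = o
  have hsub : (o • if o - 1 + 1 = j + 1 then X ^ e else 0) =
      o • if o = j + 1 then (X ^ e : ℤ[X]) else 0 := by
    rcases o with _ | o <;> simp
  rw [hsub]
  by_cases ho : o = j
  · subst ho
    simp only [↓reduceIte, if_neg (show o ≠ o + 1 by omega), oddStep_X_pow, smul_zero,
      add_zero, zero_add]
    module
  by_cases ho' : o = j + 1
  · subst ho'
    simp only [↓reduceIte, if_neg (show j + 1 + 1 ≠ j + 1 by omega), if_neg ho, map_zero,
      smul_zero, zero_add, add_zero]
    module
  · simp [ho, ho']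

lemma evenPeakPoly_zero (j : ℕ) : evenPeakPoly 0 j = if j = 0 then 1 else 0 := by
  rcases j with _ | j <;> simp [evenPeakPoly, cpko, cpke]

theorem isPalindromic_evenPeakPoly (N j : ℕ) :
    IsPalindromic ((N / 2 : ℕ) - j : ℤ) (evenPeakPoly N j) := by
  induction N generalizing j with
  | zero =>
    rw [evenPeakPoly_zero]
    split_ifs with hj
    · simpa [hj] using IsPalindromic.one
    · exact IsPalindromic.zero _
  | succ N ih =>
    rcases Nat.even_or_odd (N + 1) with hN | hN
    · have hm : (N + 1) / 2 = N / 2 + 1 := by rcases hN with ⟨k, hk⟩; omega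
      have ha : 2 * ((N / 2 : ℕ) - j : ℤ) + 1 = N - 2 * j := by
        rcases hN with ⟨k, hk⟩; omega
      have h₁ := (ih j).evenStep
      have h₂ := ((ih (j + 1)).X_mul).smul (2 * j + 2 : ℤ)
      rw [Int.cast_id, ha] at h₁
      rw [show ((N / 2 : ℕ) : ℤ) - (j + 1 : ℕ) + 2 = (N / 2 : ℕ) - j + 1 by
        push_cast; ring] at h₂
      rw [evenPeakPoly_succ_of_even hN, hm, Nat.cast_succ, add_sub_right_comm]
      exact h₁.add h₂
    · have hm : (N + 1) / 2 = N / 2 := by rcases hN with ⟨k, hk⟩; omega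
      rw [hm]
      rcases j with _ | j
      · rw [evenPeakPoly_succ_zero_of_odd hN]
        exact ih 0
      · have ha : 2 * ((N / 2 : ℕ) - j : ℤ) = N - 2 * j := by rcases hN with ⟨k, hk⟩; omega
        have h₁ := (ih j).oddStep
        rw [Int.cast_id, ha, sub_sub, ← Nat.cast_succ] at h₁
        rw [evenPeakPoly_succ_succ_of_odd hN]
        exact ((ih (j + 1)).smul (2 * j + 3 : ℤ)).add h₁

lemma icoeff_evenPeakPoly_zero (N : ℕ) : icoeff (evenPeakPoly N 0) 0 = 1 := by
  induction N with
  | zero => simp [evenPeakPoly_zero, icoeff]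
  | succ N ih =>
    rcases Nat.even_or_odd (N + 1) with hN | hN
    · rw [evenPeakPoly_succ_of_even hN, icoeff_add, icoeff_smul, icoeff_X_mul, icoeff_evenStep, ih]
      simp [icoeff_of_neg]
    · rwa [evenPeakPoly_succ_zero_of_odd hN]

end Jodd

open Jodd

/-- For every `n ≥ 0`, the polynomial `J_{2n+1}(x)` has degree `n` and is symmetric:
its coefficients satisfy `c_i = c_{n-i}` for all `0 ≤ i ≤ n`. -/
theorem stmt0 (n : ℕ) :
    (Jodd n).natDegree = n ∧ ∀ i ≤ n, (Jodd n).coeff i = (Jodd n).coeff (n - i) := by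
  have hpal : IsPalindromic n (Jodd n) := by
    rw [Jodd_eq_evenPeakPoly]
    simpa [show (2 * n + 1) / 2 = n by omega] using isPalindromic_evenPeakPoly (2 * n + 1) 0
  have hlead : (Jodd n).coeff n = 1 := by
    rw [← icoeff_natCast, hpal, sub_self]
    exact icoeff_evenPeakPoly_zero (2 * n + 1)
  refine ⟨le_antisymm ?_ (le_natDegree_of_ne_zero (by simp [hlead])),
    fun i hi => hpal.coeff_eq_coeff_sub hi⟩
  exact natDegree_le_iff_coeff_eq_zero.2 fun i hi => hpal.coeff_eq_zero hi
end

section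
/- Let f(x) be a real polynomial of degree n. There exists a unique pair of polynomials (a(x), b(x)) such that f(x) = a(x) + x·b(x), x^n·a(1/x) = a(x), and x^{n−1}·b(1/x) = b(x). Moreover, a(x) = (f(x) − x^{n+1} f(1/x))/(1−x) and b(x) = (x^n f(1/x) − f(x))/(1−x). -/
/-!
If `f = a + x b` with `a` symmetric with respect to degree `n` and `b` with respect to `n - 1`,
then reflecting gives `xⁿ f(1/x) = a + b`. Together with `f = a + x b` this linear system
determines `(1 - x) a` and `(1 - x) b`, and `1 - x` is a non-zero-divisor, which gives both
uniqueness and the closed formulas. For existence, `xⁿ f(1/x) - f` vanishes at `1`, so it equals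
`(1 - x) b` with `deg b ≤ n - 1`; since it is antisymmetric and `1 - x` is antisymmetric of
degree `1`, `b` is symmetric, and then so is `a := f - x b`.
-/

open Polynomial

namespace Polynomial

section Semiring

variable {R : Type*} [Semiring R]

lemma reflect_zero_left (p : R[X]) : reflect 0 p = p := by
  ext (_ | i)
  · simp [coeff_reflect]
  · rw [coeff_reflect, revAt_eq_self_of_lt i.succ_pos]

lemma reflect_X_mul {b : R[X]} {m : ℕ} (hb : b.natDegree ≤ m) :
    reflect (m + 1) (X * b) = reflect m b := by
  rw [add_comm, reflect_mul X b natDegree_X_le hb, reflect_one_X, one_mul]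

lemma reflect_eq_add_of_eq_add_X_mul {f a b : R[X]} {m : ℕ} (h : f = a + X * b)
    (ha : reflect (m + 1) a = a) (hb : b.natDegree ≤ m) (hb' : reflect m b = b) :
    reflect (m + 1) f = a + b := by
  rw [h, reflect_add, ha, reflect_X_mul hb, hb']

end Semiring

section Ring

variable {R : Type*} [Ring R]

lemma natDegree_one_sub_X_le : (1 - X : R[X]).natDegree ≤ 1 :=
  (natDegree_sub_le _ _).trans (max_le (by simp) natDegree_X_le)

lemma isRegular_one_sub_X : IsRegular (1 - X : R[X]) := by
  have h : (1 - X : R[X]) = -1 * (X - C 1) := by rw [C_1, neg_one_mul, neg_sub]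
  rw [h]
  exact isUnit_one.neg.isRegular.mul (monic_X_sub_C 1).isRegular

lemma eq_zero_of_eq_add_X_mul_of_natDegree_le_zero {f a b : R[X]} (h : f = a + X * b)
    (hf : f.natDegree ≤ 0) (ha : a.natDegree ≤ 0) : b = 0 := by
  nontriviality R
  by_contra hb
  have hXb : (X * b).natDegree ≤ 0 := by
    rw [show X * b = f - a by rw [h, add_sub_cancel_left]]
    exact (natDegree_sub_le _ _).trans (max_le hf ha)
  rw [natDegree_X_mul hb] at hXb
  omega

end Ring

section CommRing

variable {R : Type*} [CommRing R]

lemma eval_one_reflect {f : R[X]} {N : ℕ} (hf : f.natDegree ≤ N) :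
    (reflect N f).eval 1 = f.eval 1 := by
  let := invertibleOne (α := R)
  simpa using eval₂_reflect_mul_pow (RingHom.id R) 1 N f hf

lemma one_sub_X_mul_eq_of_eq_add_X_mul {f a b : R[X]} {m : ℕ} (h : f = a + X * b)
    (ha : reflect (m + 1) a = a) (hb : b.natDegree ≤ m) (hb' : reflect m b = b) :
    (1 - X) * a = f - X * reflect (m + 1) f ∧ (1 - X) * b = reflect (m + 1) f - f := by
  rw [reflect_eq_add_of_eq_add_X_mul h ha hb hb', h]
  constructor <;> ring

lemma exists_one_sub_X_mul_eq_reflect_sub {f : R[X]} {N : ℕ} (hf : f.natDegree ≤ N) :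
    ∃ b : R[X], b.natDegree ≤ N - 1 ∧ (1 - X) * b = reflect N f - f := by
  nontriviality R
  set g := reflect N f - f
  have hroot : g.IsRoot 1 := by simp [g, eval_one_reflect hf]
  refine ⟨-(g /ₘ (X - C 1)), ?_, ?_⟩
  · rw [natDegree_neg, natDegree_divByMonic _ (monic_X_sub_C 1), natDegree_X_sub_C]
    exact Nat.sub_le_sub_right
      ((natDegree_sub_le _ _).trans (max_le (natDegree_reflect_le.trans (by simp [hf])) hf)) 1
  · have hdiv := mul_divByMonic_eq_iff_isRoot.mpr hroot
    rw [C_1] at hdiv ⊢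
    linear_combination hdiv

lemma reflect_eq_of_one_sub_X_mul_eq_reflect_sub {f b : R[X]} {m : ℕ} (hb : b.natDegree ≤ m)
    (h : (1 - X) * b = reflect (m + 1) f - f) : reflect m b = b := by
  have hrefl := congrArg (reflect (1 + m)) h
  rw [reflect_mul _ _ natDegree_one_sub_X_le hb, reflect_sub, add_comm 1 m, reflect_sub,
    reflect_reflect, reflect_one, reflect_one_X, pow_one] at hrefl
  exact isRegular_one_sub_X.left (by linear_combination -hrefl - h)

lemma exists_eq_add_X_mul_of_natDegree_le {f : R[X]} {m : ℕ} (hf : f.natDegree ≤ m + 1) :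
    ∃ a b : R[X], f = a + X * b ∧ a.natDegree ≤ m + 1 ∧ reflect (m + 1) a = a ∧
      b.natDegree ≤ m ∧ reflect m b = b := by
  obtain ⟨b, hb, hfb⟩ := exists_one_sub_X_mul_eq_reflect_sub hf
  rw [Nat.add_sub_cancel] at hb
  have hb' := reflect_eq_of_one_sub_X_mul_eq_reflect_sub hb hfb
  refine ⟨f - X * b, b, by ring, ?_, ?_, hb, hb'⟩
  · exact (natDegree_sub_le _ _).trans
      (max_le hf (natDegree_mul_le.trans (by linarith [natDegree_X_le (R := R)])))
  · rw [reflect_sub, reflect_X_mul hb, hb']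
    linear_combination -hfb

end CommRing

end Polynomial

/-- **Symmetric decomposition.** Let `f` be a real polynomial of degree `n`. There is a
unique pair `(a, b)` with `f = a + x·b`, where `a` is symmetric with respect to degree `n`
(`xⁿ·a(1/x) = a(x)`, expressed via `reflect n a = a` together with `a.natDegree ≤ n`) and
`b` is symmetric with respect to degree `n-1`. Moreover,
`a(x) = (f(x) − x^{n+1} f(1/x))/(1−x)` and `b(x) = (xⁿ f(1/x) − f(x))/(1−x)`,
expressed here in the denominator-cleared form `(1−x)·a = f − x·(xⁿ f(1/x))` and
`(1−x)·b = xⁿ f(1/x) − f`. -/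
theorem stmt3 (n : ℕ) (f : ℝ[X]) (hf : f.natDegree = n) :
    (∃! ab : ℝ[X] × ℝ[X],
        f = ab.1 + X * ab.2 ∧
        ab.1.natDegree ≤ n ∧ reflect n ab.1 = ab.1 ∧
        ab.2.natDegree ≤ n - 1 ∧ reflect (n - 1) ab.2 = ab.2) ∧
    (∀ a b : ℝ[X],
        (f = a + X * b ∧ a.natDegree ≤ n ∧ reflect n a = a ∧
          b.natDegree ≤ n - 1 ∧ reflect (n - 1) b = b) →
        (1 - X) * a = f - X * reflect n f ∧ (1 - X) * b = reflect n f - f) := by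
  rcases n with _ | m
  -- `0 - 1 = 0` in `ℕ`, so this is not an instance of the general case; `b = 0` is forced.
  · have hconst : ∀ a b : ℝ[X], f = a + X * b → a.natDegree ≤ 0 → a = f ∧ b = 0 := by
      intro a b h ha
      have hb := eq_zero_of_eq_add_X_mul_of_natDegree_le_zero h hf.le ha
      simp [h, hb]
    refine ⟨⟨(f, 0), ⟨by simp, hf.le, reflect_zero_left f, by simp, by simp⟩, ?_⟩, ?_⟩
    · rintro ⟨a, b⟩ ⟨h, ha, -⟩
      obtain ⟨rfl, rfl⟩ := hconst a b h ha
      rfl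
    · rintro a b ⟨h, ha, -⟩
      obtain ⟨rfl, rfl⟩ := hconst a b h ha
      rw [reflect_zero_left]
      constructor <;> ring
  · simp only [Nat.add_sub_cancel]
    obtain ⟨a₀, b₀, h₀, ha₀, ha₀', hb₀, hb₀'⟩ := exists_eq_add_X_mul_of_natDegree_le hf.le
    have hformula₀ := one_sub_X_mul_eq_of_eq_add_X_mul h₀ ha₀' hb₀ hb₀'
    refine ⟨⟨(a₀, b₀), ⟨h₀, ha₀, ha₀', hb₀, hb₀'⟩, ?_⟩, ?_⟩
    · rintro ⟨a, b⟩ ⟨h, -, ha', hb, hb'⟩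
      have hformula := one_sub_X_mul_eq_of_eq_add_X_mul h ha' hb hb'
      exact Prod.ext (isRegular_one_sub_X.left (hformula.1.trans hformula₀.1.symm))
        (isRegular_one_sub_X.left (hformula.2.trans hformula₀.2.symm))
    · rintro a b ⟨h, -, ha', hb, hb'⟩
      exact one_sub_X_mul_eq_of_eq_add_X_mul h ha' hb hb'
end

section
/- For every n ≥ 0 there exist nonnegative integers s_{2n,i,j} and s_{2n+1,i,j} such that, in the polynomial ring ℤ[x,y,z], D_J^{2n}(x) = Σ_{i,j ≥ 0} s_{2n,i,j} x^{2i+1} y^{2j} z^{2n−2i−2j} and D_J^{2n+1}(x) = Σ_{i,j ≥ 0} s_{2n+1,i,j} x^{2i} y^{2j+1} z^{2n−2i−2j+1}. In particular, every coefficient of D_J^n(x) is nonnegative and D_J^{2n}(x) lies in x·ℤ[x²,y²,z²] while D_J^{2n+1}(x) lies in yz·ℤ[x²,y²,z²]. -/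
open Finset MvPolynomial

/-- The derivation `D_J` on `ℤ[x,y,z]` with `D_J(x) = yz`, `D_J(y) = xz`, `D_J(z) = xy`
(variables `x = X 0`, `y = X 1`, `z = X 2`). -/
noncomputable def DJ : Derivation ℤ (MvPolynomial (Fin 3) ℤ) (MvPolynomial (Fin 3) ℤ) :=
  MvPolynomial.mkDerivation ℤ ![X 1 * X 2, X 0 * X 2, X 0 * X 1]

/-!
`D_J` sends `x^a y^b z^c` to `a x^(a-1) y^(b+1) z^(c+1) + b x^(a+1) y^(b-1) z^(c+1)
+ c x^(a+1) y^(b+1) z^(c-1)`: a nonnegative combination of monomials of one higher degree in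
which all three exponents have changed parity. Hence, starting from `x`, `D_J^n(x)` is a
nonnegative combination of monomials of degree `n + 1` whose exponents have the parities of
`(n + 1, n, n)`, and for `n` even or odd these are exactly the monomials of the statement.
-/

noncomputable def xyzMonomial (a b c : ℕ) : MvPolynomial (Fin 3) ℤ := X 0 ^ a * X 1 ^ b * X 2 ^ c

lemma DJ_X (i : Fin 3) : DJ (X i) = ![X 1 * X 2, X 0 * X 2, X 0 * X 1] i :=
  mkDerivation_X ℤ _ i

lemma DJ_xyzMonomial (a b c : ℕ) :
    DJ (xyzMonomial a b c) = a • xyzMonomial (a - 1) (b + 1) (c + 1)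
      + b • xyzMonomial (a + 1) (b - 1) (c + 1) + c • xyzMonomial (a + 1) (b + 1) (c - 1) := by
  simp only [xyzMonomial, Derivation.leibniz, Derivation.leibniz_pow, DJ_X, Matrix.cons_val,
    Matrix.cons_val_zero, Matrix.cons_val_one, smul_eq_mul, nsmul_eq_mul]
  ring

noncomputable def parityCone (n : ℕ) : AddSubmonoid (MvPolynomial (Fin 3) ℤ) :=
  AddSubmonoid.closure {p | ∃ a b c, a + b + c = n + 1 ∧ a % 2 = (n + 1) % 2 ∧ b % 2 = n % 2 ∧
    c % 2 = n % 2 ∧ p = xyzMonomial a b c}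

lemma nsmul_xyzMonomial_mem_parityCone {n k a b c : ℕ}
    (h : k ≠ 0 → a + b + c = n + 1 ∧ a % 2 = (n + 1) % 2 ∧ b % 2 = n % 2 ∧ c % 2 = n % 2) :
    k • xyzMonomial a b c ∈ parityCone n := by
  rcases eq_or_ne k 0 with rfl | hk
  · rw [zero_smul]; exact zero_mem _
  · obtain ⟨hdeg, ha, hb, hc⟩ := h hk
    exact nsmul_mem (AddSubmonoid.subset_closure ⟨a, b, c, hdeg, ha, hb, hc, rfl⟩ :
      xyzMonomial a b c ∈ parityCone n) k

lemma DJ_mem_parityCone_succ {n : ℕ} {P : MvPolynomial (Fin 3) ℤ} (hP : P ∈ parityCone n) :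
    DJ P ∈ parityCone (n + 1) := by
  induction hP using AddSubmonoid.closure_induction with
  | mem p hp =>
    obtain ⟨a, b, c, hdeg, ha, hb, hc, rfl⟩ := hp
    rw [DJ_xyzMonomial]
    refine add_mem (add_mem ?_ ?_) ?_ <;> exact nsmul_xyzMonomial_mem_parityCone (by omega)
  | zero => rw [map_zero]; exact zero_mem _
  | add x y _ _ hx hy => rw [map_add]; exact add_mem hx hy

lemma iterate_DJ_X_zero_mem_parityCone (n : ℕ) : (fun p => DJ p)^[n] (X 0) ∈ parityCone n := by
  induction n with
  | zero =>
    have hx : (X 0 : MvPolynomial (Fin 3) ℤ) = 1 • xyzMonomial 1 0 0 := by simp [xyzMonomial]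
    rw [Function.iterate_zero_apply, hx]
    exact nsmul_xyzMonomial_mem_parityCone (by omega)
  | succ n ih => rw [Function.iterate_succ_apply']; exact DJ_mem_parityCone_succ ih

lemma exists_sum_nsmul_of_mem_closure {M : Type*} [AddCommMonoid M] (n : ℕ) (m : ℕ → ℕ → M)
    {P : M} (hP : P ∈ AddSubmonoid.closure {p | ∃ i j, i + j ≤ n ∧ p = m i j}) :
    ∃ s : ℕ → ℕ → ℕ, P = ∑ i ∈ range (n + 1), ∑ j ∈ range (n + 1 - i), s i j • m i j := by
  induction hP using AddSubmonoid.closure_induction with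
  | mem p hp =>
    obtain ⟨i₀, j₀, hij, rfl⟩ := hp
    refine ⟨fun i j => if i = i₀ ∧ j = j₀ then 1 else 0, ?_⟩
    simp only [ite_and, ite_smul, one_smul, zero_nsmul, sum_ite_irrel, sum_ite_eq', mem_range,
      sum_const_zero]
    rw [if_pos (by omega), if_pos (by omega)]
  | zero => exact ⟨0, by simp⟩
  | add x y _ _ hx hy =>
    obtain ⟨s, rfl⟩ := hx
    obtain ⟨t, rfl⟩ := hy
    exact ⟨s + t, by simp [add_smul, sum_add_distrib]⟩

lemma parityCone_two_mul_le (n : ℕ) : parityCone (2 * n) ≤ AddSubmonoid.closure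
    {p | ∃ i j, i + j ≤ n ∧ p = xyzMonomial (2 * i + 1) (2 * j) (2 * n - 2 * i - 2 * j)} := by
  refine AddSubmonoid.closure_mono ?_
  rintro _ ⟨a, b, c, hdeg, ha, hb, hc, rfl⟩
  exact ⟨a / 2, b / 2, by omega, by congr 1 <;> omega⟩

lemma parityCone_two_mul_add_one_le (n : ℕ) : parityCone (2 * n + 1) ≤ AddSubmonoid.closure
    {p | ∃ i j, i + j ≤ n ∧ p = xyzMonomial (2 * i) (2 * j + 1) (2 * n - 2 * i - 2 * j + 1)} := by
  refine AddSubmonoid.closure_mono ?_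
  rintro _ ⟨a, b, c, hdeg, ha, hb, hc, rfl⟩
  exact ⟨a / 2, b / 2, by omega, by congr 1 <;> omega⟩

/-- For every `n ≥ 0` there are nonnegative integers `s_{2n,i,j}`, `s_{2n+1,i,j}` with
`D_J^{2n}(x) = Σ_{i,j} s_{2n,i,j} x^{2i+1} y^{2j} z^{2n-2i-2j}` and
`D_J^{2n+1}(x) = Σ_{i,j} s_{2n+1,i,j} x^{2i} y^{2j+1} z^{2n-2i-2j+1}`.
(In particular all coefficients of `D_J^n(x)` are nonnegative, `D_J^{2n}(x) ∈ x·ℤ[x²,y²,z²]`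
and `D_J^{2n+1}(x) ∈ yz·ℤ[x²,y²,z²]`.) -/
theorem stmt6 (n : ℕ) :
    ∃ s₀ s₁ : ℕ → ℕ → ℕ,
      ((fun p => DJ p)^[2 * n] (X 0) =
        ∑ i ∈ Finset.range (n + 1), ∑ j ∈ Finset.range (n + 1 - i),
          (s₀ i j) • (X 0 ^ (2 * i + 1) * X 1 ^ (2 * j) *
            X 2 ^ (2 * n - 2 * i - 2 * j) : MvPolynomial (Fin 3) ℤ)) ∧
      ((fun p => DJ p)^[2 * n + 1] (X 0) =
        ∑ i ∈ Finset.range (n + 1), ∑ j ∈ Finset.range (n + 1 - i),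
          (s₁ i j) • (X 0 ^ (2 * i) * X 1 ^ (2 * j + 1) *
            X 2 ^ (2 * n - 2 * i - 2 * j + 1) : MvPolynomial (Fin 3) ℤ)) := by
  obtain ⟨s₀, hs₀⟩ := exists_sum_nsmul_of_mem_closure n _
    (parityCone_two_mul_le n (iterate_DJ_X_zero_mem_parityCone (2 * n)))
  obtain ⟨s₁, hs₁⟩ := exists_sum_nsmul_of_mem_closure n _
    (parityCone_two_mul_add_one_le n (iterate_DJ_X_zero_mem_parityCone (2 * n + 1)))
  exact ⟨s₀, s₁, hs₀, hs₁⟩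
end

section
/- For every n ≥ 1 and all i, j ≥ 0, the coefficient of the monomial x^{2i+1} y^{2j} z^{2n−2i−2j} in D_J^{2n}(x) (an element of the polynomial ring ℤ[x,y,z]) equals the number of permutations π of [2n] with cpk^o(π) = i and cpk^e(π) = j. -/
open Finset MvPolynomial

/-!
For a monomial with exponents `(a, b, c)`,
`D_J(x^a y^b z^c) = a x^{a-1} y^{b+1} z^{c+1} + b x^{a+1} y^{b-1} z^{c+1} + c x^{a+1} y^{b+1} z^{c-1}`.

Every permutation of `[m+1]` arises exactly once from a permutation `π` of `[m]` by inserting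
`m+1` either as a fixed point or just before some `k` in its cycle. Unless it is fixed, the new
maximum is a cycle peak, and the only peaks it destroys are `k` and `π⁻¹(k)`, of which at most
one is a peak. So the `m+1` insertion slots fall into three classes, of sizes
`2 cpk^o(π) + [m even]`, `2 cpk^e(π) + [m odd]` and `m - 2 cpk^o(π) - 2 cpk^e(π)`, and inserting
into a slot of the first, second or third class changes these three numbers exactly as the
first, second or third term of `D_J` changes `(a, b, c)`. By induction,
`D_J^m(x) = ∑_π x^{2 cpk^o(π) + [m even]} y^{2 cpk^e(π) + [m odd]} z^{m - 2 cpk^o(π) - 2 cpk^e(π)}`.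
-/

open Equiv

lemma Fin.card_eq_card_filter_castSucc_add {m : ℕ} (s : Finset (Fin (m + 1))) :
    #s = #{i : Fin m | i.castSucc ∈ s} + if Fin.last m ∈ s then 1 else 0 := by
  rw [← Finset.filter_univ_mem s, card_filter, Fin.sum_univ_castSucc, card_filter]
  simp

section CyclePeaks

variable {m : ℕ} (Q : ℕ → Prop) [DecidablePred Q] (π : Perm (Fin m))

def cyclePeaks : Finset (Fin m) := {i | π.symm i < i ∧ π i < i ∧ Q (i + 1)}

lemma cpko_eq_card_cyclePeaks : cpko m π = #(cyclePeaks Odd π) := rfl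

lemma cpke_eq_card_cyclePeaks : cpke m π = #(cyclePeaks Even π) := rfl

def peakSlots : Finset (Fin m) := cyclePeaks Q π ∪ (cyclePeaks Q π).map π.toEmbedding

variable {Q π}

@[simp] lemma mem_cyclePeaks {i : Fin m} :
    i ∈ cyclePeaks Q π ↔ π.symm i < i ∧ π i < i ∧ Q (i + 1) := by
  simp [cyclePeaks]

lemma notMem_cyclePeaks_of_symm_mem {Q' : ℕ → Prop} [DecidablePred Q'] {k : Fin m}
    (h : π.symm k ∈ cyclePeaks Q' π) : k ∉ cyclePeaks Q π := by
  simp only [mem_cyclePeaks, apply_symm_apply] at h ⊢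
  exact fun hk => (h.2.1.trans hk.1).false

lemma mem_peakSlots {k : Fin m} :
    k ∈ peakSlots Q π ↔ k ∈ cyclePeaks Q π ∨ π.symm k ∈ cyclePeaks Q π := by
  rw [peakSlots, mem_union, mem_map_equiv]

lemma card_peakSlots : #(peakSlots Q π) = 2 * #(cyclePeaks Q π) := by
  rw [peakSlots, card_union_of_disjoint, card_map, two_mul]
  exact disjoint_left.2 fun k hk hk' => notMem_cyclePeaks_of_symm_mem (mem_map_equiv.1 hk') hk

lemma disjoint_peakSlots {Q' : ℕ → Prop} [DecidablePred Q'] (hQ : ∀ n, Q n → ¬ Q' n) :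
    Disjoint (peakSlots Q π) (peakSlots Q' π) := by
  have hpk : Disjoint (cyclePeaks Q π) (cyclePeaks Q' π) :=
    disjoint_left.2 fun k hk hk' => hQ _ (mem_cyclePeaks.1 hk).2.2 (mem_cyclePeaks.1 hk').2.2
  refine disjoint_left.2 fun k hk hk' => ?_
  rcases mem_peakSlots.1 hk with hk | hk <;> rcases mem_peakSlots.1 hk' with hk' | hk'
  · exact disjoint_left.1 hpk hk hk'
  · exact notMem_cyclePeaks_of_symm_mem hk' hk
  · exact notMem_cyclePeaks_of_symm_mem hk hk'
  · exact disjoint_left.1 hpk hk hk'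

variable (π)

lemma disjoint_peakSlots_odd_even : Disjoint (peakSlots Odd π) (peakSlots Even π) :=
  disjoint_peakSlots fun _ h => Nat.not_even_iff_odd.2 h

lemma card_cyclePeaks_odd_add_even_le :
    2 * #(cyclePeaks Odd π) + 2 * #(cyclePeaks Even π) ≤ m := by
  rw [← card_peakSlots, ← card_peakSlots,
    ← card_union_of_disjoint (disjoint_peakSlots_odd_even π)]
  simpa using card_le_univ (peakSlots Odd π ∪ peakSlots Even π)

variable (m) in
/-- `insertMax m (some k, π)` inserts the new maximum `m + 1` just before `k` in its cycle
of `π`; `insertMax m (none, π)` adds it as a fixed point. -/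
def insertMax : Option (Fin m) × Perm (Fin m) ≃ Perm (Fin (m + 1)) :=
  (finSuccEquivLast.permCongr.trans Perm.decomposeOption).symm

lemma insertMax_apply (c : Option (Fin m)) (x : Fin (m + 1)) :
    insertMax m (c, π) x =
      finSuccEquivLast.symm ((swap none c * π.optionCongr) (finSuccEquivLast x)) :=
  rfl

@[simp] lemma insertMax_none_castSucc (i : Fin m) :
    insertMax m (none, π) i.castSucc = (π i).castSucc := by
  simp [insertMax_apply]

@[simp] lemma insertMax_none_last : insertMax m (none, π) (Fin.last m) = Fin.last m := by
  simp [insertMax_apply]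

@[simp] lemma insertMax_some_castSucc (k i : Fin m) :
    insertMax m (some k, π) i.castSucc = if π i = k then Fin.last m else (π i).castSucc := by
  by_cases h : π i = k <;> simp [insertMax_apply, swap_apply_def, h]

@[simp] lemma insertMax_some_last (k : Fin m) :
    insertMax m (some k, π) (Fin.last m) = k.castSucc := by
  simp [insertMax_apply]

@[simp] lemma insertMax_none_symm_castSucc (i : Fin m) :
    (insertMax m (none, π)).symm i.castSucc = (π.symm i).castSucc := by
  simp [symm_apply_eq]

@[simp] lemma insertMax_none_symm_last :
    (insertMax m (none, π)).symm (Fin.last m) = Fin.last m := by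
  simp [symm_apply_eq]

@[simp] lemma insertMax_some_symm_castSucc (k i : Fin m) :
    (insertMax m (some k, π)).symm i.castSucc =
      if i = k then Fin.last m else (π.symm i).castSucc := by
  split_ifs with h <;> simp [symm_apply_eq, h]

@[simp] lemma insertMax_some_symm_last (k : Fin m) :
    (insertMax m (some k, π)).symm (Fin.last m) = (π.symm k).castSucc := by
  simp [symm_apply_eq]

variable {π}

lemma castSucc_mem_cyclePeaks_insertMax_none (i : Fin m) :
    i.castSucc ∈ cyclePeaks Q (insertMax m (none, π)) ↔ i ∈ cyclePeaks Q π := by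
  simp

lemma last_notMem_cyclePeaks_insertMax_none :
    Fin.last m ∉ cyclePeaks Q (insertMax m (none, π)) := by
  simp

lemma castSucc_mem_cyclePeaks_insertMax_some (k i : Fin m) :
    i.castSucc ∈ cyclePeaks Q (insertMax m (some k, π)) ↔
      i ∈ cyclePeaks Q π \ {k, π.symm k} := by
  have hlast (j : Fin m) : ¬ Fin.last m < j.castSucc := not_lt.2 (Fin.le_last _)
  by_cases hik : i = k
  · simp [hik, hlast]
  by_cases hpi : π i = k
  · subst hpi
    simp [hik, hlast]
  · simp [hik, hpi, eq_symm_apply]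

lemma last_mem_cyclePeaks_insertMax_some (k : Fin m) :
    Fin.last m ∈ cyclePeaks Q (insertMax m (some k, π)) ↔ Q (m + 1) := by
  simp [Fin.castSucc_lt_last]

variable (Q π)

lemma card_cyclePeaks_insertMax_none :
    #(cyclePeaks Q (insertMax m (none, π))) = #(cyclePeaks Q π) := by
  rw [Fin.card_eq_card_filter_castSucc_add]
  simp only [castSucc_mem_cyclePeaks_insertMax_none, last_notMem_cyclePeaks_insertMax_none,
    if_false, add_zero, filter_univ_mem]

lemma card_cyclePeaks_insertMax_some (k : Fin m) :
    #(cyclePeaks Q (insertMax m (some k, π))) + (if k ∈ peakSlots Q π then 1 else 0) =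
      #(cyclePeaks Q π) + if Q (m + 1) then 1 else 0 := by
  have hslot : #({k, π.symm k} ∩ cyclePeaks Q π) = if k ∈ peakSlots Q π then 1 else 0 := by
    by_cases hk : k ∈ cyclePeaks Q π
    · have hk' : π.symm k ∉ cyclePeaks Q π := fun h => notMem_cyclePeaks_of_symm_mem h hk
      simp [insert_inter_of_mem hk, singleton_inter_of_notMem hk', mem_peakSlots, hk]
    by_cases hk' : π.symm k ∈ cyclePeaks Q π
    · simp [insert_inter_of_notMem hk, singleton_inter_of_mem hk', mem_peakSlots, hk']
    · simp [insert_inter_of_notMem hk, singleton_inter_of_notMem hk', mem_peakSlots, hk, hk']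
  rw [Fin.card_eq_card_filter_castSucc_add, ← hslot]
  simp only [castSucc_mem_cyclePeaks_insertMax_some, last_mem_cyclePeaks_insertMax_some,
    filter_univ_mem]
  rw [← card_sdiff_add_card_inter (cyclePeaks Q π) {k, π.symm k}, inter_comm]
  omega

end CyclePeaks

/-- The exponent vector of `M * (x y z) / X v ^ 2` for the monomial `M` with exponents `s`. -/
noncomputable def shiftExp (v : Fin 3) (s : Fin 3 →₀ ℕ) : Fin 3 →₀ ℕ :=
  Finsupp.equivFunOnFinite.symm fun w => if w = v then s w - 1 else s w + 1

@[simp] lemma shiftExp_apply (v w : Fin 3) (s : Fin 3 →₀ ℕ) :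
    shiftExp v s w = if w = v then s w - 1 else s w + 1 := rfl

lemma DJ_monomial (s : Fin 3 →₀ ℕ) :
    DJ (monomial s 1) = ∑ v, s v • monomial (shiftExp v s) 1 := by
  have hX (v : Fin 3) : (![X 1 * X 2, X 0 * X 2, X 0 * X 1] v : MvPolynomial (Fin 3) ℤ) =
      monomial (shiftExp v 0) 1 := by
    fin_cases v <;> simp only [X, monomial_mul, mul_one] <;>
      exact congrArg (monomial · 1) (Finsupp.ext fun w => by fin_cases w <;> simp)
  rw [DJ, mkDerivation_monomial, one_smul, Finsupp.sum_fintype _ _ (by simp)]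
  refine Finset.sum_congr rfl fun v _ => ?_
  rw [hX, smul_eq_mul, monomial_mul, mul_one, ← nsmul_one, ← smul_monomial]
  rcases Nat.eq_zero_or_pos (s v) with h | h
  · simp [h]
  suffices hs : (s - .single v 1) + shiftExp v 0 = shiftExp v s by rw [hs]
  ext w
  simp only [Finsupp.coe_add, Finsupp.coe_tsub, Pi.add_apply, Pi.sub_apply, shiftExp_apply,
    Finsupp.single_apply, Finsupp.coe_zero, Pi.zero_apply]
  split_ifs <;> omega

section PeakExponent

variable {m : ℕ} (π : Perm (Fin m))

noncomputable def peakExp : Fin 3 →₀ ℕ :=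
  Finsupp.single 0 (2 * #(cyclePeaks Odd π) + if Even m then 1 else 0) +
    Finsupp.single 1 (2 * #(cyclePeaks Even π) + if Odd m then 1 else 0) +
    Finsupp.single 2 (m - 2 * #(cyclePeaks Odd π) - 2 * #(cyclePeaks Even π))

/-- The variable whose exponent drops when `m + 1` is inserted into slot `c` of `π`. -/
def slotVar : Option (Fin m) → Fin 3
  | none => if Even m then 0 else 1
  | some k => if k ∈ peakSlots Odd π then 0 else if k ∈ peakSlots Even π then 1 else 2

lemma peakExp_insertMax (c : Option (Fin m)) :
    peakExp (insertMax m (c, π)) = shiftExp (slotVar π c) (peakExp π) := by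
  have hle := card_cyclePeaks_odd_add_even_le π
  ext w
  cases c with
  | none =>
    by_cases hm : Even m <;> fin_cases w <;>
      simp [peakExp, slotVar, hm, ← Nat.not_even_iff_odd, card_cyclePeaks_insertMax_none,
        Nat.even_add_one] <;>
      omega
  | some k =>
    have hO := card_cyclePeaks_insertMax_some Odd π k
    have hE := card_cyclePeaks_insertMax_some Even π k
    obtain ⟨hA, hB⟩ | ⟨hA, hB⟩ | ⟨hA, hB⟩ :
        (k ∈ peakSlots Odd π ∧ k ∉ peakSlots Even π) ∨
        (k ∉ peakSlots Odd π ∧ k ∈ peakSlots Even π) ∨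
        (k ∉ peakSlots Odd π ∧ k ∉ peakSlots Even π) := by
      have : k ∈ peakSlots Odd π → k ∉ peakSlots Even π :=
        fun h => disjoint_left.1 (disjoint_peakSlots_odd_even π) h
      tauto
    all_goals by_cases hm : Even m <;> fin_cases w <;>
      simp [peakExp, slotVar, hA, hB, hm, ← Nat.not_even_iff_odd, Nat.even_add_one] at hO hE ⊢ <;>
      omega

lemma filter_slotVar_some_eq_zero :
    ({k | slotVar π (some k) = 0} : Finset (Fin m)) = peakSlots Odd π := by
  ext k
  rw [mem_filter_univ]
  dsimp only [slotVar]
  split_ifs <;> simp_all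

lemma filter_slotVar_some_eq_one :
    ({k | slotVar π (some k) = 1} : Finset (Fin m)) = peakSlots Even π := by
  have := disjoint_left.1 (disjoint_peakSlots_odd_even π)
  ext k
  rw [mem_filter_univ]
  dsimp only [slotVar]
  split_ifs <;> simp_all

lemma filter_slotVar_some_eq_two :
    ({k | slotVar π (some k) = 2} : Finset (Fin m)) = (peakSlots Odd π ∪ peakSlots Even π)ᶜ := by
  ext k
  rw [mem_filter_univ, mem_compl, mem_union]
  dsimp only [slotVar]
  split_ifs <;> simp_all

lemma card_slotVar_fiber (v : Fin 3) : #{c | slotVar π c = v} = peakExp π v := by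
  have hA := card_peakSlots (Q := Odd) (π := π)
  have hB := card_peakSlots (Q := Even) (π := π)
  have hle := card_cyclePeaks_odd_add_even_le π
  rw [card_filter, Fintype.sum_option, ← card_filter]
  match v with
  | 0 =>
    rw [filter_slotVar_some_eq_zero, hA]
    by_cases hm : Even m <;> simp [peakExp, slotVar, hm, add_comm]
  | 1 =>
    rw [filter_slotVar_some_eq_one, hB]
    by_cases hm : Even m <;> simp [peakExp, slotVar, hm, add_comm, ← Nat.not_even_iff_odd]
  | 2 =>
    rw [filter_slotVar_some_eq_two, card_compl,
      card_union_of_disjoint (disjoint_peakSlots_odd_even π), hA, hB, Fintype.card_fin]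
    by_cases hm : Even m <;> simp [peakExp, slotVar, hm] <;> omega

lemma DJ_monomial_peakExp :
    DJ (monomial (peakExp π) 1) = ∑ c, monomial (peakExp (insertMax m (c, π))) 1 := by
  calc DJ (monomial (peakExp π) 1)
      = ∑ v, ∑ c with slotVar π c = v, monomial (shiftExp v (peakExp π)) 1 := by
        simp only [DJ_monomial, sum_const, card_slotVar_fiber]
    _ = ∑ v, ∑ c with slotVar π c = v, monomial (shiftExp (slotVar π c) (peakExp π)) 1 :=
        sum_congr rfl fun v _ => sum_congr rfl fun c hc => by rw [(mem_filter.1 hc).2]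
    _ = ∑ c, monomial (peakExp (insertMax m (c, π))) 1 := by
        simp only [sum_fiberwise, peakExp_insertMax]

lemma peakExp_eq_iff_of_even (hm : Even m) (i j : ℕ) :
    peakExp π = Finsupp.single 0 (2 * i + 1) + Finsupp.single 1 (2 * j) +
        Finsupp.single 2 (m - 2 * i - 2 * j) ↔ cpko m π = i ∧ cpke m π = j := by
  rw [cpko_eq_card_cyclePeaks, cpke_eq_card_cyclePeaks]
  constructor
  · intro h
    have h0 := congr($h 0)
    have h1 := congr($h 1)
    simp [peakExp, hm, ← Nat.not_even_iff_odd] at h0 h1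
    omega
  · rintro ⟨rfl, rfl⟩
    simp [peakExp, hm, ← Nat.not_even_iff_odd]

end PeakExponent

lemma iterate_DJ_X_zero (m : ℕ) :
    DJ^[m] (X 0) = ∑ π : Perm (Fin m), monomial (peakExp π) 1 := by
  induction m with
  | zero => simp [peakExp, X, cyclePeaks]
  | succ m ih =>
    rw [Function.iterate_succ_apply', ih, map_sum]
    simp only [DJ_monomial_peakExp]
    exact (Fintype.sum_prod_type_right' _).symm.trans
      ((insertMax m).sum_comp fun σ => monomial (peakExp σ) 1)

theorem stmt7_general (n : ℕ) (i j : ℕ) :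
    MvPolynomial.coeff
        (Finsupp.single (0 : Fin 3) (2 * i + 1) + Finsupp.single (1 : Fin 3) (2 * j) +
          Finsupp.single (2 : Fin 3) (2 * n - 2 * i - 2 * j))
        ((fun p => DJ p)^[2 * n] (X 0)) =
      ((Finset.univ.filter fun π : Equiv.Perm (Fin (2 * n)) =>
          cpko (2 * n) π = i ∧ cpke (2 * n) π = j).card : ℤ) := by
  rw [iterate_DJ_X_zero, coeff_sum]
  simp only [coeff_monomial, peakExp_eq_iff_of_even _ (even_two_mul n)]
  rw [sum_boole]

/-- For `n ≥ 1` and all `i, j ≥ 0`, the coefficient of `x^{2i+1} y^{2j} z^{2n-2i-2j}` in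
`D_J^{2n}(x)` equals the number of permutations `π` of `[2n]` with `cpk^o(π) = i` and
`cpk^e(π) = j`. -/
theorem stmt7 (n : ℕ) (hn : 1 ≤ n) (i j : ℕ) :
    MvPolynomial.coeff
        (Finsupp.single (0 : Fin 3) (2 * i + 1) + Finsupp.single (1 : Fin 3) (2 * j) +
          Finsupp.single (2 : Fin 3) (2 * n - 2 * i - 2 * j))
        ((fun p => DJ p)^[2 * n] (X 0)) =
      ((Finset.univ.filter fun π : Equiv.Perm (Fin (2 * n)) =>
          cpko (2 * n) π = i ∧ cpke (2 * n) π = j).card : ℤ) :=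
  stmt7_general n i j
end

section
/- For every n ≥ 0 and all i, j ≥ 0, the coefficient of the monomial x^{2i} y^{2j+1} z^{2n−2i−2j+1} in D_J^{2n+1}(x) (an element of the polynomial ring ℤ[x,y,z]) equals the number of permutations π of [2n+1] with cpk^o(π) = i and cpk^e(π) = j. -/
open Finset MvPolynomial

lemma coeff_pderiv {σ : Type*} [DecidableEq σ] (k : σ) (s : σ →₀ ℕ) (p : MvPolynomial σ ℤ) :
    coeff s (pderiv k p) = (s k + 1) * coeff (s + Finsupp.single k 1) p := by
  induction p using MvPolynomial.induction_on' with
  | monomial t a =>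
    rw [pderiv_monomial, coeff_monomial, coeff_monomial]
    by_cases h : t = s + Finsupp.single k 1
    · subst h
      rw [if_pos (add_tsub_cancel_right _ _), if_pos rfl]
      simp [mul_comm]
    · rw [if_neg h]
      split_ifs with h2
      · rcases Nat.eq_zero_or_pos (t k) with h0 | h0
        · simp [h0]
        · exact absurd (by rw [← h2, tsub_add_cancel_of_le (Finsupp.single_le_iff.mpr h0)]) h
      · ring
  | add p q hp hq => simp only [map_add, coeff_add, hp, hq]; ring

lemma DJ_apply (p : MvPolynomial (Fin 3) ℤ) :
    DJ p = X 1 * X 2 * pderiv 0 p + X 0 * X 2 * pderiv 1 p + X 0 * X 1 * pderiv 2 p := by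
  have h : DJ = (X 1 * X 2 : MvPolynomial (Fin 3) ℤ) • (pderiv 0)
      + (X 0 * X 2 : MvPolynomial (Fin 3) ℤ) • pderiv 1
      + (X 0 * X 1 : MvPolynomial (Fin 3) ℤ) • pderiv 2 := by
    apply MvPolynomial.derivation_ext
    intro i
    fin_cases i <;>
      simp [DJ, mkDerivation_X, pderiv_X_self, pderiv_X_of_ne, smul_eq_mul]
  rw [h]
  simp [smul_eq_mul, mul_comm]

variable {m : ℕ}

/-- Insert the new largest element into σ; `none` means as a fixed point,
`some k` means just before `k` in its cycle. -/
def ins (m : ℕ) (o : Option (Fin m)) (σ : Equiv.Perm (Fin m)) : Equiv.Perm (Fin (m+1)) :=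
  (Equiv.permCongr finSuccEquivLast.symm) (Equiv.swap none o * σ.optionCongr)

lemma ins_apply (o : Option (Fin m)) (σ : Equiv.Perm (Fin m)) (x : Fin (m+1)) :
    ins m o σ x = finSuccEquivLast.symm (Equiv.swap none o ((finSuccEquivLast x).map σ)) := by
  simp [ins, Equiv.permCongr_apply, Equiv.Perm.mul_apply, Equiv.optionCongr_apply]

lemma ins_none_castSucc (σ : Equiv.Perm (Fin m)) (i : Fin m) :
    ins m none σ i.castSucc = (σ i).castSucc := by
  simp [ins_apply]

lemma ins_none_last (σ : Equiv.Perm (Fin m)) :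
    ins m none σ (Fin.last m) = Fin.last m := by
  simp [ins_apply]

lemma ins_some_castSucc (k : Fin m) (σ : Equiv.Perm (Fin m)) (i : Fin m) :
    ins m (some k) σ i.castSucc =
      if σ i = k then Fin.last m else (σ i).castSucc := by
  rw [ins_apply]
  by_cases h : σ i = k
  · simp [h, Equiv.swap_apply_right]
  · rw [finSuccEquivLast_castSucc, Option.map_some, Equiv.swap_apply_of_ne_of_ne (by simp)
      (by simpa using h), if_neg h, finSuccEquivLast_symm_some]

lemma ins_some_last (k : Fin m) (σ : Equiv.Perm (Fin m)) :
    ins m (some k) σ (Fin.last m) = k.castSucc := by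
  simp [ins_apply, Equiv.swap_apply_left]

lemma ins_none_symm_castSucc (σ : Equiv.Perm (Fin m)) (i : Fin m) :
    (ins m none σ).symm i.castSucc = (σ.symm i).castSucc := by
  rw [Equiv.symm_apply_eq, ins_none_castSucc, Equiv.apply_symm_apply]

lemma ins_none_symm_last (σ : Equiv.Perm (Fin m)) :
    (ins m none σ).symm (Fin.last m) = Fin.last m := by
  rw [Equiv.symm_apply_eq, ins_none_last]

lemma ins_some_symm_castSucc (k : Fin m) (σ : Equiv.Perm (Fin m)) (i : Fin m) (h : i ≠ k) :
    (ins m (some k) σ).symm i.castSucc = (σ.symm i).castSucc := by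
  rw [Equiv.symm_apply_eq, ins_some_castSucc, if_neg (by simpa using h), Equiv.apply_symm_apply]

lemma ins_some_symm_castSucc_self (k : Fin m) (σ : Equiv.Perm (Fin m)) :
    (ins m (some k) σ).symm k.castSucc = Fin.last m := by
  rw [Equiv.symm_apply_eq, ins_some_last]

lemma ins_some_symm_last (k : Fin m) (σ : Equiv.Perm (Fin m)) :
    (ins m (some k) σ).symm (Fin.last m) = (σ.symm k).castSucc := by
  rw [Equiv.symm_apply_eq, ins_some_castSucc, if_pos (Equiv.apply_symm_apply _ _)]

/-- the peak predicate -/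
def Pk (σ : Equiv.Perm (Fin m)) (i : Fin m) : Prop := σ.symm i < i ∧ σ i < i

instance (σ : Equiv.Perm (Fin m)) (i : Fin m) : Decidable (Pk σ i) := by unfold Pk; infer_instance

lemma pk_ins_none_castSucc (σ : Equiv.Perm (Fin m)) (i : Fin m) :
    Pk (ins m none σ) i.castSucc ↔ Pk σ i := by
  unfold Pk
  rw [ins_none_castSucc, ins_none_symm_castSucc, Fin.castSucc_lt_castSucc_iff,
    Fin.castSucc_lt_castSucc_iff]

lemma pk_ins_none_last (σ : Equiv.Perm (Fin m)) : ¬ Pk (ins m none σ) (Fin.last m) := by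
  unfold Pk
  rw [ins_none_last]
  simp

lemma pk_ins_some_last (k : Fin m) (σ : Equiv.Perm (Fin m)) :
    Pk (ins m (some k) σ) (Fin.last m) := by
  unfold Pk
  rw [ins_some_last, ins_some_symm_last]
  exact ⟨Fin.castSucc_lt_last _, Fin.castSucc_lt_last _⟩

lemma pk_ins_some_castSucc (k : Fin m) (σ : Equiv.Perm (Fin m)) (i : Fin m) :
    Pk (ins m (some k) σ) i.castSucc ↔ (i ≠ k ∧ i ≠ σ.symm k ∧ Pk σ i) := by
  unfold Pk
  constructor
  · rintro ⟨h1, h2⟩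
    by_cases hk : i = k
    · subst hk
      rw [ins_some_symm_castSucc_self] at h1
      exact absurd h1 (not_lt.2 (Fin.castSucc_lt_last _).le)
    by_cases hk2 : i = σ.symm k
    · subst hk2
      rw [ins_some_castSucc, if_pos (Equiv.apply_symm_apply _ _)] at h2
      exact absurd h2 (not_lt.2 (Fin.castSucc_lt_last _).le)
    refine ⟨hk, hk2, ?_, ?_⟩
    · rw [ins_some_symm_castSucc _ _ _ hk, Fin.castSucc_lt_castSucc_iff] at h1; exact h1
    · rw [ins_some_castSucc, if_neg (fun hc => hk2 (by rw [← hc, Equiv.symm_apply_apply])),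
        Fin.castSucc_lt_castSucc_iff] at h2
      exact h2
  · rintro ⟨hk, hk2, h1, h2⟩
    constructor
    · rw [ins_some_symm_castSucc _ _ _ hk, Fin.castSucc_lt_castSucc_iff]; exact h1
    · rw [ins_some_castSucc, if_neg (fun hc => hk2 (by rw [← hc, Equiv.symm_apply_apply])),
        Fin.castSucc_lt_castSucc_iff]
      exact h2

/-- generalized cycle-peak counter -/
def pkc (Q : ℕ → Prop) [DecidablePred Q] (σ : Equiv.Perm (Fin m)) : ℕ :=
  ∑ i : Fin m, if Pk σ i ∧ Q ((i : ℕ) + 1) then 1 else 0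

lemma cpko_eq_pkc (n : ℕ) (π : Equiv.Perm (Fin n)) : cpko n π = pkc Odd π := by
  rw [cpko, pkc, Finset.card_filter]
  exact Finset.sum_congr rfl fun i _ => if_congr (by rw [Pk, and_assoc]) rfl rfl

lemma cpke_eq_pkc (n : ℕ) (π : Equiv.Perm (Fin n)) : cpke n π = pkc Even π := by
  rw [cpke, pkc, Finset.card_filter]
  exact Finset.sum_congr rfl fun i _ => if_congr (by rw [Pk, and_assoc]) rfl rfl

lemma pk_excl (σ : Equiv.Perm (Fin m)) (k : Fin m) : ¬ (Pk σ k ∧ Pk σ (σ.symm k)) := by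
  rintro ⟨⟨h1, -⟩, ⟨-, h4⟩⟩
  rw [Equiv.apply_symm_apply] at h4
  exact absurd h1 (not_lt.2 h4.le)

/-- indicator of destruction -/
def dQ (Q : ℕ → Prop) [DecidablePred Q] (σ : Equiv.Perm (Fin m)) (k : Fin m) : ℕ :=
  (if Pk σ k ∧ Q ((k : ℕ) + 1) then 1 else 0)
    + (if Pk σ (σ.symm k) ∧ Q (((σ.symm k : Fin m) : ℕ) + 1) then 1 else 0)

lemma sq_ins_none (Q : ℕ → Prop) [DecidablePred Q] (σ : Equiv.Perm (Fin m)) :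
    pkc Q (ins m none σ) = pkc Q σ := by
  rw [pkc, Fin.sum_univ_castSucc]
  have h1 : (if Pk (ins m none σ) (Fin.last m) ∧ Q (((Fin.last m : Fin (m+1)) : ℕ) + 1)
      then 1 else 0) = 0 := by
    rw [if_neg]; rintro ⟨h, -⟩; exact pk_ins_none_last σ h
  rw [h1, add_zero, pkc]
  refine Finset.sum_congr rfl fun i _ => if_congr ?_ rfl rfl
  rw [pk_ins_none_castSucc, Fin.coe_castSucc]

lemma sq_ins_some (Q : ℕ → Prop) [DecidablePred Q] (k : Fin m) (σ : Equiv.Perm (Fin m)) :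
    pkc Q (ins m (some k) σ) + dQ Q σ k = (if Q (m + 1) then 1 else 0) + pkc Q σ := by
  rw [pkc, Fin.sum_univ_castSucc]
  have h1 : (if Pk (ins m (some k) σ) (Fin.last m) ∧ Q (((Fin.last m : Fin (m+1)) : ℕ) + 1)
      then 1 else 0) = if Q (m + 1) then 1 else 0 := by
    rw [if_congr (iff_of_eq (by rw [eq_true (pk_ins_some_last k σ), true_and, Fin.val_last]))
      rfl rfl]
  rw [h1]
  have h2 : ∀ i : Fin m, (if Pk σ i ∧ Q ((i : ℕ) + 1) then 1 else 0) =
      (if Pk (ins m (some k) σ) i.castSucc ∧ Q (((i.castSucc : Fin (m+1)) : ℕ) + 1) then 1 else 0)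
      + (if (i = k ∨ i = σ.symm k) ∧ Pk σ i ∧ Q ((i : ℕ) + 1) then 1 else 0) := by
    intro i
    have hiff : (Pk (ins m (some k) σ) i.castSucc ∧ Q (((i.castSucc : Fin (m+1)) : ℕ) + 1)) ↔
        ((i ≠ k ∧ i ≠ σ.symm k ∧ Pk σ i) ∧ Q ((i : ℕ) + 1)) := by
      rw [pk_ins_some_castSucc, Fin.coe_castSucc]
    rw [if_congr hiff rfl rfl]
    split_ifs <;> first | omega | (exfalso; tauto)
  have h3 : pkc Q σ
      = (∑ i : Fin m, if Pk (ins m (some k) σ) i.castSucc ∧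
          Q (((i.castSucc : Fin (m+1)) : ℕ) + 1) then 1 else 0)
        + ∑ i : Fin m, (if (i = k ∨ i = σ.symm k) ∧ Pk σ i ∧ Q ((i : ℕ) + 1) then 1 else 0) := by
    rw [pkc, ← Finset.sum_add_distrib]
    exact Finset.sum_congr rfl fun i _ => h2 i
  have h4 : (∑ i : Fin m, if (i = k ∨ i = σ.symm k) ∧ Pk σ i ∧ Q ((i : ℕ) + 1) then 1 else 0)
      = dQ Q σ k := by
    rcases eq_or_ne k (σ.symm k) with hfix | hne
    · have hσk : σ k = k := by conv_lhs => rw [hfix, Equiv.apply_symm_apply]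
      have hnp : ¬ Pk σ k := fun h => absurd h.2 (by rw [hσk]; exact lt_irrefl _)
      have : ∀ i : Fin m, (if (i = k ∨ i = σ.symm k) ∧ Pk σ i ∧ Q ((i : ℕ) + 1) then 1 else 0)
          = 0 := by
        intro i
        rw [if_neg]
        rintro ⟨hi, hp, -⟩
        rcases hi with rfl | rfl
        · exact hnp hp
        · rw [← hfix] at hp; exact hnp hp
      rw [Finset.sum_congr rfl fun i _ => this i, Finset.sum_const, smul_zero, dQ,
        if_neg (fun h => hnp h.1), if_neg (fun h => hnp (by rw [← hfix] at h; exact h.1)),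
        add_zero]
    · rw [← Finset.sum_subset (Finset.subset_univ ({k, σ.symm k} : Finset (Fin m)))
        (fun x _ hx => by
          rw [if_neg]
          rintro ⟨hi, -⟩
          exact hx (by rcases hi with rfl | rfl <;> simp)),
        Finset.sum_pair hne, dQ]
      congr 1
      · exact if_congr (by tauto) rfl rfl
      · exact if_congr (by tauto) rfl rfl
  rw [h4] at h3
  rw [h3]
  ring

lemma ind_parity (P : Prop) [Decidable P] (x : ℕ) :
    (if P ∧ Odd x then 1 else 0) + (if P ∧ Even x then 1 else 0) = if P then 1 else 0 := by
  by_cases hP : P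
  · by_cases hO : Odd x
    · simp [hP, hO, Nat.not_even_iff_odd.mpr hO]
    · simp [hP, hO, Nat.not_odd_iff_even.mp hO]
  · simp [hP]

lemma dsum (σ : Equiv.Perm (Fin m)) (k : Fin m) :
    dQ Odd σ k + dQ Even σ k
      = (if Pk σ k then 1 else 0) + (if Pk σ (σ.symm k) then 1 else 0) := by
  rw [dQ, dQ, add_add_add_comm]
  rw [ind_parity, ind_parity]

lemma dsum_le (σ : Equiv.Perm (Fin m)) (k : Fin m) : dQ Odd σ k + dQ Even σ k ≤ 1 := by
  rw [dsum]
  by_cases h1 : Pk σ k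
  · by_cases h2 : Pk σ (σ.symm k)
    · exact absurd ⟨h1, h2⟩ (pk_excl σ k)
    · simp [h1, h2]
  · by_cases h2 : Pk σ (σ.symm k) <;> simp [h1, h2]

lemma sum_dQ (Q : ℕ → Prop) [DecidablePred Q] (σ : Equiv.Perm (Fin m)) :
    ∑ k : Fin m, dQ Q σ k = 2 * pkc Q σ := by
  rw [two_mul]
  unfold dQ
  rw [Finset.sum_add_distrib]
  congr 1
  exact Equiv.sum_comp σ.symm
    (fun i : Fin m => if Pk σ i ∧ Q ((i : ℕ) + 1) then 1 else 0)

lemma sum_complement (σ : Equiv.Perm (Fin m)) :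
    ∑ k : Fin m, (1 - dQ Odd σ k - dQ Even σ k)
      = m - 2 * pkc Odd σ - 2 * pkc Even σ := by
  have h : ∑ k : Fin m, ((1 - dQ Odd σ k - dQ Even σ k) + (dQ Odd σ k + dQ Even σ k))
      = (m : ℕ) := by
    rw [Finset.sum_congr rfl (fun k _ => by have := dsum_le σ k; omega : ∀ k ∈ univ,
      (1 - dQ Odd σ k - dQ Even σ k) + (dQ Odd σ k + dQ Even σ k) = 1)]
    simp
  rw [Finset.sum_add_distrib, Finset.sum_add_distrib, sum_dQ, sum_dQ] at h
  omega

lemma cpko_ins_none (σ : Equiv.Perm (Fin m)) :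
    cpko (m+1) (ins m none σ) = cpko m σ := by
  rw [cpko_eq_pkc, cpko_eq_pkc, sq_ins_none]

lemma cpke_ins_none (σ : Equiv.Perm (Fin m)) :
    cpke (m+1) (ins m none σ) = cpke m σ := by
  rw [cpke_eq_pkc, cpke_eq_pkc, sq_ins_none]

lemma count_k (σ : Equiv.Perm (Fin m)) (i j : ℕ) :
    (univ.filter fun k : Fin m => cpko (m+1) (ins m (some k) σ) = i ∧
        cpke (m+1) (ins m (some k) σ) = j).card
    = (if i + 1 = (if Odd (m+1) then 1 else 0) + cpko m σ ∧
          j = (if Even (m+1) then 1 else 0) + cpke m σ then 2 * cpko m σ else 0)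
      + (if i = (if Odd (m+1) then 1 else 0) + cpko m σ ∧
          j + 1 = (if Even (m+1) then 1 else 0) + cpke m σ then 2 * cpke m σ else 0)
      + (if i = (if Odd (m+1) then 1 else 0) + cpko m σ ∧
          j = (if Even (m+1) then 1 else 0) + cpke m σ then
            m - 2 * cpko m σ - 2 * cpke m σ else 0) := by
  rw [Finset.card_filter]
  have key : ∀ k : Fin m, (if cpko (m+1) (ins m (some k) σ) = i ∧
      cpke (m+1) (ins m (some k) σ) = j then 1 else 0)
      = (if i + 1 = (if Odd (m+1) then 1 else 0) + cpko m σ ∧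
            j = (if Even (m+1) then 1 else 0) + cpke m σ then dQ Odd σ k else 0)
        + (if i = (if Odd (m+1) then 1 else 0) + cpko m σ ∧
            j + 1 = (if Even (m+1) then 1 else 0) + cpke m σ then dQ Even σ k else 0)
        + (if i = (if Odd (m+1) then 1 else 0) + cpko m σ ∧
            j = (if Even (m+1) then 1 else 0) + cpke m σ then
              1 - dQ Odd σ k - dQ Even σ k else 0) := by
    intro k
    have e1 := sq_ins_some Odd k σ
    have e2 := sq_ins_some Even k σ
    rw [← cpko_eq_pkc, ← cpko_eq_pkc] at e1
    rw [← cpke_eq_pkc, ← cpke_eq_pkc] at e2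
    have hle := dsum_le σ k
    have hA : (if Odd (m+1) then 1 else 0) + (if Even (m+1) then 1 else 0) = 1 := by
      by_cases h : Odd (m+1)
      · simp [h, Nat.not_even_iff_odd.mpr h]
      · simp [h, Nat.not_odd_iff_even.mp h]
    obtain ⟨A1, hA1⟩ : ∃ a, (if Odd (m+1) then (1:ℕ) else 0) = a := ⟨_, rfl⟩
    obtain ⟨A2, hA2⟩ : ∃ a, (if Even (m+1) then (1:ℕ) else 0) = a := ⟨_, rfl⟩
    simp only [hA1, hA2] at e1 e2 hA ⊢
    split_ifs <;> omega
  rw [Finset.sum_congr rfl (fun k _ => key k), Finset.sum_add_distrib, Finset.sum_add_distrib]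
  have sumif : ∀ (c : Prop) [Decidable c] (f : Fin m → ℕ),
      (∑ k : Fin m, if c then f k else 0) = if c then ∑ k : Fin m, f k else 0 := by
    intro c _ f
    split_ifs <;> simp
  rw [sumif, sumif, sumif, sum_dQ, sum_dQ, sum_complement,
    ← cpko_eq_pkc, ← cpke_eq_pkc]

def Nc (m i j : ℕ) : ℕ :=
  (univ.filter fun σ : Equiv.Perm (Fin m) => cpko m σ = i ∧ cpke m σ = j).card

lemma sum_cond (i' j' C : ℕ) :
    (∑ σ : Equiv.Perm (Fin m), if cpko m σ = i' ∧ cpke m σ = j' then C else 0)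
      = C * Nc m i' j' := by
  rw [Nc, ← Finset.sum_filter, Finset.sum_const, smul_eq_mul, mul_comm]

lemma Nc_succ (i j : ℕ) :
    Nc (m+1) i j = ∑ σ : Equiv.Perm (Fin m),
      ((if cpko m σ = i ∧ cpke m σ = j then 1 else 0)
        + (univ.filter fun k : Fin m => cpko (m+1) (ins m (some k) σ) = i ∧
            cpke (m+1) (ins m (some k) σ) = j).card) := by
  set ε : Option (Fin m) × Equiv.Perm (Fin m) ≃ Equiv.Perm (Fin (m+1)) :=
    Equiv.Perm.decomposeOption.symm.trans (Equiv.permCongr finSuccEquivLast.symm) with hε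
  have happ : ∀ x : Option (Fin m) × Equiv.Perm (Fin m), ε x = ins m x.1 x.2 := fun x => rfl
  have hcard : Nc (m+1) i j = ((univ : Finset (Option (Fin m) × Equiv.Perm (Fin m))).filter
      (fun x => cpko (m+1) (ins m x.1 x.2) = i ∧ cpke (m+1) (ins m x.1 x.2) = j)).card := by
    rw [Nc]
    refine (Finset.card_equiv ε ?_).symm
    intro x
    simp [happ x]
  rw [hcard, Finset.card_filter, Fintype.sum_prod_type, univ_option, Finset.sum_insertNone]
  rw [Finset.sum_comm]
  rw [← Finset.sum_add_distrib]
  refine Finset.sum_congr rfl fun σ _ => ?_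
  congr 1
  · exact if_congr (by rw [cpko_ins_none, cpke_ins_none]) rfl rfl
  · rw [Finset.card_filter]

lemma pk_card_le (σ : Equiv.Perm (Fin m)) : 2 * (cpko m σ + cpke m σ) ≤ m := by
  have hsplit : cpko m σ + cpke m σ = (univ.filter fun i : Fin m => Pk σ i).card := by
    rw [cpko_eq_pkc, cpke_eq_pkc, pkc, pkc, ← Finset.sum_add_distrib,
      Finset.card_filter]
    exact Finset.sum_congr rfl fun i _ => ind_parity _ _
  have hinj : (univ.filter fun i : Fin m => Pk σ i).card
      ≤ (univ.filter fun i : Fin m => ¬ Pk σ i).card := by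
    refine Finset.card_le_card_of_injOn σ ?_ ?_
    · intro a ha
      rw [Finset.mem_coe, Finset.mem_filter] at ha ⊢
      refine ⟨Finset.mem_univ _, fun hp => ?_⟩
      have h1 : σ.symm (σ a) < σ a := hp.1
      rw [Equiv.symm_apply_apply] at h1
      exact absurd h1 (not_lt.2 ha.2.2.le)
    · exact fun a _ b _ h => σ.injective h
  have htot := Finset.card_filter_add_card_filter_not
    (s := (univ : Finset (Fin m))) (p := fun i : Fin m => Pk σ i)
  rw [Finset.card_univ, Fintype.card_fin] at htot
  omega

lemma Nc_zero {i j : ℕ} (h : m < 2*(i+j)) : Nc m i j = 0 := by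
  rw [Nc, Finset.card_eq_zero, Finset.filter_eq_empty_iff]
  rintro σ - ⟨h1, h2⟩
  have := pk_card_le σ
  omega

lemma Nc_odd_zero (h : Odd (m+1)) (j : ℕ) : Nc (m+1) 0 j = Nc m 0 j := by
  have h1 : (if Odd (m+1) then (1:ℕ) else 0) = 1 := if_pos h
  have h2 : (if Even (m+1) then (1:ℕ) else 0) = 0 :=
    if_neg (by rwa [← Nat.not_odd_iff_even, not_not])
  rw [Nc_succ]
  have key : ∀ σ : Equiv.Perm (Fin m),
      ((if cpko m σ = 0 ∧ cpke m σ = j then 1 else 0)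
        + (univ.filter fun k : Fin m => cpko (m+1) (ins m (some k) σ) = 0 ∧
            cpke (m+1) (ins m (some k) σ) = j).card)
      = if cpko m σ = 0 ∧ cpke m σ = j then 1 else 0 := by
    intro σ
    rw [count_k, h1, h2]
    split_ifs <;> omega
  rw [Finset.sum_congr rfl fun σ _ => key σ, sum_cond, one_mul]

lemma Nc_odd_succ (h : Odd (m+1)) (i' j : ℕ) :
    Nc (m+1) (i'+1) j = (2*(i'+1)+1) * Nc m (i'+1) j + (2*(j+1)) * Nc m i' (j+1)
      + (m - 2*i' - 2*j) * Nc m i' j := by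
  have h1 : (if Odd (m+1) then (1:ℕ) else 0) = 1 := if_pos h
  have h2 : (if Even (m+1) then (1:ℕ) else 0) = 0 :=
    if_neg (by rwa [← Nat.not_odd_iff_even, not_not])
  rw [Nc_succ]
  have key : ∀ σ : Equiv.Perm (Fin m),
      ((if cpko m σ = i'+1 ∧ cpke m σ = j then 1 else 0)
        + (univ.filter fun k : Fin m => cpko (m+1) (ins m (some k) σ) = i'+1 ∧
            cpke (m+1) (ins m (some k) σ) = j).card)
      = (if cpko m σ = i'+1 ∧ cpke m σ = j then 2*(i'+1)+1 else 0)
        + ((if cpko m σ = i' ∧ cpke m σ = j+1 then 2*(j+1) else 0)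
          + (if cpko m σ = i' ∧ cpke m σ = j then m - 2*i' - 2*j else 0)) := by
    intro σ
    rw [count_k, h1, h2]
    split_ifs <;> omega
  rw [Finset.sum_congr rfl fun σ _ => key σ, Finset.sum_add_distrib,
    Finset.sum_add_distrib, sum_cond, sum_cond, sum_cond]
  ring

lemma Nc_even_zero (h : Even (m+1)) (i : ℕ) : Nc (m+1) i 0 = Nc m i 0 := by
  have h1 : (if Odd (m+1) then (1:ℕ) else 0) = 0 :=
    if_neg (by rwa [← Nat.not_even_iff_odd, not_not])
  have h2 : (if Even (m+1) then (1:ℕ) else 0) = 1 := if_pos h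
  rw [Nc_succ]
  have key : ∀ σ : Equiv.Perm (Fin m),
      ((if cpko m σ = i ∧ cpke m σ = 0 then 1 else 0)
        + (univ.filter fun k : Fin m => cpko (m+1) (ins m (some k) σ) = i ∧
            cpke (m+1) (ins m (some k) σ) = 0).card)
      = if cpko m σ = i ∧ cpke m σ = 0 then 1 else 0 := by
    intro σ
    rw [count_k, h1, h2]
    split_ifs <;> omega
  rw [Finset.sum_congr rfl fun σ _ => key σ, sum_cond, one_mul]

lemma Nc_even_succ (h : Even (m+1)) (i j' : ℕ) :
    Nc (m+1) i (j'+1) = (2*(j'+1)+1) * Nc m i (j'+1) + (2*(i+1)) * Nc m (i+1) j'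
      + (m - 2*i - 2*j') * Nc m i j' := by
  have h1 : (if Odd (m+1) then (1:ℕ) else 0) = 0 :=
    if_neg (by rwa [← Nat.not_even_iff_odd, not_not])
  have h2 : (if Even (m+1) then (1:ℕ) else 0) = 1 := if_pos h
  rw [Nc_succ]
  have key : ∀ σ : Equiv.Perm (Fin m),
      ((if cpko m σ = i ∧ cpke m σ = j'+1 then 1 else 0)
        + (univ.filter fun k : Fin m => cpko (m+1) (ins m (some k) σ) = i ∧
            cpke (m+1) (ins m (some k) σ) = j'+1).card)
      = (if cpko m σ = i ∧ cpke m σ = j'+1 then 2*(j'+1)+1 else 0)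
        + ((if cpko m σ = i+1 ∧ cpke m σ = j' then 2*(i+1) else 0)
          + (if cpko m σ = i ∧ cpke m σ = j' then m - 2*i - 2*j' else 0)) := by
    intro σ
    rw [count_k, h1, h2]
    split_ifs <;> omega
  rw [Finset.sum_congr rfl fun σ _ => key σ, Finset.sum_add_distrib,
    Finset.sum_add_distrib, sum_cond, sum_cond, sum_cond]
  ring

noncomputable def En (a b c : ℕ) : Fin 3 →₀ ℕ :=
  Finsupp.single 0 a + Finsupp.single 1 b + Finsupp.single 2 c

lemma En_apply_0 (a b c : ℕ) : En a b c 0 = a := by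
  simp [En, Finsupp.single_apply]

lemma En_apply_1 (a b c : ℕ) : En a b c 1 = b := by
  simp [En, Finsupp.single_apply]

lemma En_apply_2 (a b c : ℕ) : En a b c 2 = c := by
  simp [En, Finsupp.single_apply]

lemma En_succ_0 (a b c : ℕ) : En (a+1) b c = Finsupp.single 0 1 + En a b c := by
  ext x; fin_cases x <;> simp [En, Finsupp.single_apply] <;> omega

lemma En_succ_1 (a b c : ℕ) : En a (b+1) c = Finsupp.single 1 1 + En a b c := by
  ext x; fin_cases x <;> simp [En, Finsupp.single_apply] <;> omega

lemma En_succ_2 (a b c : ℕ) : En a b (c+1) = Finsupp.single 2 1 + En a b c := by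
  ext x; fin_cases x <;> simp [En, Finsupp.single_apply] <;> omega

lemma En_add_single_0 (a b c : ℕ) : En a b c + Finsupp.single 0 1 = En (a+1) b c := by
  ext x; fin_cases x <;> simp [En, Finsupp.single_apply] <;> omega

lemma En_add_single_1 (a b c : ℕ) : En a b c + Finsupp.single 1 1 = En a (b+1) c := by
  ext x; fin_cases x <;> simp [En, Finsupp.single_apply] <;> omega

lemma En_add_single_2 (a b c : ℕ) : En a b c + Finsupp.single 2 1 = En a b (c+1) := by
  ext x; fin_cases x <;> simp [En, Finsupp.single_apply] <;> omega

lemma En_eta (s : Fin 3 →₀ ℕ) : En (s 0) (s 1) (s 2) = s := by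
  ext x; fin_cases x <;> simp [En, Finsupp.single_apply] <;> omega

-- term lemmas
variable (p : MvPolynomial (Fin 3) ℤ)

lemma coeff_t0_pos (a b c : ℕ) :
    coeff (En a (b+1) (c+1)) (X 1 * X 2 * pderiv 0 p) = (a+1) * coeff (En (a+1) b c) p := by
  rw [mul_assoc, En_succ_1, coeff_X_mul, En_succ_2, coeff_X_mul, _root_.coeff_pderiv, En_apply_0,
    En_add_single_0]

lemma coeff_t0_b0 (a c : ℕ) : coeff (En a 0 c) (X 1 * X 2 * pderiv 0 p) = 0 := by
  have h : X 1 * X 2 * pderiv 0 p = (X 2 * pderiv 0 p) * X 1 := by ring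
  rw [h, coeff_mul_X', if_neg (by simp [Finsupp.mem_support_iff, En_apply_1])]

lemma coeff_t0_c0 (a b : ℕ) : coeff (En a b 0) (X 1 * X 2 * pderiv 0 p) = 0 := by
  have h : X 1 * X 2 * pderiv 0 p = (X 1 * pderiv 0 p) * X 2 := by ring
  rw [h, coeff_mul_X', if_neg (by simp [Finsupp.mem_support_iff, En_apply_2])]

lemma coeff_t1_pos (a b c : ℕ) :
    coeff (En (a+1) b (c+1)) (X 0 * X 2 * pderiv 1 p) = (b+1) * coeff (En a (b+1) c) p := by
  rw [mul_assoc, En_succ_0, coeff_X_mul, En_succ_2, coeff_X_mul, _root_.coeff_pderiv, En_apply_1,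
    En_add_single_1]

lemma coeff_t1_a0 (b c : ℕ) : coeff (En 0 b c) (X 0 * X 2 * pderiv 1 p) = 0 := by
  have h : X 0 * X 2 * pderiv 1 p = (X 2 * pderiv 1 p) * X 0 := by ring
  rw [h, coeff_mul_X', if_neg (by simp [Finsupp.mem_support_iff, En_apply_0])]

lemma coeff_t1_c0 (a b : ℕ) : coeff (En a b 0) (X 0 * X 2 * pderiv 1 p) = 0 := by
  have h : X 0 * X 2 * pderiv 1 p = (X 0 * pderiv 1 p) * X 2 := by ring
  rw [h, coeff_mul_X', if_neg (by simp [Finsupp.mem_support_iff, En_apply_2])]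

lemma coeff_t2_pos (a b c : ℕ) :
    coeff (En (a+1) (b+1) c) (X 0 * X 1 * pderiv 2 p) = (c+1) * coeff (En a b (c+1)) p := by
  rw [mul_assoc, En_succ_0, coeff_X_mul, En_succ_1, coeff_X_mul, _root_.coeff_pderiv, En_apply_2,
    En_add_single_2]

lemma coeff_t2_a0 (b c : ℕ) : coeff (En 0 b c) (X 0 * X 1 * pderiv 2 p) = 0 := by
  have h : X 0 * X 1 * pderiv 2 p = (X 1 * pderiv 2 p) * X 0 := by ring
  rw [h, coeff_mul_X', if_neg (by simp [Finsupp.mem_support_iff, En_apply_0])]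

lemma coeff_t2_b0 (a c : ℕ) : coeff (En a 0 c) (X 0 * X 1 * pderiv 2 p) = 0 := by
  have h : X 0 * X 1 * pderiv 2 p = (X 0 * pderiv 2 p) * X 1 := by ring
  rw [h, coeff_mul_X', if_neg (by simp [Finsupp.mem_support_iff, En_apply_1])]

/-- iterate -/
noncomputable def DIt (m : ℕ) : MvPolynomial (Fin 3) ℤ := (fun p => DJ p)^[m] (X 0)

lemma DIt_succ (m : ℕ) : DIt (m+1) = DJ (DIt m) := Function.iterate_succ_apply' _ _ _

lemma coeff_DIt_zero : ∀ m (a b c : ℕ), a + b + c ≠ m + 1 → coeff (En a b c) (DIt m) = 0 := by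
  intro m
  induction m with
  | zero =>
    intro a b c h
    rw [DIt, Function.iterate_zero_apply, coeff_X', if_neg]
    intro heq
    have h0 := congrArg (fun f : Fin 3 →₀ ℕ => f 0) heq
    have h1 := congrArg (fun f : Fin 3 →₀ ℕ => f 1) heq
    have h2 := congrArg (fun f : Fin 3 →₀ ℕ => f 2) heq
    simp only [En_apply_0, En_apply_1, En_apply_2, Finsupp.single_apply] at h0 h1 h2
    simp at h0 h1 h2
    omega
  | succ m ih =>
    intro a b c h
    rw [DIt_succ, DJ_apply, coeff_add, coeff_add]
    have h0 : coeff (En a b c) (X 1 * X 2 * pderiv 0 (DIt m)) = 0 := by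
      match b, c with
      | 0, c => exact coeff_t0_b0 _ _ _
      | b+1, 0 => exact coeff_t0_c0 _ _ _
      | b+1, c+1 => rw [coeff_t0_pos, ih (a+1) b c (by omega), mul_zero]
    have h1 : coeff (En a b c) (X 0 * X 2 * pderiv 1 (DIt m)) = 0 := by
      match a, c with
      | 0, c => exact coeff_t1_a0 _ _ _
      | a+1, 0 => exact coeff_t1_c0 _ _ _
      | a+1, c+1 => rw [coeff_t1_pos, ih a (b+1) c (by omega), mul_zero]
    have h2 : coeff (En a b c) (X 0 * X 1 * pderiv 2 (DIt m)) = 0 := by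
      match a, b with
      | 0, b => exact coeff_t2_a0 _ _ _
      | a+1, 0 => exact coeff_t2_b0 _ _ _
      | a+1, b+1 => rw [coeff_t2_pos, ih a b (c+1) (by omega), mul_zero]
    rw [h0, h1, h2]
    ring

def EvS (n : ℕ) : Prop := ∀ i j, i + j ≤ n →
  coeff (En (2*i+1) (2*j) (2*(n-i-j))) (DIt (2*n)) = (Nc (2*n) i j : ℤ)
def OdS (n : ℕ) : Prop := ∀ i j, i + j ≤ n →
  coeff (En (2*i) (2*j+1) (2*(n-i-j)+1)) (DIt (2*n+1)) = (Nc (2*n+1) i j : ℤ)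

lemma base_Ev : EvS 0 := by
  intro i j hij
  obtain ⟨rfl, rfl⟩ : i = 0 ∧ j = 0 := by omega
  have h1 : En 1 0 0 = Finsupp.single 0 1 := by
    ext x; fin_cases x <;> simp [En, Finsupp.single_apply]
  have h2 : ∀ σ : Equiv.Perm (Fin 0), cpko 0 σ = 0 ∧ cpke 0 σ = 0 := fun σ => by
    constructor <;> simp [cpko, cpke]
  rw [DIt, Function.iterate_zero_apply]
  norm_num [h1, coeff_X]
  rw [Nc, Finset.filter_true_of_mem (fun σ _ => h2 σ), Finset.card_univ]
  simp
lemma step_odd (n : ℕ) (hEv : EvS n) : OdS n := by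
  intro i j hij
  have hO : Odd (2*n+1) := ⟨n, by ring⟩
  obtain ⟨c, hc⟩ : ∃ c, n - i - j = c := ⟨_, rfl⟩
  have hc' : i + j + c = n := by omega
  rw [DIt_succ, DJ_apply, coeff_add, coeff_add, hc]
  have e0 : coeff (En (2*i) (2*j+1) (2*c+1)) (X 1 * X 2 * pderiv 0 (DIt (2*n)))
      = ((2*i : ℕ) + 1 : ℤ) * (Nc (2*n) i j : ℤ) := by
    rw [coeff_t0_pos]
    congr 1
    have := hEv i j hij
    rw [hc] at this
    exact this
  rw [e0]
  rcases i with _ | i'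
  · have e1 : coeff (En (2*0) (2*j+1) (2*c+1)) (X 0 * X 2 * pderiv 1 (DIt (2*n))) = 0 := by
      rw [show (2*0 : ℕ) = 0 from rfl]
      exact coeff_t1_a0 _ _ _
    have e2 : coeff (En (2*0) (2*j+1) (2*c+1)) (X 0 * X 1 * pderiv 2 (DIt (2*n))) = 0 := by
      rw [show (2*0 : ℕ) = 0 from rfl]
      exact coeff_t2_a0 _ _ _
    rw [e1, e2, Nc_odd_zero hO j]
    push_cast
    ring
  · have e1 : coeff (En (2*(i'+1)) (2*j+1) (2*c+1)) (X 0 * X 2 * pderiv 1 (DIt (2*n)))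
        = ((2*j+1 : ℕ) + 1 : ℤ) * (Nc (2*n) i' (j+1) : ℤ) := by
      rw [show (2*(i'+1) : ℕ) = (2*i'+1)+1 from by ring, coeff_t1_pos]
      congr 1
      have h := hEv i' (j+1) (by omega)
      rw [show n - i' - (j+1) = c from by omega, show (2*(j+1) : ℕ) = 2*j+1+1 from by ring] at h
      exact h
    have e2 : coeff (En (2*(i'+1)) (2*j+1) (2*c+1)) (X 0 * X 1 * pderiv 2 (DIt (2*n)))
        = ((2*c+1 : ℕ) + 1 : ℤ) * (Nc (2*n) i' j : ℤ) := by
      rw [show (2*(i'+1) : ℕ) = (2*i'+1)+1 from by ring, show (2*j+1 : ℕ) = (2*j)+1 from rfl,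
        coeff_t2_pos]
      congr 1
      have h := hEv i' j (by omega)
      rw [show n - i' - j = c + 1 from by omega, show (2*(c+1) : ℕ) = 2*c+1+1 from by ring] at h
      exact h
    rw [e1, e2, Nc_odd_succ hO i' j]
    have hsub : (2*n - 2*i' - 2*j : ℕ) = 2*c + 2 := by omega
    rw [hsub]
    push_cast
    ring

lemma step_even (n : ℕ) (hOd : OdS n) : EvS (n+1) := by
  intro i j hij
  have hE : Even ((2*n+1)+1) := ⟨n+1, by ring⟩
  obtain ⟨c, hc⟩ : ∃ c, n + 1 - i - j = c := ⟨_, rfl⟩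
  have hc' : i + j + c = n + 1 := by omega
  have hit : DIt (2*(n+1)) = DJ (DIt (2*n+1)) := by
    rw [show 2*(n+1) = (2*n+1)+1 from by ring, DIt_succ]
  have hNc : Nc (2*(n+1)) i j = Nc ((2*n+1)+1) i j := by rw [show 2*(n+1) = (2*n+1)+1 from by ring]
  rw [hit, DJ_apply, coeff_add, coeff_add, hc, hNc]
  rcases j with _ | j'
  · -- j = 0
    have e0 : coeff (En (2*i+1) (2*0) (2*c)) (X 1 * X 2 * pderiv 0 (DIt (2*n+1))) = 0 := by
      rw [show (2*0 : ℕ) = 0 from rfl]; exact coeff_t0_b0 _ _ _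
    have e2 : coeff (En (2*i+1) (2*0) (2*c)) (X 0 * X 1 * pderiv 2 (DIt (2*n+1))) = 0 := by
      rw [show (2*0 : ℕ) = 0 from rfl]; exact coeff_t2_b0 _ _ _
    rw [e0, e2, Nc_even_zero hE i]
    rcases c with _ | c'
    · have e1 : coeff (En (2*i+1) (2*0) (2*0)) (X 0 * X 2 * pderiv 1 (DIt (2*n+1))) = 0 := by
        rw [show (2*0 : ℕ) = 0 from rfl]; exact coeff_t1_c0 _ _ _
      rw [e1, Nc_zero (show 2*n+1 < 2*(i+0) from by omega)]
      norm_num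
    · have e1 : coeff (En (2*i+1) (2*0) (2*(c'+1))) (X 0 * X 2 * pderiv 1 (DIt (2*n+1)))
          = ((2*0 : ℕ) + 1 : ℤ) * (Nc (2*n+1) i 0 : ℤ) := by
        rw [show (2*(c'+1) : ℕ) = (2*c'+1)+1 from by ring, show (2*i+1 : ℕ) = (2*i)+1 from rfl,
          coeff_t1_pos]
        congr 1
        have h := hOd i 0 (by omega)
        rw [show n - i - 0 = c' from by omega, show (2*0+1 : ℕ) = 0+1 from rfl] at h
        exact h
      rw [e1]
      push_cast
      ring
  · -- j = j' + 1
    have e2 : coeff (En (2*i+1) (2*(j'+1)) (2*c)) (X 0 * X 1 * pderiv 2 (DIt (2*n+1)))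
        = ((2*c : ℕ) + 1 : ℤ) * (Nc (2*n+1) i j' : ℤ) := by
      rw [show (2*(j'+1) : ℕ) = (2*j'+1)+1 from by ring, show (2*i+1 : ℕ) = (2*i)+1 from rfl,
        coeff_t2_pos]
      congr 1
      have h := hOd i j' (by omega)
      rw [show n - i - j' = c from by omega] at h
      exact h
    rw [e2, Nc_even_succ hE i j']
    have hsub : (2*n+1 - 2*i - 2*j' : ℕ) = 2*c + 1 := by omega
    rw [hsub]
    rcases c with _ | c'
    · have e0 : coeff (En (2*i+1) (2*(j'+1)) (2*0)) (X 1 * X 2 * pderiv 0 (DIt (2*n+1)))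
          = 0 := by
        rw [show (2*0 : ℕ) = 0 from rfl]; exact coeff_t0_c0 _ _ _
      have e1 : coeff (En (2*i+1) (2*(j'+1)) (2*0)) (X 0 * X 2 * pderiv 1 (DIt (2*n+1)))
          = 0 := by
        rw [show (2*0 : ℕ) = 0 from rfl]; exact coeff_t1_c0 _ _ _
      rw [e0, e1, Nc_zero (show 2*n+1 < 2*((i+1)+j') from by omega),
        Nc_zero (show 2*n+1 < 2*(i+(j'+1)) from by omega)]
      push_cast
      ring
    · have e0 : coeff (En (2*i+1) (2*(j'+1)) (2*(c'+1))) (X 1 * X 2 * pderiv 0 (DIt (2*n+1)))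
          = ((2*i+1 : ℕ) + 1 : ℤ) * (Nc (2*n+1) (i+1) j' : ℤ) := by
        rw [show (2*(j'+1) : ℕ) = (2*j'+1)+1 from by ring,
          show (2*(c'+1) : ℕ) = (2*c'+1)+1 from by ring, coeff_t0_pos]
        congr 1
        have h := hOd (i+1) j' (by omega)
        rw [show n - (i+1) - j' = c' from by omega, show (2*(i+1) : ℕ) = 2*i+1+1 from by ring] at h
        exact h
      have e1 : coeff (En (2*i+1) (2*(j'+1)) (2*(c'+1))) (X 0 * X 2 * pderiv 1 (DIt (2*n+1)))
          = ((2*(j'+1) : ℕ) + 1 : ℤ) * (Nc (2*n+1) i (j'+1) : ℤ) := by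
        rw [show (2*(c'+1) : ℕ) = (2*c'+1)+1 from by ring, show (2*i+1 : ℕ) = (2*i)+1 from rfl,
          coeff_t1_pos]
        congr 1
        have h := hOd i (j'+1) (by omega)
        rw [show n - i - (j'+1) = c' from by omega, show (2*(j'+1) : ℕ) = 2*(j'+1) from rfl] at h
        exact h
      rw [e0, e1]
      push_cast
      ring

lemma EvOd (n : ℕ) : EvS n ∧ OdS n := by
  induction n with
  | zero => exact ⟨base_Ev, step_odd 0 base_Ev⟩
  | succ n ih =>
    have hEv := step_even n ih.2
    exact ⟨hEv, step_odd (n+1) hEv⟩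

/-- For `n ≥ 0` and all `i, j ≥ 0`, the coefficient of `x^{2i} y^{2j+1} z^{2n-2i-2j+1}` in
`D_J^{2n+1}(x)` equals the number of permutations `π` of `[2n+1]` with `cpk^o(π) = i` and
`cpk^e(π) = j`. -/
theorem stmt8 (n : ℕ) (i j : ℕ) :
    MvPolynomial.coeff
        (Finsupp.single (0 : Fin 3) (2 * i) + Finsupp.single (1 : Fin 3) (2 * j + 1) +
          Finsupp.single (2 : Fin 3) (2 * n - 2 * i - 2 * j + 1))
        ((fun p => DJ p)^[2 * n + 1] (X 0)) =
      ((Finset.univ.filter fun π : Equiv.Perm (Fin (2 * n + 1)) =>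
          cpko (2 * n + 1) π = i ∧ cpke (2 * n + 1) π = j).card : ℤ) := by
  have hRHS : ((Finset.univ.filter fun π : Equiv.Perm (Fin (2 * n + 1)) =>
      cpko (2 * n + 1) π = i ∧ cpke (2 * n + 1) π = j).card : ℤ) = (Nc (2*n+1) i j : ℤ) := rfl
  have hLHS : (fun p => DJ p)^[2 * n + 1] (X 0) = DIt (2*n+1) := rfl
  have hmon : Finsupp.single (0 : Fin 3) (2 * i) + Finsupp.single (1 : Fin 3) (2 * j + 1) +
      Finsupp.single (2 : Fin 3) (2 * n - 2 * i - 2 * j + 1)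
      = En (2*i) (2*j+1) (2*n - 2*i - 2*j + 1) := rfl
  rw [hRHS, hLHS, hmon]
  by_cases hij : i + j ≤ n
  · rw [show (2*n - 2*i - 2*j + 1 : ℕ) = 2*(n-i-j)+1 from by omega]
    exact (EvOd n).2 i j hij
  · rw [show (2*n - 2*i - 2*j + 1 : ℕ) = 1 from by omega,
      coeff_DIt_zero (2*n+1) (2*i) (2*j+1) 1 (by omega),
      Nc_zero (show 2*n+1 < 2*(i+j) from by omega)]
    simp
end

section
/- For every n ≥ 1 and all i, j ≥ 0, the counts s_{m,i,j} = #{π ∈ S_m : cpk^o(π) = i, cpk^e(π) = j} satisfy the Schett–Dumont recurrence s_{2n,i,j} = (2j+1)·s_{2n−1,i,j} + (2i+2)·s_{2n−1,i+1,j−1} + (2n−2i−2j+1)·s_{2n−1,i,j−1}, where any term with a negative index is interpreted as 0. -/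
open Finset

/-- `s m i j = #{π ∈ S_m : cpk^o(π) = i, cpk^e(π) = j}`. -/
def s (m i j : ℕ) : ℕ :=
  (Finset.univ.filter fun π : Equiv.Perm (Fin m) => cpko m π = i ∧ cpke m π = j).card

/-!
Every permutation of `[m + 1]` arises exactly once by inserting the largest letter `m + 1`
into a permutation `σ` of `[m]`: either as a fixed point, or just before some `c` in its cycle.
When `m + 1` is even, a fixed point changes no cycle peak. Otherwise `m + 1` becomes a new
even cycle peak, and it destroys the cycle peak `a` of `σ` exactly when `c = a` or `c = σ a`.
Each peak is destroyed by exactly two choices of `c`, and no choice destroys two peaks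
(a peak is never the image of a peak). So if `σ` has `o` odd and `e` even cycle peaks, the
`m + 1` insertions give `(o, e)` once as a fixed point and `2e` times more, `(o - 1, e + 1)`
`2o` times and `(o, e + 1)` the remaining `m - 2o - 2e` times.
-/

theorem Fin.card_filter_univ_castSucc {n : ℕ} (p : Fin (n + 1) → Prop) [DecidablePred p] :
    #{x | p x} = #{x : Fin n | p x.castSucc} + if p (Fin.last n) then 1 else 0 := by
  simp only [card_filter, Fin.sum_univ_castSucc]

/-- Where `(u c, v c)` only takes the values `(0, 0)`, `(1, 0)`, `(0, 1)`, the summand is affine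
in `u c` and `v c`. -/
theorem Fintype.sum_eval_of_add_le_one {ι : Type*} [Fintype ι] (u v : ι → ℕ)
    (huv : ∀ c, u c + v c ≤ 1) (F : ℕ → ℕ → ℤ) :
    ∑ c, F (u c) (v c) = (∑ c, u c : ℕ) * F 1 0 + (∑ c, v c : ℕ) * F 0 1
      + (Fintype.card ι - ∑ c, u c - ∑ c, v c : ℤ) * F 0 0 := by
  have hF : ∀ c, F (u c) (v c) = F 0 0 + u c * (F 1 0 - F 0 0) + v c * (F 0 1 - F 0 0) := by
    intro c
    obtain ⟨hu, hv⟩ | ⟨hu, hv⟩ | ⟨hu, hv⟩ :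
        (u c = 0 ∧ v c = 0) ∨ (u c = 1 ∧ v c = 0) ∨ (u c = 0 ∧ v c = 1) := by
      have := huv c
      omega
    all_goals simp [hu, hv]
  simp only [hF, sum_add_distrib, ← sum_mul, sum_const, card_univ, nsmul_eq_mul, Nat.cast_sum]
  ring

open Equiv

namespace Equiv.Perm

theorem sum_card_filter_eq_or_apply_eq {α : Type*} [Fintype α] [DecidableEq α] (σ : Perm α)
    (S : Finset α) (hS : ∀ a ∈ S, σ a ≠ a) :
    ∑ c, #{a ∈ S | a = c ∨ σ a = c} = 2 * #S := by
  have hpair : ∀ a ∈ S, #{c | a = c ∨ σ a = c} = 2 := fun a ha => by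
    rw [← card_pair (hS a ha).symm]
    congr 1
    ext c
    simp [eq_comm]
  simp only [card_filter]
  rw [sum_comm, card_eq_sum_ones, mul_sum]
  refine sum_congr rfl fun a ha => ?_
  rw [← card_filter, hpair a ha, mul_one]

variable {m : ℕ}

/-- `insertLast (some c, σ)` inserts the new letter `Fin.last m` just before `c` in its cycle of
`σ`; `insertLast (none, σ)` adds it as a fixed point. -/
def insertLast : Option (Fin m) × Perm (Fin m) ≃ Perm (Fin (m + 1)) :=
  decomposeOption.symm.trans (permCongr finSuccEquivLast.symm)

section insertLast

variable (σ : Perm (Fin m)) (c a : Fin m)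

@[simp]
theorem insertLast_none_castSucc : insertLast (none, σ) a.castSucc = (σ a).castSucc := by
  simp [insertLast]

@[simp]
theorem insertLast_none_last : insertLast (none, σ) (Fin.last m) = Fin.last m := by
  simp [insertLast]

@[simp]
theorem insertLast_none_symm_castSucc :
    (insertLast (none, σ)).symm a.castSucc = (σ.symm a).castSucc := by
  simp [symm_apply_eq]

@[simp]
theorem insertLast_some_last : insertLast (some c, σ) (Fin.last m) = c.castSucc := by
  simp [insertLast]

theorem insertLast_some_castSucc :
    insertLast (some c, σ) a.castSucc = if σ a = c then Fin.last m else (σ a).castSucc := by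
  split_ifs with h <;> simp [insertLast, h, swap_apply_of_ne_of_ne]

@[simp]
theorem insertLast_some_symm_last :
    (insertLast (some c, σ)).symm (Fin.last m) = (σ.symm c).castSucc := by
  simp [symm_apply_eq, insertLast_some_castSucc]

theorem insertLast_some_symm_castSucc :
    (insertLast (some c, σ)).symm a.castSucc =
      if a = c then Fin.last m else (σ.symm a).castSucc := by
  rw [symm_apply_eq]
  split_ifs with h <;> simp [insertLast_some_castSucc, h]

end insertLast

/-- `a : Fin m` stands for the letter `a + 1` of `[m]`, so `cpko m σ` and `cpke m σ` are the
cardinalities of `σ.cyclePeaksWith Odd` and `σ.cyclePeaksWith Even`. -/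
def cyclePeaksWith (σ : Perm (Fin m)) (q : ℕ → Prop) [DecidablePred q] : Finset (Fin m) :=
  {a | σ.symm a < a ∧ σ a < a ∧ q (a + 1)}

theorem cyclePeak_eq_of_eq_or_apply_eq (σ : Perm (Fin m)) {a b c : Fin m}
    (ha : σ.symm a < a ∧ σ a < a) (hb : σ.symm b < b ∧ σ b < b)
    (hac : a = c ∨ σ a = c) (hbc : b = c ∨ σ b = c) : a = b := by
  rcases hac with rfl | rfl <;> rcases hbc with h | h
  · exact h.symm
  · subst h
    simp only [symm_apply_apply] at ha
    exact absurd (ha.1.trans hb.2) (lt_irrefl _)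
  · subst h
    simp only [symm_apply_apply] at hb
    exact absurd (hb.1.trans ha.2) (lt_irrefl _)
  · exact σ.injective h.symm

variable (q : ℕ → Prop) [DecidablePred q]

theorem card_cyclePeaksWith_insertLast_none (σ : Perm (Fin m)) :
    #((insertLast (none, σ)).cyclePeaksWith q) = #(σ.cyclePeaksWith q) := by
  simp [cyclePeaksWith, Fin.card_filter_univ_castSucc]

theorem card_cyclePeaksWith_insertLast_some (σ : Perm (Fin m)) (c : Fin m) :
    #((insertLast (some c, σ)).cyclePeaksWith q) + #{a ∈ σ.cyclePeaksWith q | a = c ∨ σ a = c} =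
      #(σ.cyclePeaksWith q) + if q (m + 1) then 1 else 0 := by
  have hsplit :=
    card_filter_add_card_filter_not (s := σ.cyclePeaksWith q) (fun a => a = c ∨ σ a = c)
  suffices #((insertLast (some c, σ)).cyclePeaksWith q) =
      #{a ∈ σ.cyclePeaksWith q | ¬(a = c ∨ σ a = c)} + if q (m + 1) then 1 else 0 by omega
  simp only [cyclePeaksWith, Fin.card_filter_univ_castSucc, filter_filter]
  congr 2
  · refine filter_congr fun a _ => ?_
    simp only [insertLast_some_castSucc, insertLast_some_symm_castSucc, Fin.val_castSucc]
    split_ifs <;> simp_all [Fin.castSucc_lt_last, not_lt_of_gt]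
  · simp [Fin.castSucc_lt_last]

theorem card_filter_eq_or_apply_eq_add_le_one (σ : Perm (Fin m)) (r : ℕ → Prop)
    [DecidablePred r] (hqr : ∀ n, q n → ¬ r n) (c : Fin m) :
    #{a ∈ σ.cyclePeaksWith q | a = c ∨ σ a = c} + #{a ∈ σ.cyclePeaksWith r | a = c ∨ σ a = c}
      ≤ 1 := by
  rw [← card_union_of_disjoint]
  · refine card_le_one.mpr fun a ha b hb => ?_
    simp only [mem_union, mem_filter, cyclePeaksWith, mem_univ, true_and] at ha hb
    refine cyclePeak_eq_of_eq_or_apply_eq σ ?_ ?_ (ha.elim (·.2) (·.2)) (hb.elim (·.2) (·.2))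
      <;> tauto
  · exact disjoint_filter_filter (disjoint_filter.mpr fun a _ ha hb => hqr _ ha.2.2 hb.2.2)

end Equiv.Perm

open Equiv.Perm

variable {m : ℕ}

theorem sum_ite_cpko_cpke_insertLast (hm : Even (m + 1)) (σ : Perm (Fin m)) (i j : ℕ) :
    ∑ x, (if cpko (m + 1) (insertLast (x, σ)) = i ∧ cpke (m + 1) (insertLast (x, σ)) = j
      then (1 : ℤ) else 0) =
    (if cpko m σ = i ∧ cpke m σ = j then 2 * (cpke m σ : ℤ) + 1 else 0)
      + (if cpko m σ = i + 1 ∧ cpke m σ + 1 = j then 2 * (cpko m σ : ℤ) else 0)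
      + (if cpko m σ = i ∧ cpke m σ + 1 = j then (m : ℤ) - 2 * cpko m σ - 2 * cpke m σ
          else 0) := by
  have hnone_o : cpko (m + 1) (insertLast (none, σ)) = cpko m σ :=
    card_cyclePeaksWith_insertLast_none Odd σ
  have hnone_e : cpke (m + 1) (insertLast (none, σ)) = cpke m σ :=
    card_cyclePeaksWith_insertLast_none Even σ
  set o := cpko m σ
  set e := cpke m σ
  set u : Fin m → ℕ := fun c => #{a ∈ σ.cyclePeaksWith Odd | a = c ∨ σ a = c}
  set v : Fin m → ℕ := fun c => #{a ∈ σ.cyclePeaksWith Even | a = c ∨ σ a = c}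
  have ho : ∀ c, cpko (m + 1) (insertLast (some c, σ)) + u c = o := fun c => by
    have h := card_cyclePeaksWith_insertLast_some Odd σ c
    rwa [if_neg (Nat.not_odd_iff_even.mpr hm), add_zero] at h
  have he : ∀ c, cpke (m + 1) (insertLast (some c, σ)) + v c = e + 1 := fun c => by
    have h := card_cyclePeaksWith_insertLast_some Even σ c
    rwa [if_pos hm] at h
  let F (x y : ℕ) : ℤ := if o = i + x ∧ e + 1 = j + y then 1 else 0
  have hF : ∀ c, (if cpko (m + 1) (insertLast (some c, σ)) = i ∧
      cpke (m + 1) (insertLast (some c, σ)) = j then (1 : ℤ) else 0) = F (u c) (v c) :=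
    fun c => if_congr (by have := ho c; have := he c; omega) rfl rfl
  have huv : ∀ c, u c + v c ≤ 1 :=
    card_filter_eq_or_apply_eq_add_le_one Odd σ Even fun n hodd heven =>
      Nat.not_even_iff_odd.mpr hodd heven
  have hfix (q : ℕ → Prop) [DecidablePred q] : ∀ a ∈ σ.cyclePeaksWith q, σ a ≠ a :=
    fun a ha => (mem_filter.mp ha).2.2.1.ne
  have hu : ∑ c, u c = 2 * o := sum_card_filter_eq_or_apply_eq σ _ (hfix Odd)
  have hv : ∑ c, v c = 2 * e := sum_card_filter_eq_or_apply_eq σ _ (hfix Even)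
  rw [Fintype.sum_option, hnone_o, hnone_e, sum_congr rfl fun c _ => hF c,
    Fintype.sum_eval_of_add_le_one u v huv F, hu, hv, Fintype.card_fin]
  simp only [F, add_zero, Nat.add_right_cancel_iff]
  split_ifs <;> push_cast <;> omega

theorem s_succ_eq_sum (hm : Even (m + 1)) (i j : ℕ) :
    (s (m + 1) i j : ℤ) = ∑ σ : Perm (Fin m),
      ((if cpko m σ = i ∧ cpke m σ = j then 2 * (cpke m σ : ℤ) + 1 else 0)
        + (if cpko m σ = i + 1 ∧ cpke m σ + 1 = j then 2 * (cpko m σ : ℤ) else 0)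
        + (if cpko m σ = i ∧ cpke m σ + 1 = j then (m : ℤ) - 2 * cpko m σ - 2 * cpke m σ
            else 0)) := by
  rw [s, card_filter, Nat.cast_sum, ← insertLast.sum_comp, Fintype.sum_prod_type_right]
  push_cast
  exact sum_congr rfl fun σ _ => sum_ite_cpko_cpke_insertLast hm σ i j

theorem sum_ite_cpko_cpke (a b : ℕ) (g : ℕ → ℕ → ℤ) :
    ∑ σ : Perm (Fin m), (if cpko m σ = a ∧ cpke m σ = b then g (cpko m σ) (cpke m σ) else 0) =
      s m a b * g a b := by
  rw [← sum_filter, s, ← nsmul_eq_mul, ← sum_const]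
  exact sum_congr rfl fun σ hσ => by rw [(mem_filter.mp hσ).2.1, (mem_filter.mp hσ).2.2]

theorem s_succ_zero (hm : Even (m + 1)) (i : ℕ) : s (m + 1) i 0 = s m i 0 := by
  have h := s_succ_eq_sum hm i 0
  simp only [Nat.add_one_ne_zero, and_false, if_false, add_zero] at h
  rw [sum_ite_cpko_cpke i 0 (fun _ e => 2 * (e : ℤ) + 1)] at h
  simpa using h

theorem s_succ_succ (hm : Even (m + 1)) (i j : ℕ) :
    (s (m + 1) i (j + 1) : ℤ) = (2 * j + 3) * s m i (j + 1) + (2 * i + 2) * s m (i + 1) j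
      + (m - 2 * i - 2 * j) * s m i j := by
  rw [s_succ_eq_sum hm]
  simp only [Nat.add_right_cancel_iff, sum_add_distrib]
  rw [sum_ite_cpko_cpke i (j + 1) (fun _ e => 2 * (e : ℤ) + 1),
    sum_ite_cpko_cpke (i + 1) j (fun o _ => 2 * (o : ℤ)),
    sum_ite_cpko_cpke i j (fun o e => (m : ℤ) - 2 * o - 2 * e)]
  push_cast
  ring

/-- The Schett–Dumont recurrence
`s_{2n,i,j} = (2j+1) s_{2n-1,i,j} + (2i+2) s_{2n-1,i+1,j-1} + (2n-2i-2j+1) s_{2n-1,i,j-1}`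
for `n ≥ 1`, where terms with a negative index (i.e. with `j - 1 < 0`) are interpreted
as `0`. -/
theorem stmt9 (n : ℕ) (hn : 1 ≤ n) (i j : ℕ) :
    (s (2 * n) i j : ℤ) =
      (2 * (j : ℤ) + 1) * s (2 * n - 1) i j
        + (2 * (i : ℤ) + 2) * (if j = 0 then 0 else (s (2 * n - 1) (i + 1) (j - 1) : ℤ))
        + (2 * (n : ℤ) - 2 * i - 2 * j + 1) *
            (if j = 0 then 0 else (s (2 * n - 1) i (j - 1) : ℤ)) := by
  obtain ⟨k, rfl⟩ : ∃ k, n = k + 1 := ⟨n - 1, by omega⟩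
  rw [show 2 * (k + 1) = 2 * k + 1 + 1 by ring, Nat.add_sub_cancel]
  have hm : Even (2 * k + 1 + 1) := ⟨k + 1, by ring⟩
  rcases j with _ | j
  · simp [s_succ_zero hm]
  · simp only [s_succ_succ hm, Nat.add_one_ne_zero, if_false, Nat.add_sub_cancel]
    push_cast
    ring
end

section
/- For every n ≥ 1, the following two polynomial identities hold: Σ_{π ∈ S_{2n}, cpk^e(π)=0} x^{cpk^o(π)} = Σ_{π ∈ S_{2n−1}, cpk^e(π)=0} x^{cpk^o(π)}, and Σ_{π ∈ S_{2n+1}, cpk^o(π)=0} x^{cpk^e(π)} = Σ_{π ∈ S_{2n}, cpk^o(π)=0} x^{cpk^e(π)}. Equivalently, with P_m(p,q) = Σ_{π ∈ S_m} p^{cpk^o(π)} q^{cpk^e(π)}, one has P_{2n}(x,0) = P_{2n−1}(x,0) and P_{2n+1}(0,x) = P_{2n}(0,x). -/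
/-!
Let `q` be a parity with `q (m + 1)`. If `σ ∈ S_{m+1}` has no cycle peak of parity `q`, then `σ`
fixes `m + 1`: otherwise both `σ⁻¹ (m + 1)` and `σ (m + 1)` are smaller than `m + 1`, which is
then a cycle peak. Deleting this fixed point is a bijection onto the permutations of `[m]` without
`q`-cycle peaks, and it does not change any cycle peak. Taking `m + 1 = 2n` with `q` even gives
the first identity, and `m + 1 = 2n + 1` with `q` odd the second.
-/

open Finset Polynomial

namespace Equiv.Perm

variable {m : ℕ}

/-- `cpko m` and `cpke m` are `cyclePeakCount Odd` and `cyclePeakCount Even` by definition. -/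
def cyclePeakCount (r : ℕ → Prop) [DecidablePred r] (π : Perm (Fin m)) : ℕ :=
  #{i | π.symm i < i ∧ π i < i ∧ r (i + 1)}

def extendLast (π : Perm (Fin m)) : Perm (Fin (m + 1)) :=
  finSuccEquivLast.symm.permCongr π.optionCongr

def restrictLast (σ : Perm (Fin (m + 1))) : Perm (Fin m) :=
  removeNone (finSuccEquivLast.permCongr σ)

@[simp] theorem extendLast_castSucc (π : Perm (Fin m)) (j : Fin m) :
    extendLast π j.castSucc = (π j).castSucc := by
  simp [extendLast]

@[simp] theorem extendLast_last (π : Perm (Fin m)) : extendLast π (Fin.last m) = Fin.last m := by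
  simp [extendLast]

@[simp] theorem extendLast_symm (π : Perm (Fin m)) : (extendLast π).symm = extendLast π.symm :=
  rfl

theorem restrictLast_extendLast (π : Perm (Fin m)) : restrictLast (extendLast π) = π := by
  rw [restrictLast, extendLast, ← permCongr_symm, apply_symm_apply, removeNone_optionCongr]

theorem extendLast_restrictLast {σ : Perm (Fin (m + 1))} (h : σ (Fin.last m) = Fin.last m) :
    extendLast (restrictLast σ) = σ := by
  rw [extendLast, restrictLast, map_equiv_removeNone]
  simp only [permCongr_apply, finSuccEquivLast_symm_none, h, finSuccEquivLast_last, swap_self,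
    ← Perm.one_def, one_mul]
  rw [← permCongr_symm, symm_apply_apply]

theorem cyclePeakCount_extendLast (r : ℕ → Prop) [DecidablePred r] (π : Perm (Fin m)) :
    cyclePeakCount r (extendLast π) = cyclePeakCount r π := by
  rw [cyclePeakCount, cyclePeakCount, card_filter, card_filter, Fin.sum_univ_castSucc]
  simp

theorem apply_last_eq_last_of_cyclePeakCount_eq_zero {r : ℕ → Prop} [DecidablePred r]
    (hr : r (m + 1)) {σ : Perm (Fin (m + 1))} (h : cyclePeakCount r σ = 0) :
    σ (Fin.last m) = Fin.last m := by
  by_contra hσ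
  have hσ' : σ.symm (Fin.last m) ≠ Fin.last m := fun h' => hσ (σ.symm_apply_eq.mp h').symm
  rw [cyclePeakCount, card_eq_zero, filter_eq_empty_iff] at h
  exact h (mem_univ _) ⟨(Fin.le_last _).lt_of_ne hσ', (Fin.le_last _).lt_of_ne hσ, by simpa using hr⟩

theorem sum_cyclePeakCount_eq_zero_succ {M : Type*} [AddCommMonoid M] (f : ℕ → M)
    (p q : ℕ → Prop) [DecidablePred p] [DecidablePred q] (hq : q (m + 1)) :
    ∑ σ : Perm (Fin (m + 1)) with cyclePeakCount q σ = 0, f (cyclePeakCount p σ) =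
      ∑ π : Perm (Fin m) with cyclePeakCount q π = 0, f (cyclePeakCount p π) := by
  have hfix {σ : Perm (Fin (m + 1))} (hσ : σ ∈ univ.filter (cyclePeakCount q · = 0)) :
      extendLast (restrictLast σ) = σ :=
    extendLast_restrictLast (apply_last_eq_last_of_cyclePeakCount_eq_zero hq (mem_filter.mp hσ).2)
  refine sum_nbij' restrictLast extendLast (fun σ hσ ↦ ?_) (fun π hπ ↦ ?_) (fun σ hσ ↦ hfix hσ)
    (fun π _ ↦ restrictLast_extendLast π) (fun σ hσ ↦ ?_)
  · rw [mem_filter, ← cyclePeakCount_extendLast q, hfix hσ]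
    exact ⟨mem_univ _, (mem_filter.mp hσ).2⟩
  · rw [mem_filter, cyclePeakCount_extendLast]
    exact ⟨mem_univ _, (mem_filter.mp hπ).2⟩
  · rw [← cyclePeakCount_extendLast p (restrictLast σ), hfix hσ]

end Equiv.Perm

/-- For every `n ≥ 1`:
`Σ_{π ∈ S_{2n}, cpk^e(π)=0} x^{cpk^o(π)} = Σ_{π ∈ S_{2n-1}, cpk^e(π)=0} x^{cpk^o(π)}` and
`Σ_{π ∈ S_{2n+1}, cpk^o(π)=0} x^{cpk^e(π)} = Σ_{π ∈ S_{2n}, cpk^o(π)=0} x^{cpk^e(π)}`;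
equivalently, `P_{2n}(x,0) = P_{2n-1}(x,0)` and `P_{2n+1}(0,x) = P_{2n}(0,x)`. -/
theorem stmt11 (n : ℕ) (hn : 1 ≤ n) :
    ((∑ π ∈ Finset.univ.filter (fun π : Equiv.Perm (Fin (2 * n)) => cpke (2 * n) π = 0),
        (X : Polynomial ℤ) ^ cpko (2 * n) π) =
      ∑ π ∈ Finset.univ.filter (fun π : Equiv.Perm (Fin (2 * n - 1)) => cpke (2 * n - 1) π = 0),
        (X : Polynomial ℤ) ^ cpko (2 * n - 1) π) ∧
    ((∑ π ∈ Finset.univ.filter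
          (fun π : Equiv.Perm (Fin (2 * n + 1)) => cpko (2 * n + 1) π = 0),
        (X : Polynomial ℤ) ^ cpke (2 * n + 1) π) =
      ∑ π ∈ Finset.univ.filter (fun π : Equiv.Perm (Fin (2 * n)) => cpko (2 * n) π = 0),
        (X : Polynomial ℤ) ^ cpke (2 * n) π) := by
  constructor
  · obtain ⟨m, hm⟩ : ∃ m, 2 * n = m + 1 := ⟨2 * n - 1, by omega⟩
    rw [hm, Nat.add_sub_cancel]
    exact Equiv.Perm.sum_cyclePeakCount_eq_zero_succ (X ^ ·) Odd Even ⟨n, by omega⟩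
  · exact Equiv.Perm.sum_cyclePeakCount_eq_zero_succ (X ^ ·) Even Odd ⟨n, rfl⟩
end

section
/- For every n ≥ 1, J_{2n}(x) = Σ_{i=0}^{n−1} binom(2n−1, 2i) · J_{2n−1−2i}(x) · (R_i J_{2i})(x), where for a polynomial f of degree at most d, R_d f denotes the polynomial x^d·f(1/x) (the reflection of f in degree d), and in particular R_0 J_0 = 1. -/
open Finset Polynomial

/-- The polynomials `J_m`: `J_0 = 1`, `J_{2n} = Σ_{π ∈ S_{2n}, cpk^e(π)=0} x^{cpk^o(π)}`
for `n ≥ 1` (the even formula also gives `J_0 = 1`), and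
`J_{2n+1} = Σ_{π ∈ S_{2n+1}, cpk^o(π)=0} x^{cpk^e(π)}`. -/
noncomputable def J (m : ℕ) : Polynomial ℤ :=
  if Even m then
    ∑ π ∈ Finset.univ.filter (fun π : Equiv.Perm (Fin m) => cpke m π = 0), X ^ cpko m π
  else
    ∑ π ∈ Finset.univ.filter (fun π : Equiv.Perm (Fin m) => cpko m π = 0), X ^ cpke m π

noncomputable section
namespace V
open Equiv MvPolynomial

variable {m : ℕ}

/-- extend a permutation of `Fin m` to `Fin (m+1)` fixing the last element -/
def extP (τ : Perm (Fin m)) : Perm (Fin (m+1)) :=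
  finSuccEquivLast.permCongr.symm τ.optionCongr

@[simp] lemma extP_castSucc (τ : Perm (Fin m)) (i : Fin m) :
    extP τ i.castSucc = (τ i).castSucc := by
  simp [extP, Equiv.permCongr_apply]

@[simp] lemma extP_last (τ : Perm (Fin m)) : extP τ (Fin.last m) = Fin.last m := by
  simp [extP, Equiv.permCongr_apply]

@[simp] lemma extP_symm_castSucc (τ : Perm (Fin m)) (i : Fin m) :
    (extP τ).symm i.castSucc = (τ.symm i).castSucc := by
  rw [Equiv.symm_apply_eq, extP_castSucc, Equiv.apply_symm_apply]

@[simp] lemma extP_symm_last (τ : Perm (Fin m)) : (extP τ).symm (Fin.last m) = Fin.last m := by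
  rw [Equiv.symm_apply_eq, extP_last]

/-- insert the new largest element into the cycle just before `k` -/
def insP (k : Fin m) (τ : Perm (Fin m)) : Perm (Fin (m+1)) :=
  Equiv.swap (Fin.last m) k.castSucc * extP τ

def E : Perm (Fin (m+1)) ≃ Option (Fin m) × Perm (Fin m) :=
  finSuccEquivLast.permCongr.trans Equiv.Perm.decomposeOption

lemma permCongr_mul {α β : Type*} (e : α ≃ β) (f g : Perm α) :
    e.permCongr (f * g) = e.permCongr f * e.permCongr g := by
  ext x; simp [Equiv.permCongr_apply]

lemma E_symm_none (τ : Perm (Fin m)) : E.symm (none, τ) = extP τ := by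
  simp [E, Equiv.Perm.decomposeOption_symm_apply, extP]; rfl

lemma E_symm_some (τ : Perm (Fin m)) (k : Fin m) : E.symm (some k, τ) = insP k τ := by
  simp only [E, Equiv.symm_trans_apply, Equiv.Perm.decomposeOption_symm_apply]
  rw [Equiv.permCongr_symm, permCongr_mul]
  congr 1
  · ext x
    induction x using Fin.lastCases with
    | last => simp [Equiv.permCongr_apply]
    | cast i =>
      by_cases h : i = k
      · subst h; simp [Equiv.permCongr_apply]
      · simp [Equiv.permCongr_apply, Equiv.swap_apply_of_ne_of_ne, h,
          (Fin.castSucc_injective m).ne h, (Fin.castSucc_lt_last i).ne]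


/-- cycle peak -/
def pk (τ : Perm (Fin m)) (i : Fin m) : Prop := τ.symm i < i ∧ τ i < i

instance (τ : Perm (Fin m)) : DecidablePred (pk τ) := fun _ => instDecidableAnd

def cstat (p : ℕ → Prop) [DecidablePred p] (σ : Perm (Fin m)) : ℕ :=
  #(univ.filter fun i => pk σ i ∧ p ((i : ℕ) + 1))

lemma pk_not_pk {τ : Perm (Fin m)} {j : Fin m} (h : pk τ j) : ¬ pk τ (τ j) := by
  rintro ⟨h1, -⟩
  rw [Equiv.symm_apply_apply] at h1
  exact absurd h.2 h1.asymm

lemma pk_apply_ne {τ : Perm (Fin m)} {j : Fin m} (h : pk τ j) : τ j ≠ j :=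
  h.2.ne

lemma cstat_odd_add_even (σ : Perm (Fin m)) :
    cstat Odd σ + cstat Even σ = #(univ.filter (pk σ)) := by
  unfold cstat
  rw [← Finset.filter_filter, ← Finset.filter_filter]
  have := Finset.card_filter_add_card_filter_not
    (s := univ.filter (pk σ)) (p := fun i : Fin m => Odd ((i : ℕ) + 1))
  simpa [Nat.not_odd_iff_even] using this

lemma two_mul_pk_card_le (σ : Perm (Fin m)) : 2 * #(univ.filter (pk σ)) ≤ m := by
  classical
  set s := univ.filter (pk σ) with hs
  have hsub : s.image σ ⊆ univ \ s := by
    intro x hx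
    rw [Finset.mem_image] at hx
    obtain ⟨j, hj, rfl⟩ := hx
    rw [Finset.mem_sdiff]
    rw [hs, Finset.mem_filter] at hj ⊢
    exact ⟨Finset.mem_univ _, fun h => pk_not_pk hj.2 h.2⟩
  have h1 : #s = #(s.image σ) := (Finset.card_image_of_injective _ σ.injective).symm
  have h2 : #(s.image σ) ≤ #(univ \ s) := Finset.card_le_card hsub
  have h3 : #(univ \ s) = m - #s := by
    rw [Finset.card_sdiff_of_subset (Finset.subset_univ _)]
    simp
  have h4 : #s ≤ m := by
    simpa using Finset.card_le_card (Finset.subset_univ s)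
  omega

lemma two_mul_cstat_le (σ : Perm (Fin m)) :
    2 * (cstat Odd σ + cstat Even σ) ≤ m := by
  rw [cstat_odd_add_even]; exact two_mul_pk_card_le σ


-- apply lemmas for insP
@[simp] lemma insP_last (k : Fin m) (τ : Perm (Fin m)) :
    insP k τ (Fin.last m) = k.castSucc := by
  simp [insP]

lemma insP_castSucc (k : Fin m) (τ : Perm (Fin m)) (i : Fin m) :
    insP k τ i.castSucc = if τ i = k then Fin.last m else (τ i).castSucc := by
  simp only [insP, Perm.mul_apply, extP_castSucc]
  by_cases h : τ i = k
  · simp [h]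
  · rw [Equiv.swap_apply_of_ne_of_ne (Fin.castSucc_lt_last _).ne
      ((Fin.castSucc_injective m).ne h), if_neg h]

@[simp] lemma insP_symm_last (k : Fin m) (τ : Perm (Fin m)) :
    (insP k τ).symm (Fin.last m) = (τ.symm k).castSucc := by
  rw [Equiv.symm_apply_eq, insP_castSucc]
  simp

lemma insP_symm_castSucc (k : Fin m) (τ : Perm (Fin m)) (i : Fin m) :
    (insP k τ).symm i.castSucc = if i = k then Fin.last m else (τ.symm i).castSucc := by
  rw [Equiv.symm_apply_eq]
  by_cases h : i = k
  · simp [h]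
  · rw [if_neg h, insP_castSucc, Equiv.apply_symm_apply, if_neg h]

-- the filter identity for insertion
lemma filter_insP (p : ℕ → Prop) [DecidablePred p] (τ : Perm (Fin m)) (k : Fin m) :
    (univ.filter fun x : Fin (m+1) => pk (insP k τ) x ∧ p ((x : ℕ) + 1)) =
    (if p (m+1) then {Fin.last m} else ∅) ∪
      ((univ.filter fun i => pk τ i ∧ p ((i : ℕ) + 1)) \ {k, τ.symm k}).map Fin.castSuccEmb := by
  ext x
  induction x using Fin.lastCases with
  | last =>
    have hpk : pk (insP k τ) (Fin.last m) := by
      constructor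
      · rw [insP_symm_last]; exact Fin.castSucc_lt_last _
      · rw [insP_last]; exact Fin.castSucc_lt_last _
    simp only [Finset.mem_filter, Finset.mem_univ, true_and, Finset.mem_union,
      Finset.mem_map, Fin.val_last]
    constructor
    · rintro ⟨-, hp⟩
      left
      simp [hp]
    · rintro (h | ⟨i, -, hi⟩)
      · by_cases hp : p (m+1)
        · exact ⟨hpk, hp⟩
        · simp [hp] at h
      · exact absurd hi (Fin.castSucc_lt_last i).ne
  | cast i =>
    have h1 : (insP k τ).symm i.castSucc < i.castSucc ↔ (i ≠ k ∧ τ.symm i < i) := by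
      rw [insP_symm_castSucc]
      by_cases h : i = k
      · simp [h, (Fin.castSucc_lt_last _).le]
      · simp [h, Fin.castSucc_lt_castSucc_iff]
    have h2 : insP k τ i.castSucc < i.castSucc ↔ (τ i ≠ k ∧ τ i < i) := by
      rw [insP_castSucc]
      by_cases h : τ i = k
      · simp [h, (Fin.castSucc_lt_last _).le]
      · simp [h, Fin.castSucc_lt_castSucc_iff]
    have h3 : i = τ.symm k ↔ τ i = k := by
      constructor
      · rintro rfl; exact τ.apply_symm_apply k
      · rintro rfl; exact (τ.symm_apply_apply i).symm
    have h4 : (i.castSucc ∈ (if p (m+1) then {Fin.last m} else (∅ : Finset (Fin (m+1))))) ↔ False := by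
      split <;> simp [(Fin.castSucc_lt_last i).ne]
    simp only [Finset.mem_filter, Finset.mem_univ, true_and, Finset.mem_union,
      Finset.mem_map, Finset.mem_sdiff, Finset.mem_insert, Finset.mem_singleton]
    simp only [Finset.mem_filter, Finset.mem_univ, true_and, Finset.mem_union,
      Finset.mem_map, Finset.mem_sdiff, Finset.mem_insert, Finset.mem_singleton,
      Fin.coe_castSucc, pk, h1, h2, h4, false_or]
    constructor
    · rintro ⟨⟨⟨hik, hsi⟩, hti, hlt⟩, hp⟩
      exact ⟨i, ⟨⟨⟨hsi, hlt⟩, hp⟩, by tauto⟩, rfl⟩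
    · rintro ⟨j, ⟨⟨⟨hsi, hlt⟩, hp⟩, hne⟩, hj⟩
      have : j = i := by
        have := congrArg Fin.val hj
        simpa [Fin.ext_iff] using this
      subst this
      refine ⟨⟨⟨?_, hsi⟩, ?_, hlt⟩, hp⟩
      · tauto
      · exact fun e => hne (Or.inr (h3.mpr e))

lemma cstat_insP_eq (p : ℕ → Prop) [DecidablePred p] (τ : Perm (Fin m)) (k : Fin m) :
    cstat p (insP k τ) = (if p (m+1) then 1 else 0)
      + #((univ.filter fun i => pk τ i ∧ p ((i : ℕ) + 1)) \ {k, τ.symm k}) := by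
  unfold cstat
  rw [filter_insP, Finset.card_union_of_disjoint, Finset.card_map]
  · congr 1
    split <;> simp
  · refine Finset.disjoint_left.mpr ?_
    intro x hx hx2
    rw [Finset.mem_map] at hx2
    obtain ⟨j, -, rfl⟩ := hx2
    revert hx
    split
    · intro hx
      rw [Finset.mem_singleton] at hx
      have := congrArg Fin.val hx
      simp at this
      omega
    · simp

lemma not_pk_symm {τ : Perm (Fin m)} {k : Fin m} (h : pk τ k) : ¬ pk τ (τ.symm k) :=
  fun h2 => pk_not_pk h2 (by rwa [Equiv.apply_symm_apply])

lemma cstat_insP_A (p : ℕ → Prop) [DecidablePred p] {τ : Perm (Fin m)} {k : Fin m}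
    (h : pk τ k) :
    cstat p (insP k τ) + (if p ((k : ℕ) + 1) then 1 else 0)
      = cstat p τ + (if p (m+1) then 1 else 0) := by
  have hS : ((univ.filter fun i => pk τ i ∧ p ((i : ℕ) + 1)) \ {k, τ.symm k})
      = (univ.filter fun i => pk τ i ∧ p ((i : ℕ) + 1)).erase k := by
    ext x
    simp only [Finset.mem_sdiff, Finset.mem_insert, Finset.mem_singleton, Finset.mem_erase,
      Finset.mem_filter, Finset.mem_univ, true_and]
    constructor
    · rintro ⟨hx, hne⟩; exact ⟨by tauto, hx⟩
    · rintro ⟨hne, hx⟩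
      refine ⟨hx, ?_⟩
      rintro (rfl | rfl)
      · exact hne rfl
      · exact (not_pk_symm h) hx.1
  rw [cstat_insP_eq, hS]
  unfold cstat
  by_cases hp : p ((k : ℕ) + 1)
  · have hk : k ∈ univ.filter fun i => pk τ i ∧ p ((i : ℕ) + 1) := by
      simp [h, hp]
    rw [Finset.card_erase_of_mem hk]
    have : 1 ≤ #(univ.filter fun i => pk τ i ∧ p ((i : ℕ) + 1)) :=
      Finset.card_pos.mpr ⟨k, hk⟩
    simp only [if_pos hp]
    omega
  · have hk : k ∉ univ.filter fun i => pk τ i ∧ p ((i : ℕ) + 1) := by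
      simp [hp]
    rw [Finset.erase_eq_of_notMem hk]
    simp only [if_neg hp]
    omega

lemma cstat_insP_B (p : ℕ → Prop) [DecidablePred p] {τ : Perm (Fin m)} {k : Fin m}
    (h0 : ¬ pk τ k) (h : pk τ (τ.symm k)) :
    cstat p (insP k τ) + (if p ((τ.symm k : ℕ) + 1) then 1 else 0)
      = cstat p τ + (if p (m+1) then 1 else 0) := by
  have hS : ((univ.filter fun i => pk τ i ∧ p ((i : ℕ) + 1)) \ {k, τ.symm k})
      = (univ.filter fun i => pk τ i ∧ p ((i : ℕ) + 1)).erase (τ.symm k) := by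
    ext x
    simp only [Finset.mem_sdiff, Finset.mem_insert, Finset.mem_singleton, Finset.mem_erase,
      Finset.mem_filter, Finset.mem_univ, true_and]
    constructor
    · rintro ⟨hx, hne⟩; exact ⟨by tauto, hx⟩
    · rintro ⟨hne, hx⟩
      refine ⟨hx, ?_⟩
      rintro (rfl | rfl)
      · exact h0 hx.1
      · exact hne rfl
  rw [cstat_insP_eq, hS]
  unfold cstat
  by_cases hp : p ((τ.symm k : ℕ) + 1)
  · have hk : τ.symm k ∈ univ.filter fun i => pk τ i ∧ p ((i : ℕ) + 1) := by
      simp [h, hp]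
    rw [Finset.card_erase_of_mem hk]
    have : 1 ≤ #(univ.filter fun i => pk τ i ∧ p ((i : ℕ) + 1)) :=
      Finset.card_pos.mpr ⟨_, hk⟩
    simp only [if_pos hp]
    omega
  · have hk : τ.symm k ∉ univ.filter fun i => pk τ i ∧ p ((i : ℕ) + 1) := by
      simp [hp]
    rw [Finset.erase_eq_of_notMem hk]
    simp only [if_neg hp]
    omega

lemma cstat_insP_C (p : ℕ → Prop) [DecidablePred p] {τ : Perm (Fin m)} {k : Fin m}
    (h0 : ¬ pk τ k) (h1 : ¬ pk τ (τ.symm k)) :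
    cstat p (insP k τ) = cstat p τ + (if p (m+1) then 1 else 0) := by
  have hS : ((univ.filter fun i => pk τ i ∧ p ((i : ℕ) + 1)) \ {k, τ.symm k})
      = univ.filter fun i => pk τ i ∧ p ((i : ℕ) + 1) := by
    ext x
    simp only [Finset.mem_sdiff, Finset.mem_insert, Finset.mem_singleton,
      Finset.mem_filter, Finset.mem_univ, true_and]
    constructor
    · rintro ⟨hx, -⟩; exact hx
    · intro hx
      refine ⟨hx, ?_⟩
      rintro (rfl | rfl)
      · exact h0 hx.1
      · exact h1 hx.1
  rw [cstat_insP_eq, hS]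
  unfold cstat
  omega

lemma cstat_extP (p : ℕ → Prop) [DecidablePred p] (τ : Perm (Fin m)) :
    cstat p (extP τ) = cstat p τ := by
  unfold cstat
  rw [show (univ.filter fun x : Fin (m+1) => pk (extP τ) x ∧ p ((x : ℕ) + 1))
      = (univ.filter fun i => pk τ i ∧ p ((i : ℕ) + 1)).map Fin.castSuccEmb from ?_]
  · rw [Finset.card_map]
  ext x
  induction x using Fin.lastCases with
  | last =>
    simp only [Finset.mem_filter, Finset.mem_univ, true_and, Finset.mem_map]
    constructor
    · rintro ⟨⟨-, hlt⟩, -⟩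
      rw [extP_last] at hlt
      exact absurd hlt (lt_irrefl _)
    · rintro ⟨j, -, hj⟩
      exact absurd hj (Fin.castSucc_lt_last j).ne
  | cast i =>
    simp only [Finset.mem_filter, Finset.mem_univ, true_and, Finset.mem_map]
    simp only [Finset.mem_filter, Finset.mem_univ, true_and, Finset.mem_map, pk,
      extP_castSucc, extP_symm_castSucc, Fin.castSucc_lt_castSucc_iff, Fin.coe_castSucc]
    constructor
    · intro hx
      exact ⟨i, hx, rfl⟩
    · rintro ⟨j, hj, hje⟩
      have : j = i := by
        have := congrArg Fin.val hje
        simpa [Fin.ext_iff] using this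
      subst this
      exact hj



abbrev R3 : Type := MvPolynomial (Fin 3) ℤ

noncomputable def DD : Derivation ℤ R3 R3 :=
  MvPolynomial.mkDerivation ℤ ![X 1 * X 2, X 0 * X 2, X 0 * X 1]

@[simp] lemma DD_X0 : DD (X 0) = X 1 * X 2 := by
  rw [DD, MvPolynomial.mkDerivation_X]; rfl

@[simp] lemma DD_X1 : DD (X 1) = X 0 * X 2 := by
  rw [DD, MvPolynomial.mkDerivation_X]; rfl

@[simp] lemma DD_X2 : DD (X 2) = X 0 * X 1 := by
  rw [DD, MvPolynomial.mkDerivation_X]; rfl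

lemma DD_pow_shape (p q r : ℕ) :
    DD (X 0 ^ p * X 1 ^ q * X 2 ^ r)
      = p • (X 0 ^ (p-1) * X 1 ^ (q+1) * X 2 ^ (r+1))
      + q • (X 0 ^ (p+1) * X 1 ^ (q-1) * X 2 ^ (r+1))
      + r • (X 0 ^ (p+1) * X 1 ^ (q+1) * X 2 ^ (r-1)) := by
  have h1 : DD (X 0 ^ p) = p • (X 0 ^ (p-1) * (X 1 * X 2)) := by
    rw [Derivation.leibniz_pow, DD_X0, smul_eq_mul]
  have h2 : DD (X 1 ^ q) = q • (X 1 ^ (q-1) * (X 0 * X 2)) := by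
    rw [Derivation.leibniz_pow, DD_X1, smul_eq_mul]
  have h3 : DD (X 2 ^ r) = r • (X 2 ^ (r-1) * (X 0 * X 1)) := by
    rw [Derivation.leibniz_pow, DD_X2, smul_eq_mul]
  rw [Derivation.leibniz, Derivation.leibniz, h1, h2, h3, smul_eq_mul, smul_eq_mul,
    smul_eq_mul, smul_eq_mul]
  rcases p with _ | p <;> rcases q with _ | q <;> rcases r with _ | r <;>
    simp only [Nat.add_sub_cancel, Nat.zero_sub, zero_smul, smul_eq_mul, nsmul_eq_mul,
      Nat.cast_add, Nat.cast_one, Nat.cast_zero, Nat.cast_succ, pow_zero, zero_mul,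
      mul_zero, zero_add, add_zero, mul_one] <;> ring


def mono (m : ℕ) (σ : Equiv.Perm (Fin m)) : R3 :=
  X 0 ^ (2 * cstat Odd σ + if Even m then 1 else 0) *
  X 1 ^ (2 * cstat Even σ + if Even m then 0 else 1) *
  X 2 ^ (m - (2 * cstat Odd σ + 2 * cstat Even σ))

lemma sum_insP_even {m : ℕ} (hm : Even m) (τ : Perm (Fin m)) :
    mono (m+1) (extP τ) + ∑ k : Fin m, mono (m+1) (insP k τ) = DD (mono m τ) := by
  have hEm1 : ¬ Even (m+1) := by simp [Nat.even_add_one, hm]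
  have hOm1 : Odd (m+1) := Even.add_one hm
  set a := cstat Odd τ with ha
  set b := cstat Even τ with hb
  have hab : 2*a + 2*b ≤ m := by have := two_mul_cstat_le τ; omega
  set MO := (X 0 ^ (2*a) * X 1 ^ (2*b+1) * X 2 ^ (m + 1 - (2*a + 2*b)) : R3) with hMO
  set ME := (X 0 ^ (2*a+2) * X 1 ^ (2*b-1) * X 2 ^ (m + 1 - (2*a + 2*b)) : R3) with hME
  set MN := (X 0 ^ (2*a+2) * X 1 ^ (2*b+1) * X 2 ^ (m - (2*a + 2*b) - 1) : R3) with hMN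
  have hext : mono (m+1) (extP τ) = MO := by
    unfold mono
    rw [cstat_extP, cstat_extP, if_neg hEm1, if_neg hEm1, add_zero, ← ha, ← hb]
  have hins : ∀ k : Fin m, mono (m+1) (insP k τ) =
      MN + (if pk τ k ∧ Odd ((k:ℕ)+1) then MO - MN else 0)
         + (if pk τ (τ.symm k) ∧ Odd ((↑(τ.symm k):ℕ)+1) then MO - MN else 0)
         + (if pk τ k ∧ Even ((k:ℕ)+1) then ME - MN else 0)
         + (if pk τ (τ.symm k) ∧ Even ((↑(τ.symm k):ℕ)+1) then ME - MN else 0) := by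
    intro k
    by_cases h1 : pk τ k
    · have h2 : ¬ pk τ (τ.symm k) := not_pk_symm h1
      have hAo := cstat_insP_A (p := Odd) h1
      have hAe := cstat_insP_A (p := Even) h1
      rw [if_pos hOm1] at hAo
      rw [if_neg hEm1] at hAe
      by_cases ho : Odd ((k:ℕ)+1)
      · have he : ¬ Even ((k:ℕ)+1) := by
          rw [Nat.even_iff]; rw [Nat.odd_iff] at ho; omega
        rw [if_pos ho] at hAo
        rw [if_neg he] at hAe
        have e1 : cstat Odd (insP k τ) = a := by omega
        have e2 : cstat Even (insP k τ) = b := by omega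
        have hval : mono (m+1) (insP k τ) = MO := by
          unfold mono
          rw [e1, e2, if_neg hEm1, if_neg hEm1, add_zero]
        rw [hval, if_pos ⟨h1, ho⟩,
          if_neg (show ¬(pk τ (τ.symm k) ∧ Odd ((↑(τ.symm k):ℕ)+1)) from fun hc => h2 hc.1),
          if_neg (show ¬(pk τ k ∧ Even ((k:ℕ)+1)) from fun hc => he hc.2),
          if_neg (show ¬(pk τ (τ.symm k) ∧ Even ((↑(τ.symm k):ℕ)+1)) from fun hc => h2 hc.1)]
        ring
      · have he : Even ((k:ℕ)+1) := by
          rw [Nat.even_iff]; rw [Nat.odd_iff] at ho; omega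
        rw [if_neg ho] at hAo
        rw [if_pos he] at hAe
        have e1 : cstat Odd (insP k τ) = a + 1 := by omega
        have e2 : cstat Even (insP k τ) = b - 1 := by omega
        have hb1 : 1 ≤ b := by omega
        have hval : mono (m+1) (insP k τ) = ME := by
          unfold mono
          rw [e1, e2, if_neg hEm1, if_neg hEm1, add_zero]
          rw [show 2*(b-1)+1 = 2*b-1 from by omega,
            show m + 1 - (2*(a+1) + 2*(b-1)) = m + 1 - (2*a + 2*b) from by omega,
            show 2*(a+1) = 2*a+2 from by omega]
        rw [hval,
          if_neg (show ¬(pk τ k ∧ Odd ((k:ℕ)+1)) from fun hc => ho hc.2),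
          if_neg (show ¬(pk τ (τ.symm k) ∧ Odd ((↑(τ.symm k):ℕ)+1)) from fun hc => h2 hc.1),
          if_pos ⟨h1, he⟩,
          if_neg (show ¬(pk τ (τ.symm k) ∧ Even ((↑(τ.symm k):ℕ)+1)) from fun hc => h2 hc.1)]
        ring
    · by_cases h2 : pk τ (τ.symm k)
      · have hBo := cstat_insP_B (p := Odd) h1 h2
        have hBe := cstat_insP_B (p := Even) h1 h2
        rw [if_pos hOm1] at hBo
        rw [if_neg (fun hc => hEm1 hc)] at hBe
        by_cases ho : Odd ((↑(τ.symm k):ℕ)+1)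
        · have he : ¬ Even ((↑(τ.symm k):ℕ)+1) := by
            rw [Nat.even_iff]; rw [Nat.odd_iff] at ho; omega
          rw [if_pos ho] at hBo
          rw [if_neg he] at hBe
          have e1 : cstat Odd (insP k τ) = a := by omega
          have e2 : cstat Even (insP k τ) = b := by omega
          have hval : mono (m+1) (insP k τ) = MO := by
            unfold mono
            rw [e1, e2, if_neg hEm1, if_neg hEm1, add_zero]
          rw [hval,
            if_neg (show ¬(pk τ k ∧ Odd ((k:ℕ)+1)) from fun hc => h1 hc.1),
            if_pos ⟨h2, ho⟩,
            if_neg (show ¬(pk τ k ∧ Even ((k:ℕ)+1)) from fun hc => h1 hc.1),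
            if_neg (show ¬(pk τ (τ.symm k) ∧ Even ((↑(τ.symm k):ℕ)+1)) from fun hc => he hc.2)]
          ring
        · have he : Even ((↑(τ.symm k):ℕ)+1) := by
            rw [Nat.even_iff]; rw [Nat.odd_iff] at ho; omega
          rw [if_neg ho] at hBo
          rw [if_pos he] at hBe
          have e1 : cstat Odd (insP k τ) = a + 1 := by omega
          have e2 : cstat Even (insP k τ) = b - 1 := by omega
          have hval : mono (m+1) (insP k τ) = ME := by
            unfold mono
            rw [e1, e2, if_neg hEm1, if_neg hEm1, add_zero]
            rw [show 2*(b-1)+1 = 2*b-1 from by omega,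
              show m + 1 - (2*(a+1) + 2*(b-1)) = m + 1 - (2*a + 2*b) from by omega,
              show 2*(a+1) = 2*a+2 from by omega]
          rw [hval,
            if_neg (show ¬(pk τ k ∧ Odd ((k:ℕ)+1)) from fun hc => h1 hc.1),
            if_neg (show ¬(pk τ (τ.symm k) ∧ Odd ((↑(τ.symm k):ℕ)+1)) from fun hc => ho hc.2),
            if_neg (show ¬(pk τ k ∧ Even ((k:ℕ)+1)) from fun hc => h1 hc.1),
            if_pos ⟨h2, he⟩]
          ring
      · have hCo := cstat_insP_C (p := Odd) h1 h2
        have hCe := cstat_insP_C (p := Even) h1 h2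
        rw [if_pos hOm1] at hCo
        rw [if_neg (fun hc => hEm1 hc)] at hCe
        have e1 : cstat Odd (insP k τ) = a + 1 := by omega
        have e2 : cstat Even (insP k τ) = b := by omega
        have hbound := two_mul_cstat_le (insP k τ)
        rw [e1, e2] at hbound
        have hval : mono (m+1) (insP k τ) = MN := by
          unfold mono
          rw [e1, e2, if_neg hEm1, if_neg hEm1, add_zero]
          rw [show m + 1 - (2*(a+1) + 2*b) = m - (2*a + 2*b) - 1 from by omega,
            show 2*(a+1) = 2*a+2 from by omega]
        rw [hval,
          if_neg (show ¬(pk τ k ∧ Odd ((k:ℕ)+1)) from fun hc => h1 hc.1),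
          if_neg (show ¬(pk τ (τ.symm k) ∧ Odd ((↑(τ.symm k):ℕ)+1)) from fun hc => h2 hc.1),
          if_neg (show ¬(pk τ k ∧ Even ((k:ℕ)+1)) from fun hc => h1 hc.1),
          if_neg (show ¬(pk τ (τ.symm k) ∧ Even ((↑(τ.symm k):ℕ)+1)) from fun hc => h2 hc.1)]
        ring
  have s1 : ∀ (P : R3) (q : ℕ → Prop) (_ : DecidablePred q),
      ∑ k : Fin m, (if pk τ k ∧ q ((k:ℕ)+1) then P else 0) = (cstat q τ) • P := by
    intro P q hq
    rw [Finset.sum_ite, Finset.sum_const, Finset.sum_const_zero, add_zero]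
    congr 1
  have s2 : ∀ (P : R3) (q : ℕ → Prop) (_ : DecidablePred q),
      ∑ k : Fin m, (if pk τ (τ.symm k) ∧ q ((↑(τ.symm k):ℕ)+1) then P else 0)
        = (cstat q τ) • P := by
    intro P q hq
    rw [Equiv.sum_comp τ.symm (fun x : Fin m => if pk τ x ∧ q ((x:ℕ)+1) then P else 0)]
    exact s1 P q hq
  have hsum : ∑ k : Fin m, mono (m+1) (insP k τ)
      = m • MN + a • (MO - MN) + a • (MO - MN) + b • (ME - MN) + b • (ME - MN) := by
    rw [Finset.sum_congr rfl (fun k _ => hins k)]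
    rw [Finset.sum_add_distrib, Finset.sum_add_distrib, Finset.sum_add_distrib,
      Finset.sum_add_distrib, Finset.sum_const, Finset.card_univ, Fintype.card_fin]
    rw [s1 _ _ inferInstance, s2 _ _ inferInstance, s1 _ _ inferInstance,
      s2 _ _ inferInstance]
  have hDD : DD (mono m τ) = (2*a+1) • MO + (2*b) • ME + (m - (2*a+2*b)) • MN := by
    unfold mono
    rw [if_pos hm, if_pos hm, add_zero, ← ha, ← hb, DD_pow_shape]
    rw [show 2*a+1-1 = 2*a from by omega,
      show m - (2*a + 2*b) + 1 = m + 1 - (2*a+2*b) from by omega,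
      show 2*a+1+1 = 2*a+2 from by omega,
      show 2*b - 1 = 2*b-1 from rfl]
  rw [hext, hsum, hDD]
  simp only [nsmul_eq_mul]
  rw [Nat.cast_sub hab]
  push_cast
  ring

lemma sum_insP_odd {m : ℕ} (hm : ¬ Even m) (τ : Perm (Fin m)) :
    mono (m+1) (extP τ) + ∑ k : Fin m, mono (m+1) (insP k τ) = DD (mono m τ) := by
  have hEm1 : Even (m+1) := by rwa [Nat.even_add_one]
  have hOm1 : ¬ Odd (m+1) := by
    rw [Nat.odd_iff]; rw [Nat.even_iff] at hEm1; omega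
  set a := cstat Odd τ with ha
  set b := cstat Even τ with hb
  have hab : 2*a + 2*b ≤ m := by have := two_mul_cstat_le τ; omega
  set NO := (X 0 ^ (2*a-1) * X 1 ^ (2*b+2) * X 2 ^ (m + 1 - (2*a + 2*b)) : R3) with hNO
  set NE := (X 0 ^ (2*a+1) * X 1 ^ (2*b) * X 2 ^ (m + 1 - (2*a + 2*b)) : R3) with hNE
  set NN := (X 0 ^ (2*a+1) * X 1 ^ (2*b+2) * X 2 ^ (m - (2*a + 2*b) - 1) : R3) with hNN
  have hext : mono (m+1) (extP τ) = NE := by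
    unfold mono
    rw [cstat_extP, cstat_extP, if_pos hEm1, if_pos hEm1, add_zero, ← ha, ← hb]
  have hins : ∀ k : Fin m, mono (m+1) (insP k τ) =
      NN + (if pk τ k ∧ Odd ((k:ℕ)+1) then NO - NN else 0)
         + (if pk τ (τ.symm k) ∧ Odd ((↑(τ.symm k):ℕ)+1) then NO - NN else 0)
         + (if pk τ k ∧ Even ((k:ℕ)+1) then NE - NN else 0)
         + (if pk τ (τ.symm k) ∧ Even ((↑(τ.symm k):ℕ)+1) then NE - NN else 0) := by
    intro k
    by_cases h1 : pk τ k
    · have h2 : ¬ pk τ (τ.symm k) := not_pk_symm h1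
      have hAo := cstat_insP_A (p := Odd) h1
      have hAe := cstat_insP_A (p := Even) h1
      rw [if_neg hOm1] at hAo
      rw [if_pos hEm1] at hAe
      by_cases ho : Odd ((k:ℕ)+1)
      · have he : ¬ Even ((k:ℕ)+1) := by
          rw [Nat.even_iff]; rw [Nat.odd_iff] at ho; omega
        rw [if_pos ho] at hAo
        rw [if_neg he] at hAe
        have e1 : cstat Odd (insP k τ) = a - 1 := by omega
        have ha1 : 1 ≤ a := by omega
        have e2 : cstat Even (insP k τ) = b + 1 := by omega
        have hval : mono (m+1) (insP k τ) = NO := by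
          unfold mono
          rw [e1, e2, if_pos hEm1, if_pos hEm1, add_zero]
          rw [show m + 1 - (2*(a-1) + 2*(b+1)) = m + 1 - (2*a + 2*b) from by omega,
            show 2*(a-1)+1 = 2*a-1 from by omega,
            show 2*(b+1) = 2*b+2 from by omega]
        rw [hval, if_pos ⟨h1, ho⟩,
          if_neg (show ¬(pk τ (τ.symm k) ∧ Odd ((↑(τ.symm k):ℕ)+1)) from fun hc => h2 hc.1),
          if_neg (show ¬(pk τ k ∧ Even ((k:ℕ)+1)) from fun hc => he hc.2),
          if_neg (show ¬(pk τ (τ.symm k) ∧ Even ((↑(τ.symm k):ℕ)+1)) from fun hc => h2 hc.1)]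
        ring
      · have he : Even ((k:ℕ)+1) := by
          rw [Nat.even_iff]; rw [Nat.odd_iff] at ho; omega
        rw [if_neg ho] at hAo
        rw [if_pos he] at hAe
        have e1 : cstat Odd (insP k τ) = a := by omega
        have e2 : cstat Even (insP k τ) = b := by omega
        have hval : mono (m+1) (insP k τ) = NE := by
          unfold mono
          rw [e1, e2, if_pos hEm1, if_pos hEm1, add_zero]
        rw [hval,
          if_neg (show ¬(pk τ k ∧ Odd ((k:ℕ)+1)) from fun hc => ho hc.2),
          if_neg (show ¬(pk τ (τ.symm k) ∧ Odd ((↑(τ.symm k):ℕ)+1)) from fun hc => h2 hc.1),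
          if_pos ⟨h1, he⟩,
          if_neg (show ¬(pk τ (τ.symm k) ∧ Even ((↑(τ.symm k):ℕ)+1)) from fun hc => h2 hc.1)]
        ring
    · by_cases h2 : pk τ (τ.symm k)
      · have hBo := cstat_insP_B (p := Odd) h1 h2
        have hBe := cstat_insP_B (p := Even) h1 h2
        rw [if_neg hOm1] at hBo
        rw [if_pos hEm1] at hBe
        by_cases ho : Odd ((↑(τ.symm k):ℕ)+1)
        · have he : ¬ Even ((↑(τ.symm k):ℕ)+1) := by
            rw [Nat.even_iff]; rw [Nat.odd_iff] at ho; omega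
          rw [if_pos ho] at hBo
          rw [if_neg he] at hBe
          have e1 : cstat Odd (insP k τ) = a - 1 := by omega
          have ha1 : 1 ≤ a := by omega
          have e2 : cstat Even (insP k τ) = b + 1 := by omega
          have hval : mono (m+1) (insP k τ) = NO := by
            unfold mono
            rw [e1, e2, if_pos hEm1, if_pos hEm1, add_zero]
            rw [show m + 1 - (2*(a-1) + 2*(b+1)) = m + 1 - (2*a + 2*b) from by omega,
              show 2*(a-1)+1 = 2*a-1 from by omega,
              show 2*(b+1) = 2*b+2 from by omega]
          rw [hval,
            if_neg (show ¬(pk τ k ∧ Odd ((k:ℕ)+1)) from fun hc => h1 hc.1),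
            if_pos ⟨h2, ho⟩,
            if_neg (show ¬(pk τ k ∧ Even ((k:ℕ)+1)) from fun hc => h1 hc.1),
            if_neg (show ¬(pk τ (τ.symm k) ∧ Even ((↑(τ.symm k):ℕ)+1)) from fun hc => he hc.2)]
          ring
        · have he : Even ((↑(τ.symm k):ℕ)+1) := by
            rw [Nat.even_iff]; rw [Nat.odd_iff] at ho; omega
          rw [if_neg ho] at hBo
          rw [if_pos he] at hBe
          have e1 : cstat Odd (insP k τ) = a := by omega
          have e2 : cstat Even (insP k τ) = b := by omega
          have hval : mono (m+1) (insP k τ) = NE := by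
            unfold mono
            rw [e1, e2, if_pos hEm1, if_pos hEm1, add_zero]
          rw [hval,
            if_neg (show ¬(pk τ k ∧ Odd ((k:ℕ)+1)) from fun hc => h1 hc.1),
            if_neg (show ¬(pk τ (τ.symm k) ∧ Odd ((↑(τ.symm k):ℕ)+1)) from fun hc => ho hc.2),
            if_neg (show ¬(pk τ k ∧ Even ((k:ℕ)+1)) from fun hc => h1 hc.1),
            if_pos ⟨h2, he⟩]
          ring
      · have hCo := cstat_insP_C (p := Odd) h1 h2
        have hCe := cstat_insP_C (p := Even) h1 h2
        rw [if_neg hOm1] at hCo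
        rw [if_pos hEm1] at hCe
        have e1 : cstat Odd (insP k τ) = a := by omega
        have e2 : cstat Even (insP k τ) = b + 1 := by omega
        have hbound := two_mul_cstat_le (insP k τ)
        rw [e1, e2] at hbound
        have hval : mono (m+1) (insP k τ) = NN := by
          unfold mono
          rw [e1, e2, if_pos hEm1, if_pos hEm1, add_zero]
          rw [show m + 1 - (2*a + 2*(b+1)) = m - (2*a + 2*b) - 1 from by omega,
            show 2*(b+1) = 2*b+2 from by omega]
        rw [hval,
          if_neg (show ¬(pk τ k ∧ Odd ((k:ℕ)+1)) from fun hc => h1 hc.1),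
          if_neg (show ¬(pk τ (τ.symm k) ∧ Odd ((↑(τ.symm k):ℕ)+1)) from fun hc => h2 hc.1),
          if_neg (show ¬(pk τ k ∧ Even ((k:ℕ)+1)) from fun hc => h1 hc.1),
          if_neg (show ¬(pk τ (τ.symm k) ∧ Even ((↑(τ.symm k):ℕ)+1)) from fun hc => h2 hc.1)]
        ring
  have s1 : ∀ (P : R3) (q : ℕ → Prop) (_ : DecidablePred q),
      ∑ k : Fin m, (if pk τ k ∧ q ((k:ℕ)+1) then P else 0) = (cstat q τ) • P := by
    intro P q hq
    rw [Finset.sum_ite, Finset.sum_const, Finset.sum_const_zero, add_zero]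
    congr 1
  have s2 : ∀ (P : R3) (q : ℕ → Prop) (_ : DecidablePred q),
      ∑ k : Fin m, (if pk τ (τ.symm k) ∧ q ((↑(τ.symm k):ℕ)+1) then P else 0)
        = (cstat q τ) • P := by
    intro P q hq
    rw [Equiv.sum_comp τ.symm (fun x : Fin m => if pk τ x ∧ q ((x:ℕ)+1) then P else 0)]
    exact s1 P q hq
  have hsum : ∑ k : Fin m, mono (m+1) (insP k τ)
      = m • NN + a • (NO - NN) + a • (NO - NN) + b • (NE - NN) + b • (NE - NN) := by
    rw [Finset.sum_congr rfl (fun k _ => hins k)]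
    rw [Finset.sum_add_distrib, Finset.sum_add_distrib, Finset.sum_add_distrib,
      Finset.sum_add_distrib, Finset.sum_const, Finset.card_univ, Fintype.card_fin]
    rw [s1 _ _ inferInstance, s2 _ _ inferInstance, s1 _ _ inferInstance,
      s2 _ _ inferInstance]
  have hDD : DD (mono m τ) = (2*a) • NO + (2*b+1) • NE + (m - (2*a+2*b)) • NN := by
    unfold mono
    rw [if_neg hm, if_neg hm, add_zero, ← ha, ← hb, DD_pow_shape]
    rw [show m - (2*a + 2*b) + 1 = m + 1 - (2*a+2*b) from by omega,
      show 2*b+1-1 = 2*b from by omega,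
      show 2*b+1+1 = 2*b+2 from by omega]
  rw [hext, hsum, hDD]
  simp only [nsmul_eq_mul]
  rw [Nat.cast_sub hab]
  push_cast
  ring

def SumS (m : ℕ) : R3 := ∑ σ : Equiv.Perm (Fin m), mono m σ

set_option maxHeartbeats 2000000 in
lemma SumS_succ (m : ℕ) : SumS (m+1) = DD (SumS m) := by
  have key : ∀ τ : Equiv.Perm (Fin m),
      mono (m+1) (extP τ) + ∑ k : Fin m, mono (m+1) (insP k τ) = DD (mono m τ) := by
    rcases Nat.even_or_odd m with hm | hm
    · exact sum_insP_even hm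
    · exact sum_insP_odd (by rwa [Nat.not_even_iff_odd]) 
  calc SumS (m+1) = ∑ x : Option (Fin m) × Equiv.Perm (Fin m), mono (m+1) (E.symm x) :=
        (Equiv.sum_comp E.symm (mono (m+1))).symm
    _ = ∑ o : Option (Fin m), ∑ τ : Equiv.Perm (Fin m), mono (m+1) (E.symm (o, τ)) := by
        rw [Fintype.sum_prod_type]
    _ = (∑ τ : Equiv.Perm (Fin m), mono (m+1) (E.symm (none, τ)))
        + ∑ k : Fin m, ∑ τ : Equiv.Perm (Fin m), mono (m+1) (E.symm (some k, τ)) := by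
        rw [Fintype.sum_option]
    _ = ∑ τ : Equiv.Perm (Fin m),
          (mono (m+1) (extP τ) + ∑ k : Fin m, mono (m+1) (insP k τ)) := by
        rw [Finset.sum_comm, ← Finset.sum_add_distrib]
        refine Finset.sum_congr rfl fun τ _ => ?_
        rw [E_symm_none]
        congr 1
        exact Finset.sum_congr rfl fun k _ => by rw [E_symm_some]
    _ = ∑ τ : Equiv.Perm (Fin m), DD (mono m τ) := Finset.sum_congr rfl fun τ _ => key τ
    _ = DD (SumS m) := (map_sum DD _ _).symm

lemma SumS_zero : SumS 0 = X 0 := by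
  have hu : (Finset.univ : Finset (Equiv.Perm (Fin 0))) = {1} := by
    apply Finset.eq_singleton_iff_unique_mem.mpr
    exact ⟨Finset.mem_univ _, fun x _ => Subsingleton.elim x 1⟩
  rw [SumS, hu, Finset.sum_singleton]
  unfold mono cstat
  simp

lemma DD_iter_X0 (m : ℕ) : DD^[m] (X 0) = SumS m := by
  induction m with
  | zero => simp [SumS_zero]
  | succ k ih => rw [Function.iterate_succ_apply', ih, SumS_succ]

lemma DD_iterate_mul (n : ℕ) (p q : R3) :
    DD^[n] (p * q) =
      ∑ k ∈ Finset.range (n+1), n.choose k • (DD^[n - k] p * DD^[k] q) := by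
  induction n generalizing p q with
  | zero => simp
  | succ n IH =>
    calc
      DD^[n + 1] (p * q) =
          DD (∑ k ∈ Finset.range (n+1), n.choose k • (DD^[n - k] p * DD^[k] q)) := by
        rw [Function.iterate_succ_apply', IH]
      _ = (∑ k ∈ Finset.range (n+1), n.choose k • (DD^[n - k + 1] p * DD^[k] q)) +
          ∑ k ∈ Finset.range (n+1), n.choose k • (DD^[n - k] p * DD^[k + 1] q) := by
        rw [map_sum]
        rw [show (∑ k ∈ Finset.range (n+1),
            DD (n.choose k • (DD^[n - k] p * DD^[k] q)))
          = ∑ k ∈ Finset.range (n+1), (n.choose k • (DD^[n - k + 1] p * DD^[k] q)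
              + n.choose k • (DD^[n - k] p * DD^[k + 1] q)) from
          Finset.sum_congr rfl fun k _ => by
            have hl : DD (DD^[n - k] p * DD^[k] q)
                = DD^[n - k + 1] p * DD^[k] q + DD^[n - k] p * DD^[k + 1] q := by
              rw [Derivation.leibniz, smul_eq_mul, smul_eq_mul,
                Function.iterate_succ_apply', Function.iterate_succ_apply']
              ring
            rw [map_nsmul, hl, smul_add]]
        rw [Finset.sum_add_distrib]
      _ = ((∑ k ∈ Finset.range (n+1),
                n.choose k.succ • (DD^[n - k] p * DD^[k + 1] q)) +
              1 • (DD^[n + 1] p * DD^[0] q)) +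
            ∑ k ∈ Finset.range (n+1), n.choose k • (DD^[n - k] p * DD^[k + 1] q) := ?_
      _ = ((∑ k ∈ Finset.range (n+1), n.choose k • (DD^[n - k] p * DD^[k + 1] q)) +
              ∑ k ∈ Finset.range (n+1),
                n.choose k.succ • (DD^[n - k] p * DD^[k + 1] q)) +
            1 • (DD^[n + 1] p * DD^[0] q) := by
        ring
      _ = (∑ i ∈ Finset.range (n+1),
              (n + 1).choose (i + 1) • (DD^[n + 1 - (i + 1)] p * DD^[i + 1] q)) +
            1 • (DD^[n + 1] p * DD^[0] q) := by
        simp_rw [Nat.choose_succ_succ, Nat.succ_sub_succ, add_smul, Finset.sum_add_distrib]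
      _ = ∑ k ∈ Finset.range (n+2),
            (n+1).choose k • (DD^[n + 1 - k] p * DD^[k] q) := by
        rw [Finset.sum_range_succ' _ (n+1), Nat.choose_zero_right, Nat.sub_zero]
    congr 1
    refine (Finset.sum_range_succ' _ _).trans (congr_arg₂ (· + ·) ?_ ?_)
    · rw [Finset.sum_range_succ, Nat.choose_succ_self, zero_smul, add_zero]
      refine Finset.sum_congr rfl fun k hk => ?_
      rw [Finset.mem_range] at hk
      rw [show n - (k+1) + 1 = n - k from by omega]
    · rw [Nat.choose_zero_right, Nat.sub_zero]

lemma DD_rename (e : Equiv.Perm (Fin 3))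
    (hc : ∀ i : Fin 3, DD (X (e i)) = rename ⇑e (DD (X i))) (p : R3) :
    DD (rename ⇑e p) = rename ⇑e (DD p) := by
  induction p using MvPolynomial.induction_on with
  | C a =>
    rw [show ((C a : R3)) = (algebraMap ℤ R3) a from rfl]
    rw [Derivation.map_algebraMap]
    rw [show (rename ⇑e) ((algebraMap ℤ R3) a) = (algebraMap ℤ R3) a from by
      simp [MvPolynomial.algebraMap_eq]]
    rw [Derivation.map_algebraMap, map_zero]
  | add p q hp hq => simp only [map_add, hp, hq]
  | mul_X p i hp =>
    rw [map_mul, Derivation.leibniz, Derivation.leibniz, rename_X, hc, smul_eq_mul,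
      smul_eq_mul, smul_eq_mul, smul_eq_mul, map_add, map_mul, map_mul, hp, rename_X]

lemma swap01_c : ∀ i : Fin 3,
    DD (X ((Equiv.swap (0:Fin 3) 1) i)) = rename ⇑(Equiv.swap (0:Fin 3) 1) (DD (X i)) := by
  have h2 : (Equiv.swap (0:Fin 3) 1) 2 = 2 :=
    Equiv.swap_apply_of_ne_of_ne (by decide) (by decide)
  intro i
  fin_cases i
  · show DD (X ((Equiv.swap (0:Fin 3) 1) 0)) = rename ⇑(Equiv.swap (0:Fin 3) 1) (DD (X 0))
    rw [Equiv.swap_apply_left, DD_X0, DD_X1, map_mul, rename_X, rename_X, h2,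
      Equiv.swap_apply_right]
  · show DD (X ((Equiv.swap (0:Fin 3) 1) 1)) = rename ⇑(Equiv.swap (0:Fin 3) 1) (DD (X 1))
    rw [Equiv.swap_apply_right, DD_X1, DD_X0, map_mul, rename_X, rename_X, h2,
      Equiv.swap_apply_left]
  · show DD (X ((Equiv.swap (0:Fin 3) 1) 2)) = rename ⇑(Equiv.swap (0:Fin 3) 1) (DD (X 2))
    rw [h2, DD_X2, map_mul, rename_X, rename_X, Equiv.swap_apply_left,
      Equiv.swap_apply_right, mul_comm]

lemma swap02_c : ∀ i : Fin 3,
    DD (X ((Equiv.swap (0:Fin 3) 2) i)) = rename ⇑(Equiv.swap (0:Fin 3) 2) (DD (X i)) := by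
  have h1 : (Equiv.swap (0:Fin 3) 2) 1 = 1 :=
    Equiv.swap_apply_of_ne_of_ne (by decide) (by decide)
  intro i
  fin_cases i
  · show DD (X ((Equiv.swap (0:Fin 3) 2) 0)) = rename ⇑(Equiv.swap (0:Fin 3) 2) (DD (X 0))
    rw [Equiv.swap_apply_left, DD_X0, DD_X2, map_mul, rename_X, rename_X, h1,
      Equiv.swap_apply_right, mul_comm]
  · show DD (X ((Equiv.swap (0:Fin 3) 2) 1)) = rename ⇑(Equiv.swap (0:Fin 3) 2) (DD (X 1))
    rw [h1, DD_X1, map_mul, rename_X, rename_X, Equiv.swap_apply_left,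
      Equiv.swap_apply_right, mul_comm]
  · show DD (X ((Equiv.swap (0:Fin 3) 2) 2)) = rename ⇑(Equiv.swap (0:Fin 3) 2) (DD (X 2))
    rw [Equiv.swap_apply_right, DD_X2, DD_X0, map_mul, rename_X, rename_X, h1,
      Equiv.swap_apply_left, mul_comm]

lemma DD_iter_X1 (k : ℕ) :
    DD^[k] (X 1) = rename ⇑(Equiv.swap (0:Fin 3) 1) (DD^[k] (X 0)) := by
  induction k with
  | zero => simp [Equiv.swap_apply_left]
  | succ k ih =>
    rw [Function.iterate_succ_apply', Function.iterate_succ_apply', ih,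
      DD_rename _ swap01_c]

lemma DD_iter_X2 (k : ℕ) :
    DD^[k] (X 2) = rename ⇑(Equiv.swap (0:Fin 3) 2) (DD^[k] (X 0)) := by
  induction k with
  | zero => simp [Equiv.swap_apply_left]
  | succ k ih =>
    rw [Function.iterate_succ_apply', Function.iterate_succ_apply', ih,
      DD_rename _ swap02_c]

lemma cpko_eq (m : ℕ) (σ : Equiv.Perm (Fin m)) : cpko m σ = cstat Odd σ := by
  unfold cpko cstat pk
  congr 1
  exact Finset.filter_congr fun x _ => and_assoc.symm

lemma cpke_eq (m : ℕ) (σ : Equiv.Perm (Fin m)) : cpke m σ = cstat Even σ := by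
  unfold cpke cstat pk
  congr 1
  exact Finset.filter_congr fun x _ => and_assoc.symm

lemma vec0 : (![Polynomial.X, 0, 1] : Fin 3 → Polynomial ℤ) 0 = Polynomial.X := rfl
lemma vec1 : (![Polynomial.X, 0, 1] : Fin 3 → Polynomial ℤ) 1 = 0 := rfl
lemma vec2 : (![Polynomial.X, 0, 1] : Fin 3 → Polynomial ℤ) 2 = 1 := rfl

lemma ev_SumS_even {m : ℕ} (hm : Even m) :
    MvPolynomial.aeval ![Polynomial.X, 0, 1] (SumS m)
      = Polynomial.X * Polynomial.expand ℤ 2 (J m) := by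
  rw [SumS, map_sum]
  have key : ∀ σ : Equiv.Perm (Fin m),
      MvPolynomial.aeval ![(Polynomial.X : Polynomial ℤ), 0, 1] (mono m σ)
        = if cpke m σ = 0 then Polynomial.X ^ (2 * cpko m σ + 1) else 0 := by
    intro σ
    unfold mono
    rw [map_mul, map_mul, map_pow, map_pow, map_pow, MvPolynomial.aeval_X,
      MvPolynomial.aeval_X, MvPolynomial.aeval_X, vec0, vec1, vec2, one_pow, mul_one,
      if_pos hm, if_pos hm, add_zero]
    by_cases hb : cpke m σ = 0
    · rw [if_pos hb, cpke_eq] at *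
      rw [hb, mul_zero, pow_zero, mul_one, cpko_eq]
    · rw [if_neg hb]
      rw [cpke_eq] at hb
      rw [zero_pow (by omega), mul_zero]
  rw [Finset.sum_congr rfl fun σ _ => key σ, ← Finset.sum_filter]
  rw [J, if_pos hm, map_sum, Finset.mul_sum]
  refine Finset.sum_congr rfl fun π _ => ?_
  rw [map_pow, Polynomial.expand_X, ← pow_mul, mul_comm (Polynomial.X : Polynomial ℤ), ← pow_succ]

lemma ev1_SumS_odd {m : ℕ} (hm : ¬ Even m) :
    MvPolynomial.aeval ![(0 : Polynomial ℤ), Polynomial.X, 1] (SumS m)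
      = Polynomial.X * Polynomial.expand ℤ 2 (J m) := by
  rw [SumS, map_sum]
  have key : ∀ σ : Equiv.Perm (Fin m),
      MvPolynomial.aeval ![(0 : Polynomial ℤ), Polynomial.X, 1] (mono m σ)
        = if cpko m σ = 0 then Polynomial.X ^ (2 * cpke m σ + 1) else 0 := by
    intro σ
    unfold mono
    rw [map_mul, map_mul, map_pow, map_pow, map_pow, MvPolynomial.aeval_X,
      MvPolynomial.aeval_X, MvPolynomial.aeval_X]
    rw [show (![(0 : Polynomial ℤ), Polynomial.X, 1]) 0 = 0 from rfl,
      show (![(0 : Polynomial ℤ), Polynomial.X, 1]) 1 = Polynomial.X from rfl,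
      show (![(0 : Polynomial ℤ), Polynomial.X, 1]) 2 = 1 from rfl, one_pow, mul_one,
      if_neg hm, if_neg hm, add_zero]
    by_cases ha : cpko m σ = 0
    · rw [if_pos ha, cpko_eq] at *
      rw [ha, mul_zero, pow_zero, one_mul, cpke_eq]
    · rw [if_neg ha]
      rw [cpko_eq] at ha
      rw [zero_pow (by omega), zero_mul]
  rw [Finset.sum_congr rfl fun σ _ => key σ, ← Finset.sum_filter]
  rw [J, if_neg hm, map_sum, Finset.mul_sum]
  refine Finset.sum_congr rfl fun π _ => ?_
  rw [map_pow, Polynomial.expand_X, ← pow_mul, mul_comm (Polynomial.X : Polynomial ℤ), ← pow_succ]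

lemma ev1_SumS_even {m : ℕ} (hm : Even m) :
    MvPolynomial.aeval ![(0 : Polynomial ℤ), Polynomial.X, 1] (SumS m) = 0 := by
  rw [SumS, map_sum]
  refine Finset.sum_eq_zero fun σ _ => ?_
  unfold mono
  rw [map_mul, map_mul, map_pow, map_pow, map_pow, MvPolynomial.aeval_X,
    MvPolynomial.aeval_X, MvPolynomial.aeval_X,
    show (![(0 : Polynomial ℤ), Polynomial.X, 1]) 0 = 0 from rfl, if_pos hm,
    zero_pow (by omega), zero_mul, zero_mul]

lemma ev2_SumS (i : ℕ) :
    MvPolynomial.aeval ![(1 : Polynomial ℤ), 0, Polynomial.X] (SumS (2*i))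
      = Polynomial.expand ℤ 2 (Polynomial.reflect i (J (2*i))) := by
  rw [SumS, map_sum]
  have hm : Even (2*i) := even_two_mul i
  have key : ∀ σ : Equiv.Perm (Fin (2*i)),
      MvPolynomial.aeval ![(1 : Polynomial ℤ), 0, Polynomial.X] (mono (2*i) σ)
        = if cpke (2*i) σ = 0 then Polynomial.X ^ (2*i - 2 * cpko (2*i) σ) else 0 := by
    intro σ
    unfold mono
    rw [map_mul, map_mul, map_pow, map_pow, map_pow, MvPolynomial.aeval_X,
      MvPolynomial.aeval_X, MvPolynomial.aeval_X,
      show (![(1 : Polynomial ℤ), 0, Polynomial.X]) 0 = 1 from rfl,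
      show (![(1 : Polynomial ℤ), 0, Polynomial.X]) 1 = 0 from rfl,
      show (![(1 : Polynomial ℤ), 0, Polynomial.X]) 2 = Polynomial.X from rfl,
      one_pow, one_mul, if_pos hm, add_zero]
    by_cases hb : cpke (2*i) σ = 0
    · rw [if_pos hb, cpke_eq] at *
      rw [hb, mul_zero, pow_zero, one_mul, cpko_eq,
        show 2*i - (2 * cstat Odd σ + 0) = 2*i - 2 * cstat Odd σ from by omega]
    · rw [if_neg hb]
      rw [cpke_eq] at hb
      rw [zero_pow (by omega), zero_mul]
  rw [Finset.sum_congr rfl fun σ _ => key σ, ← Finset.sum_filter]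
  rw [J, if_pos hm]
  have refl_sum : Polynomial.reflect i
      (∑ π ∈ Finset.univ.filter (fun π : Equiv.Perm (Fin (2*i)) => cpke (2*i) π = 0),
        (Polynomial.X : Polynomial ℤ) ^ cpko (2*i) π)
      = ∑ π ∈ Finset.univ.filter (fun π : Equiv.Perm (Fin (2*i)) => cpke (2*i) π = 0),
        (Polynomial.X : Polynomial ℤ) ^ (i - cpko (2*i) π) := by
    have refl_gen : ∀ s : Finset (Equiv.Perm (Fin (2*i))),
        Polynomial.reflect i (∑ π ∈ s, (Polynomial.X : Polynomial ℤ) ^ cpko (2*i) π)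
          = ∑ π ∈ s, Polynomial.reflect i ((Polynomial.X : Polynomial ℤ) ^ cpko (2*i) π) := by
      intro s
      induction s using Finset.cons_induction with
      | empty => simp
      | cons a s ha ih =>
        rw [Finset.sum_cons, Finset.sum_cons, Polynomial.reflect_add, ih]
    rw [refl_gen]
    refine Finset.sum_congr rfl fun π hπ => ?_
    rw [Finset.mem_filter] at hπ
    have hle : cpko (2*i) π ≤ i := by
      have := two_mul_cstat_le π
      rw [← cpko_eq, ← cpke_eq, hπ.2] at this
      omega
    rw [Polynomial.reflect_monomial, Polynomial.revAt_le hle]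
  rw [refl_sum, map_sum]
  refine Finset.sum_congr rfl fun π hπ => ?_
  rw [Finset.mem_filter] at hπ
  have hle : cpko (2*i) π ≤ i := by
    have := two_mul_cstat_le π
    rw [← cpko_eq, ← cpke_eq, hπ.2] at this
    omega
  rw [map_pow, Polynomial.expand_X, ← pow_mul,
    show 2 * (i - cpko (2*i) π) = 2*i - 2 * cpko (2*i) π from by omega]

lemma comp_swap01 :
    (![Polynomial.X, 0, 1] ∘ ⇑(Equiv.swap (0:Fin 3) 1)) = ![(0:Polynomial ℤ), Polynomial.X, 1] := by
  have h2 : (Equiv.swap (0:Fin 3) 1) 2 = 2 :=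
    Equiv.swap_apply_of_ne_of_ne (by decide) (by decide)
  funext i
  fin_cases i
  · show (![Polynomial.X, 0, 1]) ((Equiv.swap (0:Fin 3) 1) 0) = _
    rw [Equiv.swap_apply_left]; rfl
  · show (![Polynomial.X, 0, 1]) ((Equiv.swap (0:Fin 3) 1) 1) = _
    rw [Equiv.swap_apply_right]; rfl
  · show (![Polynomial.X, 0, 1]) ((Equiv.swap (0:Fin 3) 1) 2) = _
    rw [h2]; rfl

lemma comp_swap02 :
    (![Polynomial.X, 0, 1] ∘ ⇑(Equiv.swap (0:Fin 3) 2)) = ![(1:Polynomial ℤ), 0, Polynomial.X] := by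
  have h1 : (Equiv.swap (0:Fin 3) 2) 1 = 1 :=
    Equiv.swap_apply_of_ne_of_ne (by decide) (by decide)
  funext i
  fin_cases i
  · show (![Polynomial.X, 0, 1]) ((Equiv.swap (0:Fin 3) 2) 0) = _
    rw [Equiv.swap_apply_left]; rfl
  · show (![Polynomial.X, 0, 1]) ((Equiv.swap (0:Fin 3) 2) 1) = _
    rw [h1]; rfl
  · show (![Polynomial.X, 0, 1]) ((Equiv.swap (0:Fin 3) 2) 2) = _
    rw [Equiv.swap_apply_right]; rfl

lemma evX1_odd {m : ℕ} (hm : ¬ Even m) :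
    MvPolynomial.aeval ![(Polynomial.X : Polynomial ℤ), 0, 1] (DD^[m] (X 1))
      = Polynomial.X * Polynomial.expand ℤ 2 (J m) := by
  rw [DD_iter_X1, MvPolynomial.aeval_rename, comp_swap01, DD_iter_X0, ev1_SumS_odd hm]

lemma evX1_even {m : ℕ} (hm : Even m) :
    MvPolynomial.aeval ![(Polynomial.X : Polynomial ℤ), 0, 1] (DD^[m] (X 1)) = 0 := by
  rw [DD_iter_X1, MvPolynomial.aeval_rename, comp_swap01, DD_iter_X0, ev1_SumS_even hm]

lemma evX2 (i : ℕ) :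
    MvPolynomial.aeval ![(Polynomial.X : Polynomial ℤ), 0, 1] (DD^[2*i] (X 2))
      = Polynomial.expand ℤ 2 (Polynomial.reflect i (J (2*i))) := by
  rw [DD_iter_X2, MvPolynomial.aeval_rename, comp_swap02, DD_iter_X0, ev2_SumS]

lemma sum_range_two_mul {M : Type*} [AddCommMonoid M] (n : ℕ) (f : ℕ → M)
    (h : ∀ j, f (2*j+1) = 0) :
    ∑ k ∈ Finset.range (2*n), f k = ∑ i ∈ Finset.range n, f (2*i) := by
  induction n with
  | zero => simp
  | succ n ih =>
    rw [show 2*(n+1) = (2*n)+1+1 from by ring, Finset.sum_range_succ, Finset.sum_range_succ,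
      ih, h n, add_zero, Finset.sum_range_succ]

end V

/-- Viennot's convolution formula: for every `n ≥ 1`,
`J_{2n}(x) = Σ_{i=0}^{n-1} C(2n-1, 2i) J_{2n-1-2i}(x) · xⁱJ_{2i}(1/x)`, where the
reflection `xⁱJ_{2i}(1/x)` is `reflect i (J (2i))` (note `deg J_{2i} ≤ i`). -/
theorem stmt12 (n : ℕ) (hn : 1 ≤ n) :
    J (2 * n) = ∑ i ∈ Finset.range n,
      (Nat.choose (2 * n - 1) (2 * i)) • (J (2 * n - 1 - 2 * i) * reflect i (J (2 * i))) := by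
  classical
  have hev : Even (2*n) := even_two_mul n
  have hL : Polynomial.X * Polynomial.expand ℤ 2 (J (2*n))
      = ∑ i ∈ Finset.range n, (2*n-1).choose (2*i) •
          (Polynomial.X * Polynomial.expand ℤ 2 (J (2*n-1-2*i))
            * Polynomial.expand ℤ 2 (Polynomial.reflect i (J (2*i)))) := by
    rw [← V.ev_SumS_even hev, ← V.DD_iter_X0,
      show 2*n = (2*n-1)+1 from by omega, Function.iterate_succ_apply, V.DD_X0,
      V.DD_iterate_mul, show (2*n-1)+1 = 2*n from by omega, map_sum,
      V.sum_range_two_mul n _ ?_]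
    · refine Finset.sum_congr rfl fun i hi => ?_
      rw [Finset.mem_range] at hi
      rw [map_nsmul, map_mul, V.evX1_odd (m := 2*n-1-2*i) (by rw [Nat.even_iff]; omega),
        V.evX2]
    · intro j
      by_cases hj : Even ((2*n-1) - (2*j+1))
      · rw [map_nsmul, map_mul, V.evX1_even hj, zero_mul, smul_zero]
      · exfalso; apply hj; rw [Nat.even_iff]; omega
  apply Polynomial.expand_injective (R := ℤ) (n := 2) (by norm_num)
  apply mul_left_cancel₀ (show (Polynomial.X : Polynomial ℤ) ≠ 0 from Polynomial.X_ne_zero)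
  rw [hL, map_sum, Finset.mul_sum]
  refine Finset.sum_congr rfl fun i _ => ?_
  rw [map_nsmul, map_mul, nsmul_eq_mul, nsmul_eq_mul]
  ring
end
end
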